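/- arXiv:2603.12776 — 6 statements merged into one kernel-verified Lean document; each statement's English description precedes it below -/
import Mathlib

section
/- Let G be a connected simple graph of order at least 3κ(G)+3. If α(G) ≤ κ(G)+1, then G is traceable, i.e., G contains a Hamiltonian path. -/
open SimpleGraph

variable {V : Type*}

/-- The independence number of a finite simple graph: the maximum size of a set of
pairwise non-adjacent vertices. -/
noncomputable def indepNum [Fintype V] (G : SimpleGraph V) : ℕ :=
  sSup {n : ℕ | ∃ s : Finset V, (∀ x ∈ s, ∀ y ∈ s, x ≠ y → ¬ G.Adj x y) ∧ s.card = n}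

/-- The vertex connectivity of a finite simple graph: the minimum size of a vertex set
whose removal leaves a graph that is disconnected or has at most one vertex. -/
noncomputable def vertexConnectivity [Fintype V] (G : SimpleGraph V) : ℕ :=
  sInf {k : ℕ | ∃ S : Finset V, S.card = k ∧
    (¬ (G.induce ((S : Set V)ᶜ)).Connected ∨ Fintype.card V ≤ S.card + 1)}

/-- `G` has a 2-factor (a spanning subgraph in which every vertex has degree exactly 2)
with at most two connected components. -/
def HasTwoFactorAtMostTwo [Fintype V] (G : SimpleGraph V) : Prop :=
  ∃ F : G.Subgraph, F.IsSpanning ∧ (∀ v : V, (F.neighborSet v).ncard = 2) ∧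
    Nat.card F.coe.ConnectedComponent ≤ 2

namespace CEaux

variable {G : SimpleGraph V}

lemma getVert_ne_end {u v : V} (p : G.Walk u v) (hp : p.IsPath) {i : ℕ} (hi : i < p.length) :
    p.getVert i ≠ v := by
  induction p generalizing i with
  | nil => simp at hi
  | cons h q ih =>
    rcases i with _ | i
    · simp only [Walk.getVert_zero]
      rintro rfl
      exact ((Walk.cons_isPath_iff h q).mp hp).2 q.end_mem_support
    · exact ih hp.of_cons (by simpa using hi)

lemma mem_dropUntil_of_le [DecidableEq V] {u v : V} {p : G.Walk u v} (hp : p.IsPath)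
    {x y : V} (hx : x ∈ p.support) {i j : ℕ} (hig : p.getVert i = x) (hjg : p.getVert j = y)
    (hj : j ≤ p.length) (hij : i ≤ j) :
    y ∈ (p.dropUntil x hx).support := by
  set t := p.takeUntil x hx with ht
  set d := p.dropUntil x hx with hd
  have hspec : t.append d = p := p.take_spec hx
  have hlen : t.length + d.length = p.length := by
    rw [← Walk.length_append, hspec]
  by_cases hcase : j < t.length
  · exfalso
    have hit : t.getVert i = x := by
      have := congrArg (fun w => Walk.getVert w i) hspec
      simp only [Walk.getVert_append] at this
      rw [if_pos (lt_of_le_of_lt hij hcase)] at this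
      rw [this, hig]
    exact getVert_ne_end t (hp.takeUntil hx) (lt_of_le_of_lt hij hcase) hit
  · push_neg at hcase
    have hdg : d.getVert (j - t.length) = y := by
      have := congrArg (fun w => Walk.getVert w j) hspec
      simp only [Walk.getVert_append] at this
      rw [if_neg (by omega)] at this
      rw [this, hjg]
    exact Walk.mem_support_iff_exists_getVert.mpr ⟨j - t.length, hdg, by omega⟩

lemma mem_dropUntil_or [DecidableEq V] {u v : V} {p : G.Walk u v} (hp : p.IsPath)
    {x y : V} (hx : x ∈ p.support) (hy : y ∈ p.support) :
    y ∈ (p.dropUntil x hx).support ∨ x ∈ (p.dropUntil y hy).support := by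
  obtain ⟨i, hig, hi⟩ := Walk.mem_support_iff_exists_getVert.mp hx
  obtain ⟨j, hjg, hj⟩ := Walk.mem_support_iff_exists_getVert.mp hy
  rcases le_total i j with h | h
  · exact Or.inl (mem_dropUntil_of_le hp hx hig hjg hj h)
  · exact Or.inr (mem_dropUntil_of_le hp hy hjg hig hi h)

lemma exists_firstDart {x y : V} (q : G.Walk x y) (hq : ¬ q.Nil) :
    ∃ D : G.Dart, D ∈ q.darts ∧ D.fst = x ∧ D.snd = q.getVert 1 := by
  cases q with
  | nil => simp at hq
  | cons h r =>
    exact ⟨⟨(_, _), h⟩, by simp [Walk.darts_cons], rfl, by simp⟩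

lemma darts_tail_subset {x y : V} (q : G.Walk x y) : q.tail.darts ⊆ q.darts := by
  cases q with
  | nil => intro d hd; exact hd
  | cons h r =>
    rw [Walk.tail_cons]
    simp only [Walk.darts_copy, Walk.darts_cons]
    exact List.subset_cons_of_subset _ (by simp)

end CEaux

theorem statement1 [Fintype V] [DecidableEq V] (G : SimpleGraph V) (hconn : G.Connected)
    (horder : 3 * vertexConnectivity G + 3 ≤ Fintype.card V)
    (hindep : _root_.indepNum G ≤ vertexConnectivity G + 1) :
    ∃ (u w : V) (p : G.Walk u w), p.IsHamiltonian := by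
  classical
  obtain ⟨x0⟩ := hconn.nonempty
  set L : Set ℕ := {n | ∃ (a b : V) (q : G.Walk a b), q.IsPath ∧ q.length = n} with hLdef
  have hLne : (0:ℕ) ∈ L := ⟨x0, x0, Walk.nil, Walk.IsPath.nil, rfl⟩
  have hlenbd : ∀ (a b : V) (q : G.Walk a b), q.IsPath → q.length + 1 ≤ Fintype.card V := by
    intro a b q hq
    have h1 : q.support.toFinset.card = q.support.length :=
      List.toFinset_card_of_nodup hq.support_nodup
    have h2 : q.support.toFinset.card ≤ Fintype.card V := by
      simpa using Finset.card_le_univ q.support.toFinset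
    rw [h1, Walk.length_support] at h2
    omega
  have hLbdd : BddAbove L := by
    refine ⟨Fintype.card V, ?_⟩
    rintro n ⟨a, b, q, hq, rfl⟩
    have := hlenbd a b q hq
    omega
  obtain ⟨u, v, p, hp, hplen⟩ := Nat.sSup_mem ⟨0, hLne⟩ hLbdd
  set N := sSup L with hNdef
  have hmax : ∀ (a b : V) (q : G.Walk a b), q.IsPath → q.length ≤ N :=
    fun a b q hq => le_csSup hLbdd ⟨a, b, q, hq, rfl⟩
  by_cases hall : ∀ x, x ∈ p.support
  · exact ⟨u, v, p, hp.isHamiltonian_of_mem hall⟩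
  push_neg at hall
  obtain ⟨a, ha⟩ := hall
  exfalso
  -- the component of `a` outside p
  set H : Set V := {x | ∃ q : G.Walk a x, ∀ y ∈ q.support, y ∉ p.support} with hHdef
  have haH : a ∈ H := ⟨Walk.nil, by simpa using ha⟩
  have hHP : ∀ x ∈ H, x ∉ p.support := fun x hx => by
    obtain ⟨q, hq⟩ := hx
    exact hq x q.end_mem_support
  have hHadj : ∀ x ∈ H, ∀ y, G.Adj x y → y ∉ p.support → y ∈ H := by
    rintro x ⟨q, hq⟩ y hxy hy
    refine ⟨q.concat hxy, ?_⟩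
    intro z hz
    rw [Walk.support_concat, List.mem_append] at hz
    rcases hz with hz | hz
    · exact hq z hz
    · simp at hz; subst hz; exact hy
  have hbridge : ∀ h1 ∈ H, ∀ h2 ∈ H, ∃ (m : G.Walk h1 h2), m.support.Nodup ∧
      ∀ y ∈ m.support, y ∉ p.support := by
    rintro h1 ⟨q1, hq1⟩ h2 ⟨q2, hq2⟩
    refine ⟨(q1.reverse.append q2).bypass, ((q1.reverse.append q2).bypass_isPath).support_nodup, ?_⟩
    intro y hy
    have hmem := (q1.reverse.append q2).support_bypass_subset hy
    rw [Walk.mem_support_append_iff] at hmem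
    rcases hmem with h | h
    · exact hq1 y (by rwa [Walk.support_reverse, List.mem_reverse] at h)
    · exact hq2 y h
  set W : Finset V := p.support.toFinset.filter (fun x => ∃ h ∈ H, G.Adj x h) with hWdef
  have hWmem : ∀ x, x ∈ W ↔ x ∈ p.support ∧ ∃ h ∈ H, G.Adj x h := by
    intro x; simp [hWdef]
  -- any path whose support is `ls ++ p.support` up to permutation is too long
  have htoolong : ∀ (ls : List V), ls ≠ [] → ls.Nodup → (∀ y ∈ ls, y ∉ p.support) →
      ∀ (x y : V) (q : G.Walk x y), q.support.Perm (ls ++ p.support) → False := by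
    intro ls hne hnd hdisj x y q hperm
    have hnodup : (ls ++ p.support).Nodup := by
      rw [List.nodup_append]
      exact ⟨hnd, hp.support_nodup, fun z hz z' hz' hzz => hdisj z hz (hzz ▸ hz')⟩
    have hqpath : q.IsPath := Walk.IsPath.mk' (hperm.nodup_iff.mpr hnodup)
    have hlen := hperm.length_eq
    rw [Walk.length_support, List.length_append, Walk.length_support, hplen] at hlen
    have hmax' := hmax _ _ q hqpath
    have hne' : 0 < ls.length := List.length_pos_iff.mpr hne
    omega
  -- start of a permuted max path has no neighbour in H
  have hstart : ∀ (x y : V) (q : G.Walk x y), q.support.Perm p.support →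
      ∀ h ∈ H, ¬ G.Adj x h := by
    intro x y q hperm h hh hadj
    refine htoolong [h] (by simp) (by simp) (by simpa using hHP h hh) h y
      (Walk.cons hadj.symm q) ?_
    rw [Walk.support_cons, List.singleton_append]
    exact hperm.cons h
  have huH : ∀ h ∈ H, ¬ G.Adj u h := hstart u v p (List.Perm.refl _)
  have hvH : ∀ h ∈ H, ¬ G.Adj v h := by
    refine hstart v u p.reverse ?_
    rw [Walk.support_reverse]
    exact List.reverse_perm _
  have huW : u ∉ W := by
    intro hc
    obtain ⟨-, h, hh, hadj⟩ := (hWmem u).mp hc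
    exact huH h hh hadj
  have hvW : v ∉ W := by
    intro hc
    obtain ⟨-, h, hh, hadj⟩ := (hWmem v).mp hc
    exact hvH h hh hadj
  have hWsupp : ∀ w ∈ W, w ∈ p.support ∧ w ≠ v := by
    intro w hw
    exact ⟨((hWmem w).mp hw).1, fun hc => hvW (hc ▸ hw)⟩
  -- W is a vertex cut
  have hkW : vertexConnectivity G ≤ W.card := by
    apply Nat.sInf_le
    refine ⟨W, rfl, Or.inl ?_⟩
    intro hconn'
    have ha' : a ∈ ((W : Set V)ᶜ : Set V) := by
      simp only [Set.mem_compl_iff, Finset.coe_sort_coe, Finset.mem_coe]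
      intro hc
      exact ha ((hWmem a).mp hc).1
    have hu' : u ∈ ((W : Set V)ᶜ : Set V) := by
      simp only [Set.mem_compl_iff, Finset.mem_coe]
      exact huW
    obtain ⟨q⟩ := hconn'.preconnected ⟨a, ha'⟩ ⟨u, hu'⟩
    have key : ∀ {s t : ((W : Set V)ᶜ : Set V)} (q : (G.induce ((W : Set V)ᶜ)).Walk s t),
        (s : V) ∈ H → (t : V) ∈ H := by
      intro s t q
      induction q with
      | nil => exact id
      | @cons s z t hadj q ih =>
        intro hs
        apply ih
        have hadj' : G.Adj (s : V) (z : V) := hadj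
        by_cases hz : (z : V) ∈ p.support
        · exfalso
          have : (z : V) ∈ W := (hWmem _).mpr ⟨hz, s, hs, hadj'.symm⟩
          exact z.2 this
        · exact hHadj _ hs _ hadj' hz
    exact hHP u (key q haH) p.start_mem_support
  -- successor function
  set S : V → V := fun x => if hx : x ∈ p.support then (p.dropUntil x hx).getVert 1 else x
    with hSdef'
  have hSdef : ∀ (x) (hx : x ∈ p.support), S x = (p.dropUntil x hx).getVert 1 := by
    intro x hx
    simp [hSdef', dif_pos hx]
  have hdart : ∀ (x) (hx : x ∈ p.support), x ≠ v →
      ∃ D : G.Dart, D ∈ p.darts ∧ D.fst = x ∧ D.snd = S x := by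
    intro x hx hxv
    obtain ⟨D, hD, h1, h2⟩ := CEaux.exists_firstDart (p.dropUntil x hx)
      (Walk.not_nil_of_ne hxv)
    exact ⟨D, p.darts_dropUntil_subset hx hD, h1, by rw [h2, hSdef x hx]⟩
  have hsnd_inj : ∀ D ∈ p.darts, ∀ D' ∈ p.darts, (D : G.Dart).snd = D'.snd → D = D' := by
    have hnd : (p.darts.map (·.snd)).Nodup := by
      rw [Walk.map_snd_darts]; exact hp.support_nodup.tail
    exact fun D hD D' hD' h => List.inj_on_of_nodup_map hnd hD hD' h
  have hfst_inj : ∀ D ∈ p.darts, ∀ D' ∈ p.darts, (D : G.Dart).fst = D'.fst → D = D' := by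
    have hnd : (p.darts.map (·.fst)).Nodup := by
      rw [Walk.map_fst_darts]
      exact hp.support_nodup.sublist (List.dropLast_sublist _)
    exact fun D hD D' hD' h => List.inj_on_of_nodup_map hnd hD hD' h
  have hSadj : ∀ (x) (hx : x ∈ p.support), x ≠ v → G.Adj x (S x) := by
    intro x hx hxv
    obtain ⟨D, hD, h1, h2⟩ := hdart x hx hxv
    rw [← h2, ← h1]
    exact D.adj
  have hStail : ∀ (x) (hx : x ∈ p.support), x ≠ v → S x ∈ p.support.tail := by
    intro x hx hxv
    obtain ⟨D, hD, h1, h2⟩ := hdart x hx hxv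
    rw [← Walk.map_snd_darts, ← h2]
    exact List.mem_map_of_mem hD
  have hSsupp : ∀ (x) (hx : x ∈ p.support), x ≠ v → S x ∈ p.support := by
    intro x hx hxv
    exact List.mem_of_mem_tail (hStail x hx hxv)
  have hSne_u : ∀ (x) (hx : x ∈ p.support), x ≠ v → S x ≠ u := by
    intro x hx hxv hc
    have h1 := hStail x hx hxv
    rw [hc] at h1
    have h2 := hp.support_nodup
    rw [p.support_eq_cons] at h2
    exact (List.nodup_cons.mp h2).1 h1
  have hSinj : ∀ (x) (hx : x ∈ p.support), x ≠ v → ∀ (y) (hy : y ∈ p.support), y ≠ v →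
      S x = S y → x = y := by
    intro x hx hxv y hy hyv h
    obtain ⟨D, hD, h1, h2⟩ := hdart x hx hxv
    obtain ⟨D', hD', h1', h2'⟩ := hdart y hy hyv
    have : D = D' := hsnd_inj D hD D' hD' (by rw [h2, h2', h])
    rw [← h1, ← h1', this]
  have hM : ∀ (w w' : V), w ≠ w' → (∃ h ∈ H, G.Adj w h) → (∃ h ∈ H, G.Adj w' h) →
      ∃ (M : G.Walk w w') (ls : List V), M.support = w :: (ls ++ [w']) ∧ ls ≠ [] ∧
        ls.Nodup ∧ ∀ y ∈ ls, y ∉ p.support := by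
    rintro w w' hne ⟨h1, hh1, hadj1⟩ ⟨h2, hh2, hadj2⟩
    obtain ⟨m, hmnd, hmav⟩ := hbridge h1 hh1 h2 hh2
    refine ⟨Walk.cons hadj1 (m.concat hadj2.symm), m.support, ?_, m.support_ne_nil, hmnd, hmav⟩
    rw [Walk.support_cons, Walk.support_concat]
  have hps : ∀ (w) (hw : w ∈ p.support), w ≠ v →
      p.support = (p.takeUntil w hw).support ++ (p.dropUntil w hw).tail.support := by
    intro w hw hwv
    conv_lhs => rw [← p.take_spec hw]
    rw [Walk.support_append, ← Walk.support_tail_of_not_nil _ (Walk.not_nil_of_ne hwv)]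
  have hes : ∀ (w) (hw : w ∈ p.support), w ≠ v →
      (p.dropUntil w hw).tail.support = S w :: (p.dropUntil w hw).tail.support.tail := by
    intro w hw hwv
    conv_lhs => rw [Walk.support_eq_cons]
    rw [hSdef w hw]
  have hclaim1 : ∀ w ∈ W, S w ∉ W := by
    intro w hw hSw
    obtain ⟨hwp, hwv⟩ := hWsupp w hw
    have hSw1 : (p.dropUntil w hwp).getVert 1 = S w := (hSdef w hwp).symm
    have hne : w ≠ S w := G.ne_of_adj (hSadj w hwp hwv)
    obtain ⟨M, ls, hMs, hlsne, hlsnd, hlsav⟩ :=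
      hM w (S w) hne ((hWmem w).mp hw).2 ((hWmem _).mp hSw).2
    refine htoolong ls hlsne hlsnd hlsav u v
      ((p.takeUntil w hwp).append (M.append ((p.dropUntil w hwp).tail.copy hSw1 rfl))) ?_
    rw [Walk.support_append, Walk.support_append, hMs, Walk.support_copy,
      List.cons_append, List.tail_cons, List.append_assoc, List.singleton_append,
      ← hes w hwp hwv, hps w hwp hwv]
    refine List.perm_iff_count.mpr fun z => ?_
    simp only [List.count_append] <;> omega
  have hclaim2 : ∀ w ∈ W, ¬ G.Adj u (S w) := by
    intro w hw hadj
    obtain ⟨hwp, hwv⟩ := hWsupp w hw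
    have hSw1 : (p.dropUntil w hwp).getVert 1 = S w := (hSdef w hwp).symm
    obtain ⟨-, h1, hh1, hadj1⟩ := (hWmem w).mp hw
    refine hstart w v
      ((p.takeUntil w hwp).reverse.append
        (Walk.cons hadj ((p.dropUntil w hwp).tail.copy hSw1 rfl))) ?_ h1 hh1 hadj1
    rw [Walk.support_append, Walk.support_cons, List.tail_cons, Walk.support_reverse,
      Walk.support_copy, hps w hwp hwv]
    refine List.perm_iff_count.mpr fun z => ?_
    simp only [List.count_append, List.count_reverse] <;> omega
  have hclaim3' : ∀ w ∈ W, ∀ w' ∈ W, w ≠ w' →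
      ∀ (hwp : w ∈ p.support) (hwv : w ≠ v), w' ∈ (p.dropUntil w hwp).tail.support →
      ¬ G.Adj (S w) (S w') := by
    intro w hw w' hw' hne hwp hwv hw'e hadj
    obtain ⟨hw'p, hw'v⟩ := hWsupp w' hw'
    have hSw1 : (p.dropUntil w hwp).getVert 1 = S w := (hSdef w hwp).symm
    have he2nil : ¬ ((p.dropUntil w hwp).tail.dropUntil w' hw'e).Nil :=
      Walk.not_nil_of_ne hw'v
    obtain ⟨D, hD, hDf, hDs⟩ :=
      CEaux.exists_firstDart ((p.dropUntil w hwp).tail.dropUntil w' hw'e) he2nil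
    have hDp : D ∈ p.darts :=
      p.darts_dropUntil_subset hwp (CEaux.darts_tail_subset _
        ((p.dropUntil w hwp).tail.darts_dropUntil_subset hw'e hD))
    obtain ⟨D', hD', hDf', hDs'⟩ := hdart w' hw'p hw'v
    have hDD : D = D' := hfst_inj D hDp D' hD' (by rw [hDf, hDf'])
    have hSw'1 : ((p.dropUntil w hwp).tail.dropUntil w' hw'e).getVert 1 = S w' := by
      rw [← hDs, hDD, hDs']
    obtain ⟨M, ls, hMs, hlsne, hlsnd, hlsav⟩ :=
      hM w w' hne ((hWmem w).mp hw).2 ((hWmem w').mp hw').2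
    refine htoolong ls hlsne hlsnd hlsav u v
      ((p.takeUntil w hwp).append (M.append
        ((((p.dropUntil w hwp).tail.takeUntil w' hw'e).copy hSw1 rfl).reverse.append
          (Walk.cons hadj (((p.dropUntil w hwp).tail.dropUntil w' hw'e).tail.copy hSw'1 rfl))))) ?_
    have hXs := Walk.support_eq_cons
      ((((p.dropUntil w hwp).tail.takeUntil w' hw'e).copy hSw1 rfl).reverse.append
        (Walk.cons hadj (((p.dropUntil w hwp).tail.dropUntil w' hw'e).tail.copy hSw'1 rfl)))
    have hes' : (p.dropUntil w hwp).tail.support =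
        ((p.dropUntil w hwp).tail.takeUntil w' hw'e).support ++
          ((p.dropUntil w hwp).tail.dropUntil w' hw'e).tail.support := by
      conv_lhs => rw [← (p.dropUntil w hwp).tail.take_spec hw'e]
      rw [Walk.support_append, ← Walk.support_tail_of_not_nil _ he2nil]
    rw [Walk.support_append, Walk.support_append, hMs,
      List.cons_append, List.tail_cons, List.append_assoc, List.singleton_append, ← hXs,
      hps w hwp hwv, hes']
    rw [Walk.support_append, Walk.support_cons, List.tail_cons, Walk.support_reverse,
      Walk.support_copy, Walk.support_copy]
    refine List.perm_iff_count.mpr fun z => ?_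
    simp only [List.count_append, List.count_reverse] <;> omega
  have hclaim3 : ∀ w ∈ W, ∀ w' ∈ W, w ≠ w' → ¬ G.Adj (S w) (S w') := by
    intro w hw w' hw' hne hadj
    obtain ⟨hwp, hwv⟩ := hWsupp w hw
    obtain ⟨hw'p, hw'v⟩ := hWsupp w' hw'
    rcases CEaux.mem_dropUntil_or hp hwp hw'p with h | h
    · have hmem : w' ∈ (p.dropUntil w hwp).tail.support := by
        rw [Walk.support_tail_of_not_nil _ (Walk.not_nil_of_ne hwv)]
        rw [Walk.support_eq_cons] at h
        rcases List.mem_cons.mp h with h3 | h3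
        · exact absurd h3 hne.symm
        · exact h3
      exact hclaim3' w hw w' hw' hne hwp hwv hmem hadj
    · have hmem : w ∈ (p.dropUntil w' hw'p).tail.support := by
        rw [Walk.support_tail_of_not_nil _ (Walk.not_nil_of_ne hw'v)]
        rw [Walk.support_eq_cons] at h
        rcases List.mem_cons.mp h with h3 | h3
        · exact absurd h3 hne
        · exact h3
      exact hclaim3' w' hw' w hw hne.symm hw'p hw'v hmem hadj.symm
  -- assemble the independent set
  have hua : ¬ G.Adj u a := hstart u v p (List.Perm.refl _) a haH
  have haS : ∀ w ∈ W, ¬ G.Adj a (S w) := by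
    intro w hw hadj
    obtain ⟨hwp, hwv⟩ := hWsupp w hw
    exact hclaim1 w hw ((hWmem _).mpr ⟨hSsupp w hwp hwv, a, haH, hadj.symm⟩)
  have hanu : a ≠ u := fun hc => ha (hc ▸ p.start_mem_support)
  have haimg : a ∉ W.image S := by
    intro hc
    obtain ⟨w, hw, hwa⟩ := Finset.mem_image.mp hc
    obtain ⟨hwp, hwv⟩ := hWsupp w hw
    exact ha (hwa ▸ hSsupp w hwp hwv)
  have huimg : u ∉ W.image S := by
    intro hc
    obtain ⟨w, hw, hwa⟩ := Finset.mem_image.mp hc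
    obtain ⟨hwp, hwv⟩ := hWsupp w hw
    exact hSne_u w hwp hwv hwa
  have hcard : (insert u (insert a (W.image S))).card = W.card + 2 := by
    rw [Finset.card_insert_of_notMem (by simp [huimg, hanu.symm]),
      Finset.card_insert_of_notMem haimg,
      Finset.card_image_of_injOn (fun w hw w' hw' h =>
        hSinj w (hWsupp w hw).1 (hWsupp w hw).2 w' (hWsupp w' hw').1 (hWsupp w' hw').2 h)]
  have hindepI : ∀ x ∈ insert u (insert a (W.image S)), ∀ y ∈ insert u (insert a (W.image S)),
      x ≠ y → ¬ G.Adj x y := by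
    intro x hx y hy hxy hadj
    simp only [Finset.mem_insert, Finset.mem_image] at hx hy
    rcases hx with rfl | rfl | ⟨w, hw, rfl⟩ <;> rcases hy with rfl | rfl | h
    · exact hxy rfl
    · exact hua hadj
    · obtain ⟨w, hw, rfl⟩ := h
      exact hclaim2 w hw hadj
    · exact hua hadj.symm
    · exact hxy rfl
    · obtain ⟨w, hw, rfl⟩ := h
      exact haS w hw hadj
    · exact hclaim2 w hw hadj.symm
    · exact haS w hw hadj.symm
    · obtain ⟨w', hw', rfl⟩ := h
      have hne : w ≠ w' := fun hc => hxy (by rw [hc])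
      exact hclaim3 w hw w' hw' hne hadj
  have hbdd : BddAbove {n : ℕ | ∃ s : Finset V,
      (∀ x ∈ s, ∀ y ∈ s, x ≠ y → ¬ G.Adj x y) ∧ s.card = n} := by
    refine ⟨Fintype.card V, ?_⟩
    rintro n ⟨s, -, rfl⟩
    simpa using Finset.card_le_univ s
  have hle : (insert u (insert a (W.image S))).card ≤ _root_.indepNum G :=
    le_csSup hbdd ⟨insert u (insert a (W.image S)), hindepI, rfl⟩
  rw [hcard] at hle
  omega
end

section
/- Let G be a connected simple graph with κ(G) = 1 and α(G) = 2 that contains a cycle, and let C be a longest cycle of G. Then the induced subgraph G − V(C) is a complete graph. -/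
open SimpleGraph

variable {V : Type*}

/-- Build a walk from a sequence of pairwise-adjacent vertices. -/
lemma walkOfSeq {G : SimpleGraph V} :
    ∀ (k : ℕ) (f : ℕ → V), (∀ i, i < k → G.Adj (f i) (f (i+1))) →
    ∃ T : G.Walk (f 0) (f k),
      T.length = k ∧ T.support = (List.range (k+1)).map f ∧
      T.edges = (List.range k).map (fun i => s(f i, f (i+1))) := by
  intro k
  induction k with
  | zero =>
    intro f _
    exact ⟨Walk.nil, by simp [List.range_succ]⟩
  | succ k ih =>
    intro f hf
    obtain ⟨T, hlen, hsup, hedg⟩ := ih (fun i => f (i+1)) (fun i hi => hf (i+1) (by omega))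
    refine ⟨Walk.cons (hf 0 (by omega)) T, by simp [hlen], ?_, ?_⟩
    · rw [Walk.support_cons, hsup, List.range_succ_eq_map (n := k+1)]
      simp [List.map_map, Function.comp]
    · rw [Walk.edges_cons, hedg, List.range_succ_eq_map (n := k)]
      simp [List.map_map, Function.comp]

/-- Build a cycle from a cyclic sequence of pairwise-adjacent vertices that is
injective over one period. -/
lemma cycleOfSeq {G : SimpleGraph V} (k : ℕ) (f : ℕ → V) (hk : 3 ≤ k)
    (hadj : ∀ i, i < k → G.Adj (f i) (f (i+1))) (hcyc : f k = f 0)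
    (hinj : ∀ i j, i < k → j < k → f i = f j → i = j) :
    ∃ (u : V) (W : G.Walk u u), W.IsCycle ∧ W.length = k := by
  obtain ⟨T, hlen, hsup, hedg⟩ := walkOfSeq k f hadj
  refine ⟨f 0, T.copy rfl hcyc, ⟨⟨⟨?_⟩, ?_⟩, ?_⟩, by simp [hlen]⟩
  · -- edges nodup
    rw [Walk.edges_copy, hedg]
    refine List.Nodup.map_on ?_ (List.nodup_range (n := k))
    intro i hi j hj he
    rw [List.mem_range] at hi hj
    rcases Sym2.eq_iff.1 he with ⟨h1, h2⟩ | ⟨h1, h2⟩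
    · exact hinj i j hi hj h1
    · -- f i = f (j+1), f (i+1) = f j
      by_cases hj1 : j + 1 = k
      · -- f i = f 0, so i = 0; f (i+1) = f j
        have hk0 : (0:ℕ) < k := by omega
        have hi0 : i = 0 := hinj i 0 hi hk0 (by rw [h1, hj1, hcyc])
        have hij : i + 1 = j := hinj (i+1) j (by omega) hj h2
        omega
      · have hij1 : i = j + 1 := hinj i (j+1) hi (Nat.lt_of_le_of_ne hj hj1) h1
        by_cases hik : i + 1 = k
        · have hj0 : j = 0 := hinj j 0 hj (by omega) (by rw [← h2, hik, hcyc])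
          omega
        · have hij2 : i + 1 = j := hinj (i+1) j (Nat.lt_of_le_of_ne hi hik) hj h2
          omega
  · -- ne nil
    intro h
    have := congrArg Walk.length h
    rw [Walk.length_copy, hlen] at this
    simp at this
    omega
  · -- support tail nodup
    rw [Walk.support_copy, hsup, List.range_succ_eq_map (n := k)]
    simp only [List.map_cons, List.tail_cons, List.map_map]
    refine List.Nodup.map_on ?_ (List.nodup_range (n := k))
    intro i hi j hj he
    rw [List.mem_range] at hi hj
    simp only [Function.comp, Nat.succ_eq_add_one] at he
    by_cases hik : i + 1 = k
    · by_cases hjk : j + 1 = k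
      · omega
      · have h0 : f (i+1) = f (j+1) := he
        rw [hik, hcyc] at h0
        have : 0 = j + 1 := hinj 0 (j+1) (by omega) (by omega) h0
        omega
    · by_cases hjk : j + 1 = k
      · have h0 : f (j+1) = f (i+1) := he.symm
        rw [hjk, hcyc] at h0
        have : 0 = i + 1 := hinj 0 (i+1) (by omega) (by omega) h0
        omega
      · have := hinj (i+1) (j+1) (by omega) (by omega) he
        omega

/-- support getElem equals getVert -/
lemma support_getElem_eq {G : SimpleGraph V} {u v : V} (p : G.Walk u v) (i : ℕ)
    (h : i < p.support.length) : p.support[i] = p.getVert i := by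
  induction p generalizing i with
  | nil => simp at h; subst h; simp [Walk.getVert]
  | cons hadj q ih =>
    cases i with
    | zero => simp
    | succ m =>
      simp only [Walk.support_cons, List.getElem_cons_succ, Walk.getVert_cons_succ]
      exact ih m (by simpa [Walk.length_support] using h)

theorem statement4 [Fintype V] (G : SimpleGraph V) (hconn : G.Connected)
    (hkappa : vertexConnectivity G = 1) (halpha : _root_.indepNum G = 2)
    (v : V) (C : G.Walk v v) (hC : C.IsCycle)
    (hlongest : ∀ (u : V) (w : G.Walk u u), w.IsCycle → w.length ≤ C.length) :
    ∀ x y : V, x ∉ C.support → y ∉ C.support → x ≠ y → G.Adj x y := by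
  intro x y hx hy hxy
  by_contra hadj
  classical
  have hn3 : 3 ≤ C.length := hC.three_le_length
  set n := C.length with hn
  set c : ℕ → V := fun i => C.getVert (i % n) with hcdef
  have hc0 : c 0 = v := by simp [hcdef]
  have hcper : ∀ a, c (a + n) = c a := by
    intro a; simp [hcdef, Nat.add_mod_right]
  have hcadj : ∀ i, G.Adj (c i) (c (i+1)) := by
    intro i
    have hmod : (i+1) % n = (i % n + 1) % n := by
      conv_lhs => rw [Nat.add_mod]
      rw [Nat.mod_eq_of_lt (show (1:ℕ) < n by omega)]
    have hlt : i % n < n := Nat.mod_lt _ (by omega)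
    by_cases hend : i % n + 1 = n
    · have h2 : (i+1) % n = 0 := by rw [hmod, hend, Nat.mod_self]
      have := C.adj_getVert_succ (show i % n < n from hlt)
      simp only [hcdef]
      rw [h2]
      rw [hend] at this
      rwa [show C.getVert n = C.getVert 0 by rw [C.getVert_zero]; exact C.getVert_length]
        at this
    · have h2 : (i+1) % n = i % n + 1 := by rw [hmod, Nat.mod_eq_of_lt (by omega)]
      have := C.adj_getVert_succ (show i % n < n from hlt)
      simp only [hcdef]
      rw [h2]
      exact this
  have hcmem : ∀ i, c i ∈ C.support := by
    intro i
    rw [Walk.mem_support_iff_exists_getVert]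
    exact ⟨i % n, rfl, by have := Nat.mod_lt i (show 0 < n by omega); omega⟩
  -- injectivity of getVert below length
  have hgv : ∀ i j, i < n → j < n → C.getVert i = C.getVert j → i = j := by
    intro i j hi hj he
    have hnd : C.support.tail.Nodup := hC.support_nodup
    have htl : C.support.tail.length = n := by
      rw [List.length_tail, Walk.length_support]
      omega
    have hget : ∀ m (hm : m < n), C.support.tail[m]'(by omega) = C.getVert (m+1) := by
      intro m hm
      rw [List.getElem_tail]
      exact support_getElem_eq C (m+1) (by rw [Walk.length_support]; omega)
    have hinj : ∀ a b, a < n → b < n → C.getVert (a+1) = C.getVert (b+1) → a = b := by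
      intro a b ha hb hab
      have hinjf := List.nodup_iff_injective_getElem.mp hnd
      have := hinjf (a₁ := ⟨a, by omega⟩) (a₂ := ⟨b, by omega⟩) (by
        show C.support.tail[a]'(by omega) = C.support.tail[b]'(by omega)
        rw [hget a ha, hget b hb]; exact hab)
      simpa using congrArg Fin.val this
    rcases Nat.eq_zero_or_pos i with rfl | hip
    · rcases Nat.eq_zero_or_pos j with rfl | hjp
      · rfl
      · have hv : C.getVert n = C.getVert j := by
          rw [show C.getVert n = C.getVert 0 by rw [C.getVert_zero]; exact C.getVert_length]
          exact he
        have := hinj (n-1) (j-1) (by omega) (by omega)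
          (by rw [show n-1+1 = n by omega, show j-1+1 = j by omega]; exact hv)
        omega
    · rcases Nat.eq_zero_or_pos j with rfl | hjp
      · have hv : C.getVert i = C.getVert n := by
          rw [show C.getVert n = C.getVert 0 by rw [C.getVert_zero]; exact C.getVert_length]
          exact he
        have := hinj (i-1) (n-1) (by omega) (by omega)
          (by rw [show n-1+1 = n by omega, show i-1+1 = i by omega]; exact hv)
        omega
      · have := hinj (i-1) (j-1) (by omega) (by omega)
          (by rw [show i-1+1 = i by omega, show j-1+1 = j by omega]; exact he)
        omega
  have hcinj : ∀ a b, c a = c b → a % n = b % n := by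
    intro a b he
    exact hgv _ _ (Nat.mod_lt _ (by omega)) (Nat.mod_lt _ (by omega)) he
  -- independence number bound
  have indep3 : ∀ a b d : V, a ≠ b → a ≠ d → b ≠ d →
      ¬G.Adj a b → ¬G.Adj a d → ¬G.Adj b d → False := by
    intro a b d hab had hbd nab nad nbd
    have hmem : (3:ℕ) ∈ {m : ℕ | ∃ s : Finset V,
        (∀ x ∈ s, ∀ y ∈ s, x ≠ y → ¬ G.Adj x y) ∧ s.card = m} := by
      refine ⟨{a, b, d}, ?_, ?_⟩
      · intro p hp q hq hpq
        simp only [Finset.mem_insert, Finset.mem_singleton] at hp hq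
        rcases hp with rfl|rfl|rfl <;> rcases hq with rfl|rfl|rfl <;>
          first
            | exact absurd rfl hpq
            | exact nab
            | exact nad
            | exact nbd
            | exact fun h => nab h.symm
            | exact fun h => nad h.symm
            | exact fun h => nbd h.symm
      · rw [Finset.card_insert_of_notMem (by simp [hab, had]),
          Finset.card_insert_of_notMem (by simp [hbd]), Finset.card_singleton]
    have hbdd : BddAbove {m : ℕ | ∃ s : Finset V,
        (∀ x ∈ s, ∀ y ∈ s, x ≠ y → ¬ G.Adj x y) ∧ s.card = m} := by
      refine ⟨Fintype.card V, ?_⟩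
      rintro m ⟨s, -, rfl⟩
      exact le_trans (Finset.card_le_univ s) (le_of_eq Finset.card_univ)
    have h3 : (3:ℕ) ≤ _root_.indepNum G := le_csSup hbdd hmem
    rw [halpha] at h3
    omega
  -- no two consecutive cycle vertices adjacent to an outside vertex
  have hB : ∀ z, z ∉ C.support → ∀ i, G.Adj z (c i) → G.Adj z (c (i+1)) → False := by
    intro z hz i hzi hzi1
    set h : ℕ → V := fun j =>
      if j = n then z else if j = n+1 then c (i+1) else c (i+1+j) with hh
    have hne1 : ∀ j, j ≠ n → j ≠ n + 1 → h j = c (i+1+j) := by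
      intro j h1 h2
      simp only [hh]
      rw [if_neg h1, if_neg h2]
    have hadjseq : ∀ j, j < n+1 → G.Adj (h j) (h (j+1)) := by
      intro j hj
      rcases lt_trichotomy j (n-1) with h1 | h1 | h1
      · rw [hne1 j (by omega) (by omega), hne1 (j+1) (by omega) (by omega)]
        exact hcadj (i+1+j)
      · subst h1
        rw [hne1 (n-1) (by omega) (by omega)]
        rw [show n - 1 + 1 = n by omega]
        have e1 : c (i+1+(n-1)) = c i := by
          rw [show i+1+(n-1) = i + n by omega]; exact hcper i
        rw [e1, show h n = z by simp [hh]]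
        exact hzi.symm
      · have hjn : j = n := by omega
        subst hjn
        rw [show h n = z by simp [hh], show h (n+1) = c (i+1) by simp [hh]]
        exact hzi1
    have hwrap : h (n+1) = h 0 := by
      rw [show h (n+1) = c (i+1) by simp [hh], hne1 0 (by omega) (by omega)]
    have hinjseq : ∀ j j', j < n+1 → j' < n+1 → h j = h j' → j = j' := by
      intro j j' hjlt hj'lt he
      by_cases hjn : j = n <;> by_cases hj'n : j' = n
      · omega
      · exfalso
        rw [hjn, show h n = z by simp [hh], hne1 j' hj'n (by omega)] at he
        exact hz (he ▸ hcmem (i+1+j'))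
      · exfalso
        rw [hj'n, show h n = z by simp [hh], hne1 j hjn (by omega)] at he
        exact hz (he ▸ hcmem (i+1+j))
      · rw [hne1 j hjn (by omega), hne1 j' hj'n (by omega)] at he
        have hmm := hcinj _ _ he
        have : j % n = j' % n :=
          Nat.ModEq.add_left_cancel' (i+1) (by unfold Nat.ModEq; simpa [Nat.add_assoc] using hmm)
        rw [Nat.mod_eq_of_lt (by omega), Nat.mod_eq_of_lt (by omega)] at this
        exact this
    obtain ⟨u, W, hW, hWl⟩ := cycleOfSeq (n+1) h (by omega) hadjseq hwrap hinjseq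
    have := hlongest u W hW
    omega
  -- key lemma, symmetric in the pair
  have key : ∀ x' y' : V, x' ∉ C.support → y' ∉ C.support → x' ≠ y' →
      ¬G.Adj x' y' → G.Adj x' (c 0) → False := by
    intro x' y' hx' hy' hne hnadj hx0
    have hcover : ∀ i, G.Adj x' (c i) ∨ G.Adj y' (c i) := by
      intro i
      by_contra hcc
      push_neg at hcc
      refine indep3 x' y' (c i) hne ?_ ?_ hnadj hcc.1 hcc.2
      · intro h; apply hx'; rw [h]; exact hcmem i
      · intro h; apply hy'; rw [h]; exact hcmem i
    have halt : ∀ i, (i % 2 = 0 → G.Adj x' (c i)) ∧ (i % 2 = 1 → G.Adj y' (c i)) := by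
      intro i
      induction i with
      | zero => exact ⟨fun _ => hx0, fun hh => by omega⟩
      | succ m ih =>
        constructor
        · intro hm
          rcases hcover (m+1) with hcv | hcv
          · exact hcv
          · exact (hB y' hy' m (ih.2 (by omega)) hcv).elim
        · intro hm
          rcases hcover (m+1) with hcv | hcv
          · exact (hB x' hx' m (ih.1 (by omega)) hcv).elim
          · exact hcv
    have hx2 : G.Adj x' (c 2) := (halt 2).1 (by norm_num)
    have hy1 : G.Adj y' (c 1) := (halt 1).2 (by norm_num)
    have hy3 : G.Adj y' (c 3) := (halt 3).2 (by norm_num)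
    set g : ℕ → V := fun j => if j = 0 then c 0 else if j = 1 then x' else
      if j = 2 then c 2 else if j = 3 then c 1 else if j = 4 then y' else c (j-2) with hg
    have hg5 : ∀ j, 5 ≤ j → g j = c (j-2) := by
      intro j hj
      simp only [hg]
      rw [if_neg (by omega), if_neg (by omega), if_neg (by omega), if_neg (by omega),
        if_neg (by omega)]
    set gIdx : ℕ → ℕ := fun j => if j = 0 then 0 else if j = 2 then 2 else
      if j = 3 then 1 else j - 2 with hgi
    have hval : ∀ j, j < n+2 → (j = 1 ∧ g j = x') ∨ (j = 4 ∧ g j = y') ∨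
        (j ≠ 1 ∧ j ≠ 4 ∧ g j = c (gIdx j) ∧ gIdx j < n) := by
      intro j hj
      by_cases h1 : j = 1
      · exact Or.inl ⟨h1, by rw [h1]; simp [hg]⟩
      by_cases h4 : j = 4
      · exact Or.inr (Or.inl ⟨h4, by rw [h4]; simp [hg]⟩)
      refine Or.inr (Or.inr ⟨h1, h4, ?_, ?_⟩)
      · by_cases h0 : j = 0
        · rw [h0]; simp [hg, hgi]
        by_cases h2 : j = 2
        · rw [h2]; simp [hg, hgi]
        by_cases h3 : j = 3
        · rw [h3]; simp [hg, hgi]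
        · rw [hg5 j (by omega)]
          simp only [hgi]
          rw [if_neg h0, if_neg h2, if_neg h3]
      · simp only [hgi]
        split_ifs <;> omega
    have hgiinj : ∀ j j', j < n+2 → j' < n+2 → j ≠ 1 → j ≠ 4 → j' ≠ 1 → j' ≠ 4 →
        gIdx j = gIdx j' → j = j' := by
      intro j j' hj hj' hj1 hj4 hj'1 hj'4 he
      simp only [hgi] at he
      split_ifs at he <;> omega
    have hadjseq : ∀ j, j < n+2 → G.Adj (g j) (g (j+1)) := by
      intro j hj
      match j with
      | 0 => simpa [hg] using hx0.symm
      | 1 => simpa [hg] using hx2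
      | 2 => simpa [hg] using (hcadj 1).symm
      | 3 => simpa [hg] using hy1.symm
      | 4 =>
        rw [hg5 5 (by norm_num)]
        simpa [hg] using hy3
      | (m+5) =>
        rw [hg5 (m+5) (by omega), hg5 (m+5+1) (by omega)]
        have := hcadj (m+3)
        convert this using 2 <;> omega
    have hwrap : g (n+2) = g 0 := by
      rw [hg5 (n+2) (by omega)]
      have hcn : c (n+2-2) = c 0 := by
        rw [show n+2-2 = 0 + n by omega]; exact hcper 0
      rw [hcn]; simp [hg]
    have hinjseq : ∀ j j', j < n+2 → j' < n+2 → g j = g j' → j = j' := by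
      intro j j' hj hj' he
      rcases hval j hj with ⟨hj1, hv⟩ | ⟨hj1, hv⟩ | ⟨hj1, hj4, hv, hlt⟩ <;>
        rcases hval j' hj' with ⟨hj'1, hv'⟩ | ⟨hj'1, hv'⟩ | ⟨hj'1, hj'4, hv', hlt'⟩
      · omega
      · rw [hv, hv'] at he; exact absurd he hne
      · rw [hv, hv'] at he; exact absurd (hcmem (gIdx j')) (he ▸ hx')
      · rw [hv, hv'] at he; exact absurd he.symm hne
      · omega
      · rw [hv, hv'] at he; exact absurd (hcmem (gIdx j')) (he ▸ hy')
      · rw [hv, hv'] at he; exact absurd (hcmem (gIdx j)) (he.symm ▸ hx')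
      · rw [hv, hv'] at he; exact absurd (hcmem (gIdx j)) (he.symm ▸ hy')
      · rw [hv, hv'] at he
        have := hcinj _ _ he
        rw [Nat.mod_eq_of_lt hlt, Nat.mod_eq_of_lt hlt'] at this
        exact hgiinj j j' hj hj' hj1 hj4 hj'1 hj'4 this
    obtain ⟨u, W, hW, hWl⟩ := cycleOfSeq (n+2) g (by omega) hadjseq hwrap hinjseq
    have := hlongest u W hW
    omega
  -- conclude
  have h0 : G.Adj x (c 0) ∨ G.Adj y (c 0) := by
    by_contra hcc
    push_neg at hcc
    refine indep3 x y (c 0) hxy ?_ ?_ hadj hcc.1 hcc.2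
    · intro h; apply hx; rw [h]; exact hcmem 0
    · intro h; apply hy; rw [h]; exact hcmem 0
  rcases h0 with h | h
  · exact key x y hx hy hxy hadj h
  · exact key y x hy hx hxy.symm (fun h' => hadj h'.symm) h
end

section
/- Let G be a connected simple graph of order n ≥ 6 with κ(G) = 1 and α(G) = 2. If G has no 2-factor with at most two connected components, then G belongs to the exceptional class 𝒢. -/
open SimpleGraph

variable {V : Type*}

/-- The exceptional class 𝒢 of graphs: either (i) the vertex set is A ∪ {u, v} where A
induces a complete graph, uv is an edge, v has no neighbour in A, u is adjacent to at
least 2 vertices of A, and there are no other edges; or (ii) the graph G₃: A induces a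
complete graph, uv is an edge, exactly one vertex w of A is joined to u, and there are
no other edges. -/
def InExceptionalClass [Fintype V] (G : SimpleGraph V) : Prop :=
  (∃ u v : V, u ≠ v ∧ G.Adj u v ∧
    (∀ a b : V, a ∉ ({u, v} : Set V) → b ∉ ({u, v} : Set V) → a ≠ b → G.Adj a b) ∧
    (∀ a : V, a ∉ ({u, v} : Set V) → ¬ G.Adj v a) ∧
    2 ≤ {a : V | a ∉ ({u, v} : Set V) ∧ G.Adj u a}.ncard)
  ∨ (∃ u v w : V, u ≠ v ∧ w ∉ ({u, v} : Set V) ∧ G.Adj u v ∧ G.Adj u w ∧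
    (∀ a b : V, a ∉ ({u, v} : Set V) → b ∉ ({u, v} : Set V) → a ≠ b → G.Adj a b) ∧
    (∀ a : V, a ∉ ({u, v} : Set V) → ¬ G.Adj v a) ∧
    (∀ a : V, a ∉ ({u, v} : Set V) → G.Adj u a → a = w))

lemma rotNat_inv1 {m i : ℕ} (hm : 1 ≤ m) (hi : i < m) :
    ((i + 1) % m + (m - 1)) % m = i := by
  rcases Nat.lt_or_ge (i + 1) m with h | h
  · rw [Nat.mod_eq_of_lt h, show i + 1 + (m - 1) = i + m from by omega,
      Nat.add_mod_right, Nat.mod_eq_of_lt hi]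
  · rw [show i + 1 = m from by omega, Nat.mod_self, Nat.zero_add,
      Nat.mod_eq_of_lt (show m - 1 < m from by omega)]
    omega

lemma rotNat_inv2 {m i : ℕ} (hm : 1 ≤ m) (hi : i < m) :
    ((i + (m - 1)) % m + 1) % m = i := by
  rcases Nat.eq_zero_or_pos i with rfl | h
  · rw [Nat.zero_add, Nat.mod_eq_of_lt (show m - 1 < m from by omega),
      show m - 1 + 1 = m from by omega, Nat.mod_self]
  · rw [show i + (m - 1) = (i - 1) + m from by omega, Nat.add_mod_right,
      Nat.mod_eq_of_lt (show i - 1 < m from by omega),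
      show i - 1 + 1 = i from by omega, Nat.mod_eq_of_lt hi]

lemma rotNat_ne {m i : ℕ} (hm : 2 ≤ m) (hi : i < m) : (i + 1) % m ≠ i := by
  rcases Nat.lt_or_ge (i + 1) m with h | h
  · rw [Nat.mod_eq_of_lt h]; omega
  · rw [show i + 1 = m from by omega, Nat.mod_self]; omega

lemma rotNat_ne2 {m i : ℕ} (hm : 3 ≤ m) (hi : i < m) : ((i + 1) % m + 1) % m ≠ i := by
  rcases Nat.lt_or_ge (i + 2) m with h | h
  · rw [Nat.mod_eq_of_lt (show i + 1 < m from by omega),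
      Nat.mod_eq_of_lt (show i + 1 + 1 < m from by omega)]
    omega
  · rcases Nat.lt_or_ge (i + 1) m with h' | h'
    · rw [Nat.mod_eq_of_lt h', show i + 1 + 1 = m from by omega, Nat.mod_self]
      omega
    · rw [show i + 1 = m from by omega, Nat.mod_self, Nat.zero_add,
        Nat.mod_eq_of_lt (show 1 < m from by omega)]
      omega

lemma cyclic_perm {α : Type*} (s : Finset α) (h3 : 3 ≤ s.card) :
    ∃ f g : {x // x ∈ s} → {x // x ∈ s}, (∀ x, g (f x) = x) ∧ (∀ x, f (g x) = x) ∧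
      (∀ x, f x ≠ x) ∧ (∀ x, f (f x) ≠ x) ∧ ∃ x0, ∀ x, ∃ n : ℕ, f^[n] x0 = x := by
  have hm0 : 0 < s.card := by omega
  set m := s.card with hm
  let e := s.equivFin
  let r : Fin m → Fin m := fun i => ⟨(i.1 + 1) % m, Nat.mod_lt _ hm0⟩
  let r' : Fin m → Fin m := fun i => ⟨(i.1 + (m - 1)) % m, Nat.mod_lt _ hm0⟩
  let f := fun x => e.symm (r (e x))
  let g := fun x => e.symm (r' (e x))
  have hrr' : ∀ i, r' (r i) = i := fun i => Fin.ext (rotNat_inv1 (by omega) i.isLt)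
  have hr'r : ∀ i, r (r' i) = i := fun i => Fin.ext (rotNat_inv2 (by omega) i.isLt)
  have hef : ∀ x, e (f x) = r (e x) := fun x => e.apply_symm_apply _
  refine ⟨f, g, ?_, ?_, ?_, ?_, e.symm ⟨0, hm0⟩, ?_⟩
  · intro x; show e.symm (r' (e (f x))) = x
    rw [hef, hrr', e.symm_apply_apply]
  · intro x; show e.symm (r (e (g x))) = x
    rw [show e (g x) = r' (e x) from e.apply_symm_apply _, hr'r, e.symm_apply_apply]
  · intro x hx
    have : r (e x) = e x := by
      conv_rhs => rw [← hx]
      rw [hef]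
    exact rotNat_ne (by omega) (e x).isLt (congrArg Fin.val this)
  · intro x hx
    have : r (r (e x)) = e x := by
      conv_rhs => rw [← hx, hef, hef]
    exact rotNat_ne2 h3 (e x).isLt (congrArg Fin.val this)
  · intro x
    have key : ∀ n : ℕ, e (f^[n] (e.symm ⟨0, hm0⟩)) = ⟨n % m, Nat.mod_lt _ hm0⟩ := by
      intro n
      induction n with
      | zero => simp [Nat.zero_mod]
      | succ n ih =>
        rw [Function.iterate_succ_apply', hef, ih]
        apply Fin.ext
        show (n % m + 1) % m = (n + 1) % m
        conv_rhs => rw [Nat.add_mod, Nat.mod_eq_of_lt (show 1 < m from by omega)]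
    refine ⟨(e x).1, e.injective ?_⟩
    rw [key]
    exact Fin.ext (Nat.mod_eq_of_lt (e x).isLt)

lemma exists_twoFactor [Fintype V] (G : SimpleGraph V) (s t : Finset V)
    (hdisj : ∀ v, ¬(v ∈ s ∧ v ∈ t)) (hcover : ∀ v, v ∈ s ∨ v ∈ t)
    (hs3 : 3 ≤ s.card) (ht3 : 3 ≤ t.card)
    (hsc : ∀ x ∈ s, ∀ y ∈ s, x ≠ y → G.Adj x y)
    (htc : ∀ x ∈ t, ∀ y ∈ t, x ≠ y → G.Adj x y) :
    HasTwoFactorAtMostTwo G := by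
  classical
  obtain ⟨f1, g1, hgf1, hfg1, hne1, hff1, x0, hsur1⟩ := cyclic_perm s hs3
  obtain ⟨f2, g2, hgf2, hfg2, hne2, hff2, y0, hsur2⟩ := cyclic_perm t ht3
  let f : V → V := fun v =>
    if h : v ∈ s then (f1 ⟨v, h⟩ : V) else (f2 ⟨v, (hcover v).resolve_left h⟩ : V)
  let g : V → V := fun v =>
    if h : v ∈ s then (g1 ⟨v, h⟩ : V) else (g2 ⟨v, (hcover v).resolve_left h⟩ : V)
  have hfs : ∀ v (h : v ∈ s), f v = ↑(f1 ⟨v, h⟩) := fun v h => dif_pos h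
  have hft : ∀ v (h : v ∈ t), f v = ↑(f2 ⟨v, h⟩) :=
    fun v h => dif_neg (fun hs' => hdisj v ⟨hs', h⟩)
  have hgs : ∀ v (h : v ∈ s), g v = ↑(g1 ⟨v, h⟩) := fun v h => dif_pos h
  have hgt : ∀ v (h : v ∈ t), g v = ↑(g2 ⟨v, h⟩) :=
    fun v h => dif_neg (fun hs' => hdisj v ⟨hs', h⟩)
  -- basic facts
  have hgf : ∀ v, g (f v) = v := by
    intro v
    rcases hcover v with h | h
    · rw [hfs v h, hgs _ (f1 ⟨v, h⟩).2]
      rw [show (⟨↑(f1 ⟨v, h⟩), (f1 ⟨v, h⟩).2⟩ : {x // x ∈ s}) = f1 ⟨v, h⟩ from rfl, hgf1]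
    · rw [hft v h, hgt _ (f2 ⟨v, h⟩).2]
      rw [show (⟨↑(f2 ⟨v, h⟩), (f2 ⟨v, h⟩).2⟩ : {x // x ∈ t}) = f2 ⟨v, h⟩ from rfl, hgf2]
  have hfg : ∀ v, f (g v) = v := by
    intro v
    rcases hcover v with h | h
    · rw [hgs v h, hfs _ (g1 ⟨v, h⟩).2]
      rw [show (⟨↑(g1 ⟨v, h⟩), (g1 ⟨v, h⟩).2⟩ : {x // x ∈ s}) = g1 ⟨v, h⟩ from rfl, hfg1]
    · rw [hgt v h, hft _ (g2 ⟨v, h⟩).2]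
      rw [show (⟨↑(g2 ⟨v, h⟩), (g2 ⟨v, h⟩).2⟩ : {x // x ∈ t}) = g2 ⟨v, h⟩ from rfl, hfg2]
  have hffne : ∀ v, f (f v) ≠ v := by
    intro v
    rcases hcover v with h | h
    · rw [hfs v h, hfs _ (f1 ⟨v, h⟩).2,
        show (⟨↑(f1 ⟨v, h⟩), (f1 ⟨v, h⟩).2⟩ : {x // x ∈ s}) = f1 ⟨v, h⟩ from rfl]
      intro he
      exact hff1 ⟨v, h⟩ (Subtype.ext he)
    · rw [hft v h, hft _ (f2 ⟨v, h⟩).2,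
        show (⟨↑(f2 ⟨v, h⟩), (f2 ⟨v, h⟩).2⟩ : {x // x ∈ t}) = f2 ⟨v, h⟩ from rfl]
      intro he
      exact hff2 ⟨v, h⟩ (Subtype.ext he)
  have hadj : ∀ v, G.Adj v (f v) := by
    intro v
    rcases hcover v with h | h
    · rw [hfs v h]
      refine hsc v h _ (f1 ⟨v, h⟩).2 ?_
      intro he
      exact hne1 ⟨v, h⟩ (Subtype.ext he.symm)
    · rw [hft v h]
      refine htc v h _ (f2 ⟨v, h⟩).2 ?_
      intro he
      exact hne2 ⟨v, h⟩ (Subtype.ext he.symm)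
  -- the subgraph
  let F : G.Subgraph :=
  { verts := Set.univ
    Adj := fun x y => y = f x ∨ x = f y
    adj_sub := by
      rintro x y (rfl | rfl)
      · exact hadj x
      · exact (hadj y).symm
    edge_vert := fun _ => Set.mem_univ _
    symm := by constructor; rintro x y (rfl | rfl); exact Or.inr rfl; exact Or.inl rfl }
  have hFadj : ∀ x y, F.Adj x y ↔ (y = f x ∨ x = f y) := fun x y => Iff.rfl
  refine ⟨F, fun v => Set.mem_univ v, ?_, ?_⟩
  · intro v
    have hset : F.neighborSet v = {f v, g v} := by
      ext w
      simp only [Subgraph.mem_neighborSet, hFadj, Set.mem_insert_iff, Set.mem_singleton_iff]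
      constructor
      · rintro (rfl | rfl)
        · exact Or.inl rfl
        · exact Or.inr (hgf w).symm
      · rintro (rfl | rfl)
        · exact Or.inl rfl
        · exact Or.inr (hfg v).symm
    rw [hset]
    refine Set.ncard_pair ?_
    intro he
    exact hffne v (by rw [he, hfg])
  · -- component count
    have hreach1 : ∀ n : ℕ, F.coe.Reachable ⟨↑x0, Set.mem_univ _⟩ ⟨↑(f1^[n] x0), Set.mem_univ _⟩ := by
      intro n
      induction n with
      | zero => exact Reachable.refl _
      | succ n ih =>
        refine ih.trans (Adj.reachable ?_)
        show F.Adj ↑(f1^[n] x0) ↑(f1^[n+1] x0)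
        rw [Function.iterate_succ_apply']
        exact Or.inl (by rw [hfs _ (f1^[n] x0).2])
    have hreach2 : ∀ n : ℕ, F.coe.Reachable ⟨↑y0, Set.mem_univ _⟩ ⟨↑(f2^[n] y0), Set.mem_univ _⟩ := by
      intro n
      induction n with
      | zero => exact Reachable.refl _
      | succ n ih =>
        refine ih.trans (Adj.reachable ?_)
        show F.Adj ↑(f2^[n] y0) ↑(f2^[n+1] y0)
        rw [Function.iterate_succ_apply']
        exact Or.inl (by rw [hft _ (f2^[n] y0).2])
    have hsurj : Function.Surjective (fun b : Bool =>
        if b then F.coe.connectedComponentMk ⟨↑x0, Set.mem_univ _⟩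
        else F.coe.connectedComponentMk ⟨↑y0, Set.mem_univ _⟩) := by
      intro C
      refine ConnectedComponent.ind (fun w => ?_) C
      obtain ⟨v, hv⟩ := w
      rcases hcover v with h | h
      · refine ⟨true, ?_⟩
        simp only [if_pos]
        obtain ⟨n, hn⟩ := hsur1 ⟨v, h⟩
        apply ConnectedComponent.sound
        have := hreach1 n
        rw [hn] at this
        exact this
      · refine ⟨false, ?_⟩
        simp only [if_neg]
        obtain ⟨n, hn⟩ := hsur2 ⟨v, h⟩
        apply ConnectedComponent.sound
        have := hreach2 n
        rw [hn] at this
        exact this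
    have := Nat.card_le_card_of_surjective _ hsurj
    simpa using this

lemma no_indep_three [Fintype V] (G : SimpleGraph V) (halpha : _root_.indepNum G = 2)
    {x y z : V} (hxy : x ≠ y) (hxz : x ≠ z) (hyz : y ≠ z)
    (h1 : ¬ G.Adj x y) (h2 : ¬ G.Adj x z) (h3 : ¬ G.Adj y z) : False := by
  classical
  have hcard : ({x, y, z} : Finset V).card = 3 := by
    rw [Finset.card_insert_of_notMem (by simp [hxy, hxz]),
      Finset.card_insert_of_notMem (by simp [hyz]), Finset.card_singleton]
  have hmem : 3 ∈ {n : ℕ | ∃ s : Finset V,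
      (∀ a ∈ s, ∀ b ∈ s, a ≠ b → ¬ G.Adj a b) ∧ s.card = n} := by
    refine ⟨{x, y, z}, ?_, hcard⟩
    intro a ha b hb hab
    simp only [Finset.mem_insert, Finset.mem_singleton] at ha hb
    rcases ha with rfl | rfl | rfl <;> rcases hb with rfl | rfl | rfl <;>
      first
        | exact absurd rfl hab
        | assumption
        | exact fun h => h1 h.symm
        | exact fun h => h2 h.symm
        | exact fun h => h3 h.symm
  have hbdd : BddAbove {n : ℕ | ∃ s : Finset V,
      (∀ a ∈ s, ∀ b ∈ s, a ≠ b → ¬ G.Adj a b) ∧ s.card = n} := by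
    refine ⟨Fintype.card V, ?_⟩
    rintro n ⟨s, -, rfl⟩
    exact s.card_le_univ
  have := le_csSup hbdd hmem
  rw [show sSup {n : ℕ | ∃ s : Finset V,
      (∀ a ∈ s, ∀ b ∈ s, a ≠ b → ¬ G.Adj a b) ∧ s.card = n} = _root_.indepNum G from rfl, halpha] at this
  omega


lemma exists_cutvertex [Fintype V] (G : SimpleGraph V)
    (horder : 6 ≤ Fintype.card V) (hkappa : vertexConnectivity G = 1) :
    ∃ c : V, ¬ (G.induce ({c} : Set V)ᶜ).Connected := by
  classical
  have hne : {k : ℕ | ∃ S : Finset V, S.card = k ∧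
      (¬ (G.induce ((S : Set V)ᶜ)).Connected ∨ Fintype.card V ≤ S.card + 1)}.Nonempty := by
    refine ⟨Fintype.card V, Finset.univ, Finset.card_univ, Or.inr ?_⟩
    rw [Finset.card_univ]
    omega
  have h1 : 1 ∈ {k : ℕ | ∃ S : Finset V, S.card = k ∧
      (¬ (G.induce ((S : Set V)ᶜ)).Connected ∨ Fintype.card V ≤ S.card + 1)} := by
    have h := Nat.sInf_mem hne
    rwa [show sInf {k : ℕ | ∃ S : Finset V, S.card = k ∧
      (¬ (G.induce ((S : Set V)ᶜ)).Connected ∨ Fintype.card V ≤ S.card + 1)} =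
      vertexConnectivity G from rfl, hkappa] at h
  obtain ⟨S, hS1, hS2⟩ := h1
  obtain ⟨c, rfl⟩ := Finset.card_eq_one.mp hS1
  rcases hS2 with h | h
  · rw [Finset.coe_singleton] at h
    exact ⟨c, h⟩
  · rw [hS1] at h
    omega

lemma main_case [Fintype V] (G : SimpleGraph V)
    (horder : 6 ≤ Fintype.card V) (hno2f : ¬ HasTwoFactorAtMostTwo G)
    (c : V) (A B : Set V)
    (hpart : ∀ v : V, v = c ∨ v ∈ A ∨ v ∈ B)
    (hcA' : c ∉ A) (hcB' : c ∉ B) (hABd : ∀ v, ¬ (v ∈ A ∧ v ∈ B))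
    (hAcl : ∀ x ∈ A, ∀ y ∈ A, x ≠ y → G.Adj x y)
    (hBcl : ∀ x ∈ B, ∀ y ∈ B, x ≠ y → G.Adj x y)
    (hAB : ∀ v ∈ A, ∀ w ∈ B, ¬ G.Adj v w)
    (hcA : ∃ a ∈ A, G.Adj c a)
    (hdom : ∀ b ∈ B, G.Adj c b)
    (hBne : B.Nonempty) :
    InExceptionalClass G := by
  classical
  set sA := A.toFinset with hsA
  set sB := B.toFinset with hsB
  have hmemA : ∀ v, v ∈ sA ↔ v ∈ A := fun v => Set.mem_toFinset
  have hmemB : ∀ v, v ∈ sB ↔ v ∈ B := fun v => Set.mem_toFinset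
  -- cardinality
  have huniv : insert c (sA ∪ sB) = Finset.univ := by
    ext v
    simp only [Finset.mem_insert, Finset.mem_union, hmemA, hmemB, Finset.mem_univ, iff_true]
    exact hpart v
  have hcnot : c ∉ sA ∪ sB := by
    simp only [Finset.mem_union, hmemA, hmemB]
    rintro (h | h)
    exacts [hcA' h, hcB' h]
  have hdisjAB : Disjoint sA sB := by
    rw [Finset.disjoint_left]
    intro v hv hv'
    exact hABd v ⟨(hmemA v).mp hv, (hmemB v).mp hv'⟩
  have hcards : sA.card + sB.card + 1 = Fintype.card V := by
    have h1 : (insert c (sA ∪ sB)).card = (sA ∪ sB).card + 1 :=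
      Finset.card_insert_of_notMem hcnot
    have h2 : (sA ∪ sB).card = sA.card + sB.card := Finset.card_union_of_disjoint hdisjAB
    rw [huniv, Finset.card_univ] at h1
    omega
  obtain ⟨a0, ha0A, ha0adj⟩ := hcA
  have hsBne : sB.Nonempty := ⟨hBne.choose, (hmemB _).mpr hBne.choose_spec⟩
  have hsB1 : 1 ≤ sB.card := Finset.card_pos.mpr hsBne
  have hsA1 : 1 ≤ sA.card := Finset.card_pos.mpr ⟨a0, (hmemA a0).mpr ha0A⟩
  -- vertices not in {c, x} for x in the other side
  by_cases hb1 : sB.card = 1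
  · -- B = {v}
    obtain ⟨v, hv⟩ := Finset.card_eq_one.mp hb1
    have hvB : v ∈ B := (hmemB v).mp (hv ▸ Finset.mem_singleton_self v)
    have hBsingle : ∀ b ∈ B, b = v := by
      intro b hb
      have : b ∈ sB := (hmemB b).mpr hb
      rw [hv, Finset.mem_singleton] at this
      exact this
    have houtside : ∀ a : V, a ∉ ({c, v} : Set V) → a ∈ A := by
      intro a ha
      simp only [Set.mem_insert_iff, Set.mem_singleton_iff, not_or] at ha
      rcases hpart a with rfl | h | h
      · exact absurd rfl ha.1
      · exact h
      · exact absurd (hBsingle a h) ha.2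
    have hinside : ∀ a ∈ A, a ∉ ({c, v} : Set V) := by
      intro a ha
      simp only [Set.mem_insert_iff, Set.mem_singleton_iff, not_or]
      exact ⟨fun h => hcA' (h ▸ ha), fun h => hABd a ⟨ha, h ▸ hvB⟩⟩
    have hucv : c ≠ v := fun h => hcB' (h ▸ hvB)
    have hadjcv : G.Adj c v := hdom v hvB
    have hcliq : ∀ a b : V, a ∉ ({c, v} : Set V) → b ∉ ({c, v} : Set V) → a ≠ b → G.Adj a b :=
      fun a b ha hb hab => hAcl a (houtside a ha) b (houtside b hb) hab
    have hvnone : ∀ a : V, a ∉ ({c, v} : Set V) → ¬ G.Adj v a :=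
      fun a ha h => hAB a (houtside a ha) v hvB h.symm
    set NA := sA.filter (fun a => G.Adj c a) with hNA
    have hNAmem : ∀ a, a ∈ NA ↔ a ∈ A ∧ G.Adj c a := by
      intro a
      simp [hNA, Finset.mem_filter, hmemA]
    have hNAset : {a : V | a ∉ ({c, v} : Set V) ∧ G.Adj c a} = ↑NA := by
      ext a
      rw [Set.mem_setOf_eq, Finset.mem_coe, hNAmem]
      constructor
      · rintro ⟨ha, hadj⟩
        exact ⟨houtside a ha, hadj⟩
      · rintro ⟨ha, hadj⟩
        exact ⟨hinside a ha, hadj⟩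
    by_cases hNA2 : 2 ≤ NA.card
    · left
      refine ⟨c, v, hucv, hadjcv, hcliq, hvnone, ?_⟩
      rw [hNAset, Set.ncard_coe_finset]
      exact hNA2
    · right
      have hNAne : NA.Nonempty := ⟨a0, (hNAmem a0).mpr ⟨ha0A, ha0adj⟩⟩
      have hNAcard : NA.card = 1 := by
        have := Finset.card_pos.mpr hNAne
        omega
      obtain ⟨w, hw⟩ := Finset.card_eq_one.mp hNAcard
      have hwNA : w ∈ NA := hw ▸ Finset.mem_singleton_self w
      have hwA : w ∈ A := ((hNAmem w).mp hwNA).1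
      refine ⟨c, v, w, hucv, hinside w hwA, hadjcv, ((hNAmem w).mp hwNA).2, hcliq, hvnone, ?_⟩
      intro a ha hadj
      have : a ∈ NA := (hNAmem a).mpr ⟨houtside a ha, hadj⟩
      rw [hw, Finset.mem_singleton] at this
      exact this
  · -- sB.card ≥ 2
    have hsB2 : 2 ≤ sB.card := by omega
    by_cases ha1 : sA.card = 1
    · -- A = {w}, class (i) with u = c, v = w
      obtain ⟨w, hw⟩ := Finset.card_eq_one.mp ha1
      have hwA : w ∈ A := (hmemA w).mp (hw ▸ Finset.mem_singleton_self w)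
      have hAsingle : ∀ a ∈ A, a = w := by
        intro a ha
        have : a ∈ sA := (hmemA a).mpr ha
        rw [hw, Finset.mem_singleton] at this
        exact this
      have houtside : ∀ a : V, a ∉ ({c, w} : Set V) → a ∈ B := by
        intro a ha
        simp only [Set.mem_insert_iff, Set.mem_singleton_iff, not_or] at ha
        rcases hpart a with rfl | h | h
        · exact absurd rfl ha.1
        · exact absurd (hAsingle a h) ha.2
        · exact h
      have hinside : ∀ b ∈ B, b ∉ ({c, w} : Set V) := by
        intro b hb
        simp only [Set.mem_insert_iff, Set.mem_singleton_iff, not_or]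
        exact ⟨fun h => hcB' (h ▸ hb), fun h => hABd w ⟨hwA, h ▸ hb⟩⟩
      have hucw : c ≠ w := fun h => hcA' (h ▸ hwA)
      have hadjcw : G.Adj c w := by
        have := hAsingle a0 ha0A
        exact this ▸ ha0adj
      left
      refine ⟨c, w, hucw, hadjcw, ?_, ?_, ?_⟩
      · intro a b ha hb hab
        exact hBcl a (houtside a ha) b (houtside b hb) hab
      · intro a ha h
        exact hAB w hwA a (houtside a ha) h
      · have : {a : V | a ∉ ({c, w} : Set V) ∧ G.Adj c a} = B := by
          ext a
          simp only [Set.mem_setOf_eq]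
          constructor
          · rintro ⟨ha, -⟩
            exact houtside a ha
          · intro ha
            exact ⟨hinside a ha, hdom a ha⟩
        rw [this, Set.ncard_eq_toFinset_card']
        exact hsB2
    · by_cases ha2 : sA.card = 2
      · -- A = {u1, u2}
        have hBig : 3 ≤ sB.card := by omega
        obtain ⟨x1, x2, hx12, hx⟩ := Finset.card_eq_two.mp ha2
        have ha0mem : a0 ∈ sA := (hmemA a0).mpr ha0A
        have hpair : ∃ u1 u2 : V, u1 ≠ u2 ∧ sA = {u1, u2} ∧ G.Adj c u1 := by
          rw [hx, Finset.mem_insert, Finset.mem_singleton] at ha0mem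
          rcases ha0mem with rfl | rfl
          · exact ⟨a0, x2, hx12, hx, ha0adj⟩
          · exact ⟨a0, x1, hx12.symm, hx.trans (Finset.pair_comm x1 a0), ha0adj⟩
        obtain ⟨u1, u2, hu12, hupair, hadj1⟩ := hpair
        have hu1A : u1 ∈ A := (hmemA u1).mp (hupair ▸ Finset.mem_insert_self u1 {u2})
        have hu2A : u2 ∈ A :=
          (hmemA u2).mp (hupair ▸ Finset.mem_insert_of_mem (Finset.mem_singleton_self u2))
        by_cases h2 : G.Adj c u2
        · -- two-factor: {c, u1, u2} and B — contradiction
          exfalso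
          apply hno2f
          have hadjc : ∀ z ∈ sA, G.Adj c z := by
            intro z hz
            rw [hupair, Finset.mem_insert, Finset.mem_singleton] at hz
            rcases hz with rfl | rfl
            exacts [hadj1, h2]
          refine exists_twoFactor G (insert c sA) sB ?_ ?_ ?_ hBig ?_ ?_
          · intro v ⟨hv1, hv2⟩
            rw [Finset.mem_insert] at hv1
            rcases hv1 with rfl | hv1
            · exact hcB' ((hmemB v).mp hv2)
            · exact hABd v ⟨(hmemA v).mp hv1, (hmemB v).mp hv2⟩
          · intro v
            rcases hpart v with rfl | h | h
            · exact Or.inl (Finset.mem_insert_self _ _)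
            · exact Or.inl (Finset.mem_insert_of_mem ((hmemA v).mpr h))
            · exact Or.inr ((hmemB v).mpr h)
          · rw [Finset.card_insert_of_notMem (fun h => hcA' ((hmemA c).mp h))]
            omega
          · intro x hx' y hy' hxy
            rw [Finset.mem_insert] at hx' hy'
            rcases hx' with rfl | hx' <;> rcases hy' with rfl | hy'
            · exact absurd rfl hxy
            · exact hadjc y hy'
            · exact (hadjc x hx').symm
            · exact hAcl x ((hmemA x).mp hx') y ((hmemA y).mp hy') hxy
          · intro x hx' y hy' hxy
            exact hBcl x ((hmemB x).mp hx') y ((hmemB y).mp hy') hxy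
        · -- class (ii) with u = u1, v = u2, w = c
          right
          have houts : ∀ a : V, a ∉ ({u1, u2} : Set V) → a = c ∨ a ∈ B := by
            intro a ha
            simp only [Set.mem_insert_iff, Set.mem_singleton_iff, not_or] at ha
            rcases hpart a with rfl | h | h
            · exact Or.inl rfl
            · exfalso
              have : a ∈ sA := (hmemA a).mpr h
              rw [hupair, Finset.mem_insert, Finset.mem_singleton] at this
              rcases this with rfl | rfl
              exacts [ha.1 rfl, ha.2 rfl]
            · exact Or.inr h
          refine ⟨u1, u2, c, hu12, ?_, hAcl u1 hu1A u2 hu2A hu12, hadj1.symm, ?_, ?_, ?_⟩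
          · simp only [Set.mem_insert_iff, Set.mem_singleton_iff, not_or]
            exact ⟨fun h => hcA' (h ▸ hu1A), fun h => hcA' (h ▸ hu2A)⟩
          · intro a b ha hb hab
            rcases houts a ha with rfl | ha' <;> rcases houts b hb with rfl | hb'
            · exact absurd rfl hab
            · exact hdom b hb'
            · exact (hdom a ha').symm
            · exact hBcl a ha' b hb' hab
          · intro a ha h
            rcases houts a ha with rfl | ha'
            · exact h2 h.symm
            · exact hAB u2 hu2A a ha' h
          · intro a ha h
            rcases houts a ha with rfl | ha'
            · rfl
            · exact absurd h (hAB u1 hu1A a ha')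
      · -- sA.card ≥ 3 : two-factor A and B ∪ {c} — contradiction
        exfalso
        apply hno2f
        refine exists_twoFactor G sA (insert c sB) ?_ ?_ (by omega) ?_ ?_ ?_
        · intro v ⟨hv1, hv2⟩
          rw [Finset.mem_insert] at hv2
          rcases hv2 with rfl | hv2
          · exact hcA' ((hmemA v).mp hv1)
          · exact hABd v ⟨(hmemA v).mp hv1, (hmemB v).mp hv2⟩
        · intro v
          rcases hpart v with rfl | h | h
          · exact Or.inr (Finset.mem_insert_self _ _)
          · exact Or.inl ((hmemA v).mpr h)
          · exact Or.inr (Finset.mem_insert_of_mem ((hmemB v).mpr h))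
        · rw [Finset.card_insert_of_notMem (fun h => hcB' ((hmemB c).mp h))]
          omega
        · intro x hx' y hy' hxy
          exact hAcl x ((hmemA x).mp hx') y ((hmemA y).mp hy') hxy
        · intro x hx' y hy' hxy
          rw [Finset.mem_insert] at hx' hy'
          rcases hx' with rfl | hx' <;> rcases hy' with rfl | hy'
          · exact absurd rfl hxy
          · exact hdom y ((hmemB y).mp hy')
          · exact (hdom x ((hmemB x).mp hx')).symm
          · exact hBcl x ((hmemB x).mp hx') y ((hmemB y).mp hy') hxy

theorem statement6 [Fintype V] (G : SimpleGraph V) (hconn : G.Connected)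
    (horder : 6 ≤ Fintype.card V)
    (hkappa : vertexConnectivity G = 1) (halpha : _root_.indepNum G = 2)
    (hno2f : ¬ HasTwoFactorAtMostTwo G) :
    InExceptionalClass G := by
  classical
  obtain ⟨c, hc⟩ := exists_cutvertex G horder hkappa
  set T : Set V := ({c} : Set V)ᶜ with hT
  have hmemT : ∀ v : V, v ∈ T ↔ v ≠ c := fun v => Set.mem_compl_singleton_iff
  have hTne : Nonempty ↥T := by
    obtain ⟨b, hb⟩ := Fintype.exists_ne_of_one_lt_card (by omega) c
    exact ⟨⟨b, (hmemT b).mpr hb⟩⟩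
  have hnp : ∃ x y : ↥T, ¬ (G.induce T).Reachable x y := by
    by_contra hall
    push_neg at hall
    haveI := hTne
    exact hc (Connected.mk (fun u v => hall u v))
  obtain ⟨xb, yb, hnr⟩ := hnp
  set A : Set V := {v | ∃ h : v ∈ T, (G.induce T).Reachable xb ⟨v, h⟩} with hA
  set B : Set V := {v | v ∈ T ∧ v ∉ A} with hB
  have hAsub : ∀ v ∈ A, v ∈ T := by
    rintro v ⟨h, -⟩
    exact h
  have hxA : ↑xb ∈ A := ⟨xb.2, Reachable.refl xb⟩
  have hyB : ↑yb ∈ B := ⟨yb.2, fun hy => hnr hy.choose_spec⟩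
  have hcross : ∀ v ∈ A, ∀ w, w ∈ T → G.Adj v w → w ∈ A := by
    rintro v ⟨hv, hr⟩ w hw hadj
    exact ⟨hw, hr.trans (Adj.reachable (by exact hadj : (G.induce T).Adj ⟨v, hv⟩ ⟨w, hw⟩))⟩
  have hAB : ∀ v ∈ A, ∀ w ∈ B, ¬ G.Adj v w := by
    intro v hv w hw hadj
    exact hw.2 (hcross v hv w hw.1 hadj)
  have hcA' : c ∉ A := fun h => ((hmemT c).mp (hAsub c h)) rfl
  have hcB' : c ∉ B := fun h => ((hmemT c).mp h.1) rfl
  have hABd : ∀ v, ¬ (v ∈ A ∧ v ∈ B) := fun v h => h.2.2 h.1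
  have hpart : ∀ v : V, v = c ∨ v ∈ A ∨ v ∈ B := by
    intro v
    by_cases hvc : v = c
    · exact Or.inl hvc
    · by_cases hvA : v ∈ A
      · exact Or.inr (Or.inl hvA)
      · exact Or.inr (Or.inr ⟨(hmemT v).mpr hvc, hvA⟩)
  have hAcl : ∀ x ∈ A, ∀ y ∈ A, x ≠ y → G.Adj x y := by
    intro x hx y hy hxy
    by_contra hadj
    exact no_indep_three G halpha hxy
      (fun h => hABd x ⟨hx, h ▸ hyB⟩) (fun h => hABd y ⟨hy, h ▸ hyB⟩)
      hadj (hAB x hx _ hyB) (hAB y hy _ hyB)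
  have hBcl : ∀ x ∈ B, ∀ y ∈ B, x ≠ y → G.Adj x y := by
    intro x hx y hy hxy
    by_contra hadj
    exact no_indep_three G halpha hxy
      (fun h => hABd x ⟨h ▸ hxA, hx⟩) (fun h => hABd y ⟨h ▸ hxA, hy⟩)
      hadj (fun h => hAB _ hxA x hx h.symm) (fun h => hAB _ hxA y hy h.symm)
  have hclosure : ∀ (S : Set V), (∀ v ∈ S, ∀ w, G.Adj v w → w ∈ S) →
      ∀ {u w : V}, G.Walk u w → u ∈ S → w ∈ S := by
    intro S hS u w p
    induction p with
    | nil => exact id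
    | cons h p ih => exact fun hu => ih (hS _ hu _ h)
  have hcA : ∃ a ∈ A, G.Adj c a := by
    by_contra hno
    push_neg at hno
    have hclosed : ∀ v ∈ A, ∀ w, G.Adj v w → w ∈ A := by
      intro v hv w hadj
      by_cases hwc : w = c
      · exact absurd (hwc ▸ hadj).symm (hno v hv)
      · exact hcross v hv w ((hmemT w).mpr hwc) hadj
    obtain ⟨p⟩ := hconn.preconnected ↑xb c
    exact hcA' (hclosure A hclosed p hxA)
  have hcB : ∃ b ∈ B, G.Adj c b := by
    by_contra hno
    push_neg at hno
    have hclosed : ∀ v ∈ B, ∀ w, G.Adj v w → w ∈ B := by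
      intro v hv w hadj
      by_cases hwc : w = c
      · exact absurd (hwc ▸ hadj).symm (hno v hv)
      · rcases hpart w with rfl | h | h
        · exact absurd rfl hwc
        · exact absurd hadj.symm (hAB w h v hv)
        · exact h
    obtain ⟨p⟩ := hconn.preconnected ↑yb c
    exact hcB' (hclosure B hclosed p hyB)
  by_cases hdomB : ∀ b ∈ B, G.Adj c b
  · exact main_case G horder hno2f c A B hpart hcA' hcB' hABd hAcl hBcl hAB hcA hdomB ⟨_, hyB⟩
  · push_neg at hdomB
    obtain ⟨b0, hb0B, hb0⟩ := hdomB
    have hdomA : ∀ a ∈ A, G.Adj c a := by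
      intro a ha
      by_contra hna
      exact no_indep_three G halpha (x := c) (y := a) (z := b0) (fun h => hcA' (h ▸ ha)) (fun h => hcB' (h ▸ hb0B))
        (fun h => hABd a ⟨ha, h ▸ hb0B⟩) hna hb0 (hAB a ha b0 hb0B)
    refine main_case G horder hno2f c B A ?_ hcB' hcA' ?_ hBcl hAcl ?_ hcB hdomA ⟨_, hxA⟩
    · intro v
      rcases hpart v with h | h | h
      exacts [Or.inl h, Or.inr (Or.inr h), Or.inr (Or.inl h)]
    · exact fun v h => hABd v ⟨h.2, h.1⟩
    · exact fun v hv w hw h => hAB w hw v hv h.symm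
end

section
/- Let G be a simple graph, let k ≥ 2, and let H be an induced subgraph of G that is a complete graph on 1 or 2 vertices such that every vertex of H has degree at least k in G and such that the set U of vertices of G outside V(H) having a neighbor in V(H) satisfies |U| = k and contains all neighbors of V(H) outside V(H). Then for any two distinct vertices u_i, u_j ∈ U there is a path in G from u_i to u_j whose set of internal vertices is exactly V(H). -/
open SimpleGraph

variable {V : Type*}

lemma path3aux {G : SimpleGraph V} {a b u w : V} (hab : G.Adj a b) (hau : G.Adj a u)
    (hbw : G.Adj b w) (hua : u ≠ a) (hub : u ≠ b) (hwa : w ≠ a) (hwb : w ≠ b) (huw : u ≠ w) :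
    ∃ p : G.Walk u w, p.IsPath ∧ {x : V | x ∈ p.support ∧ x ≠ u ∧ x ≠ w} = {a, b} := by
  refine ⟨Walk.cons hau.symm (Walk.cons hab (Walk.cons hbw Walk.nil)), ?_, ?_⟩
  · simp [Walk.cons_isPath_iff, hua, hub, huw, hwa.symm, hwb.symm, hab.ne]
  · ext x
    simp only [Walk.support_cons, Walk.support_nil, List.mem_cons, List.mem_singleton,
      Set.mem_setOf_eq, Set.mem_insert_iff, Set.mem_singleton_iff]
    constructor
    · rintro ⟨h1, h2, h3⟩; tauto
    · rintro (rfl | rfl)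
      · exact ⟨by tauto, hua.symm, hwa.symm⟩
      · exact ⟨by tauto, hub.symm, hwb.symm⟩

-- degree lemma: in the 2-vertex case, b cannot miss both u and w
lemma degaux [Fintype V] {G : SimpleGraph V} {k : ℕ} (hk : 2 ≤ k) {a b u w : V}
    {U : Set V} (hUcard : U.ncard = k) (huU : u ∈ U) (hwU : w ∈ U) (huw : u ≠ w)
    (haU : a ∉ U)
    (hnbr : G.neighborSet b ⊆ insert a U)
    (hdegb : k ≤ (G.neighborSet b).ncard)
    (hbu : ¬ G.Adj b u) (hbw : ¬ G.Adj b w) : False := by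
  have hsub : G.neighborSet b ⊆ insert a (U \ {u, w}) := by
    intro x hx
    rcases hnbr hx with rfl | hxU
    · exact Set.mem_insert _ _
    · refine Set.mem_insert_of_mem _ ⟨hxU, ?_⟩
      rintro (rfl | rfl)
      · exact hbu hx
      · exact hbw hx
  have h1 : (G.neighborSet b).ncard ≤ (insert a (U \ {u, w})).ncard :=
    Set.ncard_le_ncard hsub (Set.toFinite _)
  have h2 : (insert a (U \ {u, w})).ncard ≤ (U \ {u, w}).ncard + 1 :=
    Set.ncard_insert_le _ _
  have h3 : (U \ {u, w}).ncard = U.ncard - ({u, w} : Set V).ncard := by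
    apply Set.ncard_diff
    · rintro x (rfl | rfl)
      · exact huU
      · exact hwU
    · exact Set.toFinite _
  have h4 : ({u, w} : Set V).ncard = 2 := Set.ncard_pair huw
  omega

theorem statement7 [Fintype V] (G : SimpleGraph V) (k : ℕ) (hk : 2 ≤ k)
    -- `S` is the vertex set of the induced subgraph `H`, a complete graph on 1 or 2 vertices
    (S : Set V) (hSne : S.Nonempty) (hScard : S.ncard ≤ 2)
    (hSclique : ∀ x ∈ S, ∀ y ∈ S, x ≠ y → G.Adj x y)
    -- every vertex of `H` has degree at least `k` in `G`
    (hdeg : ∀ x ∈ S, k ≤ (G.neighborSet x).ncard)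
    -- `U` is the set of all vertices outside `V(H)` having a neighbour in `V(H)`, and `|U| = k`
    (U : Set V) (hU : U = {v : V | v ∉ S ∧ ∃ x ∈ S, G.Adj x v})
    (hUcard : U.ncard = k) :
    ∀ u ∈ U, ∀ w ∈ U, u ≠ w →
      ∃ p : G.Walk u w, p.IsPath ∧ {x : V | x ∈ p.support ∧ x ≠ u ∧ x ≠ w} = S := by
  intro u huU w hwU huw
  have hSfin : S.Finite := Set.toFinite _
  have hUS : ∀ v ∈ U, v ∉ S := by intro v hv; rw [hU] at hv; exact hv.1
  have hSU : ∀ v ∈ S, v ∉ U := fun v hv hvU => hUS v hvU hv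
  have hSne' : 1 ≤ S.ncard := (Set.ncard_pos (Set.toFinite _)).mpr hSne
  interval_cases h : S.ncard
  · -- |S| = 1
    obtain ⟨a, rfl⟩ := Set.ncard_eq_one.mp h
    have hau : G.Adj a u := by
      have := (hU ▸ huU).2; obtain ⟨x, hx, hxu⟩ := this
      rw [Set.mem_singleton_iff] at hx; exact hx ▸ hxu
    have haw : G.Adj a w := by
      have := (hU ▸ hwU).2; obtain ⟨x, hx, hxw⟩ := this
      rw [Set.mem_singleton_iff] at hx; exact hx ▸ hxw
    have hua : u ≠ a := fun e => hUS u huU (e ▸ rfl)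
    have hwa : w ≠ a := fun e => hUS w hwU (e ▸ rfl)
    refine ⟨Walk.cons hau.symm (Walk.cons haw Walk.nil), ?_, ?_⟩
    · simp [Walk.cons_isPath_iff, hua, hwa.symm, huw]
    · ext x
      simp only [Walk.support_cons, Walk.support_nil, List.mem_cons, List.mem_singleton,
        Set.mem_setOf_eq, Set.mem_singleton_iff]
      constructor
      · rintro ⟨h1, h2, h3⟩; tauto
      · rintro rfl; exact ⟨by tauto, hua.symm, hwa.symm⟩
  · -- |S| = 2
    obtain ⟨a, b, hab, rfl⟩ := Set.ncard_eq_two.mp h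
    have hadj : G.Adj a b := hSclique a (by simp) b (by simp) hab
    have hua : u ≠ a := fun e => hUS u huU (by simp [e])
    have hub : u ≠ b := fun e => hUS u huU (by simp [e])
    have hwa : w ≠ a := fun e => hUS w hwU (by simp [e])
    have hwb : w ≠ b := fun e => hUS w hwU (by simp [e])
    have haU : a ∉ U := hSU a (by simp)
    have hbU : b ∉ U := hSU b (by simp)
    have hnbrB : G.neighborSet b ⊆ insert a U := by
      intro x hx
      by_cases hxS : x ∈ ({a, b} : Set V)
      · rcases hxS with rfl | rfl
        · exact Set.mem_insert _ _
        · exact absurd hx (G.irrefl)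
      · exact Set.mem_insert_of_mem _ (hU ▸ ⟨hxS, b, by simp, hx⟩)
    have hnbrA : G.neighborSet a ⊆ insert b U := by
      intro x hx
      by_cases hxS : x ∈ ({a, b} : Set V)
      · rcases hxS with rfl | rfl
        · exact absurd hx (G.irrefl)
        · exact Set.mem_insert _ _
      · exact Set.mem_insert_of_mem _ (hU ▸ ⟨hxS, a, by simp, hx⟩)
    have hdegA : k ≤ (G.neighborSet a).ncard := hdeg a (by simp)
    have hdegB : k ≤ (G.neighborSet b).ncard := hdeg b (by simp)
    have hu' : G.Adj a u ∨ G.Adj b u := by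
      obtain ⟨x, hx, hxu⟩ := (hU ▸ huU).2
      rcases hx with rfl | rfl
      · exact Or.inl hxu
      · exact Or.inr hxu
    have hw' : G.Adj a w ∨ G.Adj b w := by
      obtain ⟨x, hx, hxw⟩ := (hU ▸ hwU).2
      rcases hx with rfl | rfl
      · exact Or.inl hxw
      · exact Or.inr hxw
    rcases hu' with hau | hbu <;> rcases hw' with haw | hbw
    · -- both adj a: need b adj to one of them
      by_cases hbw : G.Adj b w
      · exact path3aux hadj hau hbw hua hub hwa hwb huw
      · by_cases hbu : G.Adj b u
        · obtain ⟨p, hp, hs⟩ := path3aux hadj.symm hbu haw hub hua hwb hwa huw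
          exact ⟨p, hp, by rw [hs, Set.pair_comm]⟩
        · exact absurd (degaux hk hUcard huU hwU huw haU hnbrB hdegB hbu hbw) id
    · exact path3aux hadj hau hbw hua hub hwa hwb huw
    · obtain ⟨p, hp, hs⟩ := path3aux hadj.symm hbu haw hub hua hwb hwa huw
      exact ⟨p, hp, by rw [hs, Set.pair_comm]⟩
    · -- both adj b: need a adj to one of them
      by_cases hau : G.Adj a u
      · exact path3aux hadj hau hbw hua hub hwa hwb huw
      · by_cases haw : G.Adj a w
        · obtain ⟨p, hp, hs⟩ := path3aux hadj.symm hbu haw hub hua hwb hwa huw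
          exact ⟨p, hp, by rw [hs, Set.pair_comm]⟩
        · exact absurd (degaux hk hUcard huU hwU huw hbU hnbrA hdegA hau haw) id
end

section
/- Under the Case-2 Setup, if t_i ≥ 3 for some index i, then u_i^+ u_j^- is not an edge of G for any index j ∈ {1,…,k} with j ≠ i. -/
open SimpleGraph

variable {V : Type*}

lemma mindeg_aux [Fintype V] [DecidableEq V] (G : SimpleGraph V) [DecidableRel G.Adj] (k : ℕ)
    (hconn : vertexConnectivity G = k) (hcard : k + 2 ≤ Fintype.card V) :
    ∀ v : V, k ≤ G.degree v := by
  intro v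
  by_contra hlt
  push_neg at hlt
  set S := G.neighborFinset v with hS
  have hvS : v ∉ S := by simp [hS]
  have hdeg : S.card = G.degree v := rfl
  have hccard : Sᶜ.card = Fintype.card V - S.card := Finset.card_compl S
  obtain ⟨w, hwmem, hwv⟩ := Finset.exists_mem_ne (s := Sᶜ) (by omega) v
  have hnotconn : ¬ (G.induce ((S : Set V)ᶜ)).Connected := by
    intro hcon
    have hvmem : v ∈ ((S : Set V)ᶜ) := by simpa using hvS
    have hwmem' : w ∈ ((S : Set V)ᶜ) := by simpa using hwmem
    have hreach := hcon.preconnected ⟨v, hvmem⟩ ⟨w, hwmem'⟩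
    obtain ⟨p⟩ := hreach
    have hnil : ¬ p.Nil := SimpleGraph.Walk.not_nil_of_ne (by
      intro h
      exact hwv (congrArg Subtype.val h).symm)
    have hadj := SimpleGraph.Walk.adj_snd hnil
    have h1 : G.Adj v ((p.getVert 1)).val := by simpa using hadj
    have h2 : ((p.getVert 1)).val ∈ S := by simp [hS, h1]
    have h3 := (p.getVert 1).property
    rw [Set.mem_compl_iff, Finset.mem_coe] at h3
    exact h3 h2
  have hmem : G.degree v ∈ {k : ℕ | ∃ S : Finset V, S.card = k ∧
      (¬ (G.induce ((S : Set V)ᶜ)).Connected ∨ Fintype.card V ≤ S.card + 1)} :=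
    ⟨S, hdeg, Or.inl hnotconn⟩
  have := Nat.sInf_le hmem
  rw [← vertexConnectivity] at this
  omega
lemma twofactor_aux [Fintype V] (G : SimpleGraph V) (m d : ℕ) (hd4 : 4 ≤ d) (hdm : d + 1 ≤ m)
    (c : ZMod m → V) (hcinj : Function.Injective c)
    (hcadj : ∀ i : ZMod m, G.Adj (c i) (c (i + 1)))
    (p : ZMod m) (x y : V) (hxr : x ∉ Set.range c) (hyr : y ∉ Set.range c)
    (hxp : G.Adj x (c p)) (hyq : G.Adj y (c (p + (d : ℕ))))
    (hxy : x = y ∨ G.Adj x y)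
    (hcover : ∀ v : V, v ∈ Set.range c ∨ v = x ∨ v = y)
    (hchord : G.Adj (c (p + ((1:ℕ) : ZMod m))) (c (p + ((d - 1 : ℕ) : ZMod m)))) :
    HasTwoFactorAtMostTwo G := by
  classical
  haveI : NeZero m := ⟨by omega⟩
  haveI : Nonempty V := ⟨x⟩
  -- basic equalities/disequalities between cycle vertices given by offsets
  have heq : ∀ s s' : ℕ, c (p + (s : ℕ)) = c (p + (s' : ℕ)) ↔ s % m = s' % m := by
    intro s s'
    constructor
    · intro h
      have h3 : ((s : ZMod m)) = (s' : ZMod m) := add_left_cancel (hcinj h)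
      have := congrArg ZMod.val h3
      simpa [ZMod.val_natCast] using this
    · intro h
      have h3 : ((s : ZMod m)) = (s' : ZMod m) := by
        rw [← ZMod.natCast_mod s m, ← ZMod.natCast_mod s' m, h]
      rw [h3]
  have hceq : ∀ s s' : ℕ, s = s' → c (p + (s : ℕ)) = c (p + (s' : ℕ)) := by
    intro s s' h; rw [h]
  have hceqm : ∀ s : ℕ, s = m → c (p + (s : ℕ)) = c (p + ((0:ℕ) : ZMod m)) := by
    intro s h; apply (heq s 0).2; simp [h]
  have hcne : ∀ s s' : ℕ, s < m → s' < m → s ≠ s' → c (p + (s : ℕ)) ≠ c (p + (s' : ℕ)) := by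
    intro s s' hs hs' hne hc
    have := (heq s s').1 hc
    rw [Nat.mod_eq_of_lt hs, Nat.mod_eq_of_lt hs'] at this
    exact hne this
  have hp0 : c (p + ((0:ℕ) : ZMod m)) = c p := by norm_num
  have hxc : ∀ r : ZMod m, x ≠ c r := fun r h => hxr ⟨_, h.symm⟩
  have hyc : ∀ r : ZMod m, y ≠ c r := fun r h => hyr ⟨_, h.symm⟩
  -- adjacency along the cycle in offset form
  have hadjoff : ∀ s : ℕ, G.Adj (c (p + (s : ℕ))) (c (p + ((s + 1 : ℕ) : ZMod m))) := by
    intro s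
    have h := hcadj (p + (s : ℕ))
    have h2 : c (p + ((s + 1 : ℕ) : ZMod m)) = c (p + (s : ℕ) + 1) := by push_cast; ring_nf
    rw [h2]; exact h
  -- the two designated neighbours of each vertex
  set nbp : ℕ → V × V := fun s =>
    if s = 0 then (c (p + ((m - 1 : ℕ) : ZMod m)), x)
    else if s = 1 then (c (p + ((d - 1 : ℕ) : ZMod m)), c (p + ((2:ℕ) : ZMod m)))
    else if s = d - 1 then (c (p + ((1:ℕ) : ZMod m)), c (p + ((d - 2 : ℕ) : ZMod m)))
    else if s = d then (y, c (p + ((d + 1 : ℕ) : ZMod m)))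
    else (c (p + ((s - 1 : ℕ) : ZMod m)), c (p + ((s + 1 : ℕ) : ZMod m))) with hnbp
  set nb : V → V × V := fun v =>
    if v = x then (if x = y then (c p, c (p + (d : ℕ))) else (c p, y))
    else if v = y then (x, c (p + (d : ℕ)))
    else nbp ((Function.invFun c v - p).val) with hnb
  have e0 : nbp 0 = (c (p + ((m - 1 : ℕ) : ZMod m)), x) := by simp [hnbp]
  have e1 : nbp 1 = (c (p + ((d - 1 : ℕ) : ZMod m)), c (p + ((2:ℕ) : ZMod m))) := by
    norm_num [hnbp]
  have ed1 : nbp (d - 1) = (c (p + ((1:ℕ) : ZMod m)), c (p + ((d - 2 : ℕ) : ZMod m))) := by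
    have h1 : d - 1 ≠ 0 := by omega
    have h2 : d - 1 ≠ 1 := by omega
    simp [hnbp, h1, h2]
  have ed : nbp d = (y, c (p + ((d + 1 : ℕ) : ZMod m))) := by
    have h1 : d ≠ 0 := by omega
    have h2 : d ≠ 1 := by omega
    have h3 : d ≠ d - 1 := by omega
    simp [hnbp, h1, h2, h3]
  have ee : ∀ s : ℕ, s ≠ 0 → s ≠ 1 → s ≠ d - 1 → s ≠ d →
      nbp s = (c (p + ((s - 1 : ℕ) : ZMod m)), c (p + ((s + 1 : ℕ) : ZMod m))) := by
    intro s h1 h2 h3 h4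
    simp [hnbp, h1, h2, h3, h4]
  have enx : nb x = (if x = y then (c p, c (p + (d : ℕ))) else (c p, y)) := by
    simp [hnb]
  have eny : x ≠ y → nb y = (x, c (p + (d : ℕ))) := by
    intro h
    simp [hnb, Ne.symm h]
  have enc : ∀ s : ℕ, s < m → nb (c (p + (s : ℕ))) = nbp s := by
    intro s hs
    have h1 : c (p + (s : ℕ)) ≠ x := (hxc _).symm
    have h2 : c (p + (s : ℕ)) ≠ y := (hyc _).symm
    have h3 : Function.invFun c (c (p + (s : ℕ))) = p + (s : ℕ) :=
      Function.leftInverse_invFun hcinj _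
    simp only [hnb, if_neg h1, if_neg h2, h3]
    congr 1
    rw [add_sub_cancel_left, ZMod.val_natCast, Nat.mod_eq_of_lt hs]
  -- every vertex of the cycle is of the form c (p + s), s < m
  have hform : ∀ v : V, v ∈ Set.range c → ∃ s : ℕ, s < m ∧ v = c (p + (s : ℕ)) := by
    rintro v ⟨r, rfl⟩
    refine ⟨(r - p).val, ZMod.val_lt _, ?_⟩
    congr
    have : (((r - p).val : ℕ) : ZMod m) = r - p := by
      simp [ZMod.natCast_val, ZMod.cast_id]
    rw [this]; ring
  -- L1 : both designated neighbours are真 neighbours in G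
  have hL1 : ∀ v : V, G.Adj v (nb v).1 ∧ G.Adj v (nb v).2 := by
    intro v
    rcases hcover v with hv | hv | hv
    · obtain ⟨s, hs, rfl⟩ := hform v hv
      rw [enc s hs]
      by_cases h0 : s = 0
      · subst h0
        rw [e0]
        constructor
        · have h := (hadjoff (m - 1)).symm
          rw [hceqm (m - 1 + 1) (by omega), hp0] at h
          rw [hp0]; exact h
        · rw [hp0]; exact hxp.symm
      by_cases h1 : s = 1
      · subst h1
        rw [e1]
        exact ⟨hchord, by have := hadjoff 1; exact (by exact this : _)⟩
      by_cases hd1 : s = d - 1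
      · subst hd1
        rw [ed1]
        constructor
        · exact hchord.symm
        · have h := (hadjoff (d - 2)).symm
          rw [hceq (d - 2 + 1) (d - 1) (by omega)] at h
          exact h
      by_cases hdd : s = d
      · rw [hdd, ed]
        exact ⟨hyq.symm, hadjoff d⟩
      · rw [ee s h0 h1 hd1 hdd]
        constructor
        · have h := (hadjoff (s - 1)).symm
          rw [hceq (s - 1 + 1) s (by omega)] at h
          exact h
        · exact hadjoff s
    · rw [hv, enx]
      by_cases hxy' : x = y
      · rw [if_pos hxy']
        exact ⟨hxp, by rw [hxy']; exact hyq⟩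
      · rw [if_neg hxy']
        exact ⟨hxp, hxy.resolve_left hxy'⟩
    · rw [hv]
      by_cases hxy' : x = y
      · rw [← hxy', enx, if_pos hxy']
        exact ⟨hxp, by rw [hxy']; exact hyq⟩
      · rw [eny hxy']
        exact ⟨(hxy.resolve_left hxy').symm, hyq⟩
  -- L2 : the two designated neighbours are distinct
  have hL2 : ∀ v : V, (nb v).1 ≠ (nb v).2 := by
    intro v
    rcases hcover v with hv | hv | hv
    · obtain ⟨s, hs, rfl⟩ := hform v hv
      rw [enc s hs]
      by_cases h0 : s = 0
      · rw [h0, e0]; exact (hxc _).symm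
      by_cases h1 : s = 1
      · rw [h1, e1]; exact hcne (d-1) 2 (by omega) (by omega) (by omega)
      by_cases hd1 : s = d - 1
      · rw [hd1, ed1]; exact hcne 1 (d-2) (by omega) (by omega) (by omega)
      by_cases hdd : s = d
      · rw [hdd, ed]; exact hyc _
      · rw [ee s h0 h1 hd1 hdd]
        by_cases hsm : s + 1 = m
        · rw [hceqm (s+1) hsm]
          exact hcne (s-1) 0 (by omega) (by omega) (by omega)
        · exact hcne (s-1) (s+1) (by omega) (by omega) (by omega)
    · rw [hv, enx]
      by_cases hxy' : x = y
      · rw [if_pos hxy']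
        rw [← hp0]
        exact hcne 0 d (by omega) (by omega) (by omega)
      · rw [if_neg hxy']
        exact (hyc p).symm
    · rw [hv]
      by_cases hxy' : x = y
      · rw [← hxy', enx, if_pos hxy', ← hp0]
        exact hcne 0 d (by omega) (by omega) (by omega)
      · rw [eny hxy']
        exact hxc _
  -- symmetry of the designated-neighbour relation
  have hsymm : ∀ u w : V, (w = (nb u).1 ∨ w = (nb u).2) → (u = (nb w).1 ∨ u = (nb w).2) := by
    intro u w h
    rcases hcover u with hu | hu | hu
    · obtain ⟨s, hs, rfl⟩ := hform u hu
      rw [enc s hs] at h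
      by_cases h0 : s = 0
      · rw [h0] at h ⊢
        rw [e0] at h
        rcases h with hw | hw
        · rw [hw, enc (m-1) (by omega)]
          by_cases hcase : d = m - 1
          · rw [show m - 1 = d from hcase.symm, ed]
            right
            rw [hp0]
            exact ((hceqm (d+1) (by omega)).trans hp0).symm
          · rw [ee (m-1) (by omega) (by omega) (by omega) (by omega)]
            right
            rw [hp0]
            exact ((hceqm (m-1+1) (by omega)).trans hp0).symm
        · rw [hw, enx]
          by_cases hxy' : x = y
          · rw [if_pos hxy']; left; exact hp0
          · rw [if_neg hxy']; left; exact hp0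
      by_cases h1 : s = 1
      · rw [h1] at h ⊢
        rw [e1] at h
        rcases h with hw | hw
        · rw [hw, enc (d-1) (by omega), ed1]
          left; rfl
        · rw [hw, enc 2 (by omega),
             ee 2 (by omega) (by omega) (by omega) (by omega)]
          left
          exact hceq 1 (2-1) (by omega)
      by_cases hd1 : s = d - 1
      · rw [hd1] at h ⊢
        rw [ed1] at h
        rcases h with hw | hw
        · rw [hw, enc 1 (by omega), e1]
          left; rfl
        · rw [hw, enc (d-2) (by omega),
             ee (d-2) (by omega) (by omega) (by omega) (by omega)]
          right
          exact hceq (d-1) (d-2+1) (by omega)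
      by_cases hdd : s = d
      · rw [hdd] at h ⊢
        rw [ed] at h
        rcases h with hw | hw
        · rw [hw]
          by_cases hxy' : x = y
          · rw [← hxy', enx, if_pos hxy']; right; rfl
          · rw [eny hxy']; right; rfl
        · by_cases hdm1 : d + 1 = m
          · rw [hw, hceqm (d+1) hdm1, enc 0 (by omega), e0]
            left
            exact hceq d (m-1) (by omega)
          · rw [hw, enc (d+1) (by omega),
               ee (d+1) (by omega) (by omega) (by omega) (by omega)]
            left
            exact hceq d (d+1-1) (by omega)
      · rw [ee s h0 h1 hd1 hdd] at h
        rcases h with hw | hw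
        · by_cases hc1 : s - 1 = 1
          · rw [hw, enc (s-1) (by omega), hc1, e1]
            right
            exact hceq s 2 (by omega)
          by_cases hcd1 : s - 1 = d - 1
          · exact absurd (by omega : s = d) hdd
          by_cases hcd : s - 1 = d
          · rw [hw, enc (s-1) (by omega), hcd, ed]
            right
            exact hceq s (d+1) (by omega)
          · rw [hw, enc (s-1) (by omega),
               ee (s-1) (by omega) hc1 hcd1 hcd]
            right
            exact hceq s (s-1+1) (by omega)
        · by_cases hsm : s + 1 = m
          · rw [hw, hceqm (s+1) hsm, enc 0 (by omega), e0]
            left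
            exact hceq s (m-1) (by omega)
          by_cases hcd1 : s + 1 = d - 1
          · rw [hw, enc (s+1) (by omega), hcd1, ed1]
            right
            exact hceq s (d-2) (by omega)
          by_cases hcd : s + 1 = d
          · exact absurd (by omega : s = d - 1) hd1
          · rw [hw, enc (s+1) (by omega),
               ee (s+1) (by omega) (by omega) hcd1 hcd]
            left
            exact hceq s (s+1-1) (by omega)
    · rw [hu] at h ⊢
      rw [enx] at h
      by_cases hxy' : x = y
      · rw [if_pos hxy'] at h
        rcases h with hw | hw
        · rw [hw, ← hp0, enc 0 (by omega), e0]
          right; rfl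
        · rw [hw, enc d (by omega), ed]
          left; exact hxy'
      · rw [if_neg hxy'] at h
        rcases h with hw | hw
        · rw [hw, ← hp0, enc 0 (by omega), e0]
          right; rfl
        · rw [hw, eny hxy']
          left; rfl
    · rw [hu] at h ⊢
      by_cases hxy' : x = y
      · rw [← hxy', enx, if_pos hxy'] at h
        rcases h with hw | hw
        · rw [hw, ← hp0, enc 0 (by omega), e0]
          right; exact hxy'.symm
        · rw [hw, enc d (by omega), ed]
          left; rfl
      · rw [eny hxy'] at h
        rcases h with hw | hw
        · rw [hw, enx, if_neg hxy']
          right; rfl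
        · rw [hw, enc d (by omega), ed]
          left; rfl
  -- the 2-factor
  set F : G.Subgraph :=
    { verts := Set.univ
      Adj := fun u w => w = (nb u).1 ∨ w = (nb u).2
      adj_sub := by
        rintro u w (rfl | rfl)
        · exact (hL1 u).1
        · exact (hL1 u).2
      edge_vert := fun _ => Set.mem_univ _
      symm := ⟨fun u w h => hsymm u w h⟩ } with hF
  have hFadj : ∀ u w : V, (F.Adj u w) = (w = (nb u).1 ∨ w = (nb u).2) := fun u w => rfl
  refine ⟨F, fun v => Set.mem_univ _, ?_, ?_⟩
  · intro v
    have hset : F.neighborSet v = {(nb v).1, (nb v).2} := by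
      ext w
      simp only [SimpleGraph.Subgraph.mem_neighborSet, hFadj, Set.mem_insert_iff,
        Set.mem_singleton_iff]
    rw [hset]
    exact Set.ncard_pair (hL2 v)
  · -- at most two components
    have hedge : ∀ (u w : V), (w = (nb u).1 ∨ w = (nb u).2) →
        F.coe.Reachable ⟨u, Set.mem_univ u⟩ ⟨w, Set.mem_univ w⟩ := by
      intro u w h
      have : F.coe.Adj ⟨u, Set.mem_univ u⟩ ⟨w, Set.mem_univ w⟩ := by
        rw [SimpleGraph.Subgraph.coe_adj]
        exact h
      exact this.reachable
    have hRc : ∀ (r : ZMod m), (⟨c r, Set.mem_univ _⟩ : F.verts) = ⟨c r, Set.mem_univ _⟩ := fun _ => rfl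
    -- reachability along the first arc
    have hreach1 : ∀ s : ℕ, 1 ≤ s → s ≤ d - 1 →
        F.coe.Reachable ⟨c (p + ((1:ℕ) : ZMod m)), Set.mem_univ _⟩
          ⟨c (p + (s : ℕ)), Set.mem_univ _⟩ := by
      intro s
      induction s with
      | zero => omega
      | succ n ih =>
        intro h1 h2
        by_cases hn : n = 0
        · subst hn; exact Reachable.refl _
        · have hprev := ih (by omega) (by omega)
          refine hprev.trans (hedge _ _ ?_)
          by_cases hn1 : n = 1
          · rw [hn1, enc 1 (by omega), e1]
            right
            exact hceq (1+1) 2 (by omega)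
          · rw [enc n (by omega), ee n hn hn1 (by omega) (by omega)]
            right; rfl
    -- reachability along the second arc
    have hrx : F.coe.Reachable ⟨c p, Set.mem_univ _⟩ ⟨x, Set.mem_univ _⟩ := by
      apply hedge
      rw [← hp0, enc 0 (by omega), e0]
      right; rfl
    have hry : F.coe.Reachable ⟨c p, Set.mem_univ _⟩ ⟨y, Set.mem_univ _⟩ := by
      by_cases hxy' : x = y
      · rw [← hxy']; exact hrx
      · refine hrx.trans (hedge _ _ ?_)
        rw [enx, if_neg hxy']
        right; rfl
    have hreach2 : ∀ s : ℕ, d ≤ s → s ≤ m - 1 →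
        F.coe.Reachable ⟨c p, Set.mem_univ _⟩ ⟨c (p + (s : ℕ)), Set.mem_univ _⟩ := by
      intro s
      induction s with
      | zero => omega
      | succ n ih =>
        intro h1 h2
        by_cases hn : n + 1 = d
        · rw [hn]
          refine hry.trans (hedge _ _ ?_)
          by_cases hxy' : x = y
          · rw [← hxy', enx, if_pos hxy']; right; rfl
          · rw [eny hxy']; right; rfl
        · have hprev := ih (by omega) (by omega)
          refine hprev.trans (hedge _ _ ?_)
          by_cases hnd : n = d
          · rw [hnd, enc d (by omega), ed]
            right; rfl
          · rw [enc n (by omega), ee n (by omega) (by omega) (by omega) hnd]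
            right; rfl
    have hcov : ∀ v : V, F.coe.Reachable ⟨c (p + ((1:ℕ) : ZMod m)), Set.mem_univ _⟩ ⟨v, Set.mem_univ _⟩ ∨
        F.coe.Reachable ⟨c p, Set.mem_univ _⟩ ⟨v, Set.mem_univ _⟩ := by
      intro v
      rcases hcover v with hv | hv | hv
      · obtain ⟨s, hs, rfl⟩ := hform v hv
        by_cases h0 : s = 0
        · right; rw [h0, hp0]
        by_cases harc : s ≤ d - 1
        · left; exact hreach1 s (by omega) harc
        · right; exact hreach2 s (by omega) (by omega)
      · right; rw [hv]; exact hrx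
      · right; rw [hv]; exact hry
    have hsurj : Function.Surjective (fun b : Bool =>
        if b then F.coe.connectedComponentMk ⟨c (p + ((1:ℕ) : ZMod m)), Set.mem_univ _⟩
        else F.coe.connectedComponentMk ⟨c p, Set.mem_univ _⟩) := by
      intro comp
      obtain ⟨⟨v, hv⟩, rfl⟩ := comp.exists_rep
      rcases hcov v with h | h
      · exact ⟨true, ConnectedComponent.sound h⟩
      · exact ⟨false, ConnectedComponent.sound h⟩
    have hb := Nat.card_le_card_of_surjective _ hsurj
    simpa using hb

lemma zmod_sub_val (m : ℕ) [NeZero m] (u v : ZMod m) :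
    (v.val ≤ u.val ∧ (u - v).val = u.val - v.val) ∨
    (u.val < v.val ∧ (u - v).val = u.val + m - v.val) := by
  have hu : ((u.val : ℕ) : ZMod m) = u := by simp [ZMod.natCast_val, ZMod.cast_id]
  have hv : ((v.val : ℕ) : ZMod m) = v := by simp [ZMod.natCast_val, ZMod.cast_id]
  have hum := ZMod.val_lt u
  have hvm := ZMod.val_lt v
  rcases le_or_gt v.val u.val with h | h
  · left
    refine ⟨h, ?_⟩
    have h1 : u - v = ((u.val - v.val : ℕ) : ZMod m) := by
      rw [Nat.cast_sub h, hu, hv]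
    rw [h1, ZMod.val_cast_of_lt (by omega)]
  · right
    refine ⟨h, ?_⟩
    have h1 : u - v = ((u.val + m - v.val : ℕ) : ZMod m) := by
      rw [Nat.cast_sub (by omega), Nat.cast_add, ZMod.natCast_self, hu, hv, add_zero]
    rw [h1, ZMod.val_cast_of_lt (by omega)]

lemma next_aux (k m : ℕ) (hk : 2 ≤ k) [NeZero k] [NeZero m] (a : ZMod k → ZMod m)
    (hord : ∀ i j : ZMod k, i.val < j.val → (a i).val < (a j).val)
    (i l : ZMod k) (hl : l ≠ i) :
    (a (i + 1) - a i).val ≤ (a l - a i).val := by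
  have hvinj : ∀ b b' : ZMod k, b.val = b'.val → b = b' := by
    intro b b' h
    have hb : ((b.val : ℕ) : ZMod k) = b := by simp [ZMod.natCast_val, ZMod.cast_id]
    have hb' : ((b'.val : ℕ) : ZMod k) = b' := by simp [ZMod.natCast_val, ZMod.cast_id]
    rw [← hb, ← hb', h]
  have hik := ZMod.val_lt i
  have hlk := ZMod.val_lt l
  have hlvi : l.val ≠ i.val := fun h => hl (hvinj _ _ h)
  have hval1 : (i + 1).val = (i.val + 1) % k := by
    have h1 : (i + 1 : ZMod k) = ((i.val + 1 : ℕ) : ZMod k) := by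
      push_cast
      simp [ZMod.natCast_val, ZMod.cast_id]
    rw [h1, ZMod.val_natCast]
  by_cases hcase : i.val + 1 < k
  · have hv1 : (i + 1).val = i.val + 1 := by rw [hval1, Nat.mod_eq_of_lt hcase]
    have hlt1 : (a i).val < (a (i + 1)).val := hord i (i + 1) (by omega)
    have ha1m := ZMod.val_lt (a (i + 1))
    rcases zmod_sub_val m (a (i + 1)) (a i) with ⟨h1, h2⟩ | ⟨h1, h2⟩
    swap
    · omega
    rcases Nat.lt_or_ge i.val l.val with hli | hli
    · have hlv : (a i).val < (a l).val := hord i l hli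
      have hge : (a (i + 1)).val ≤ (a l).val := by
        rcases Nat.eq_or_lt_of_le (by omega : i.val + 1 ≤ l.val) with he | hlt
        · have : l = i + 1 := hvinj _ _ (by omega)
          rw [this]
        · exact le_of_lt (hord (i + 1) l (by omega))
      rcases zmod_sub_val m (a l) (a i) with ⟨h3, h4⟩ | ⟨h3, h4⟩ <;> omega
    · have hlv : (a l).val < (a i).val := hord l i (by omega)
      rcases zmod_sub_val m (a l) (a i) with ⟨h3, h4⟩ | ⟨h3, h4⟩ <;> omega
  · have hik1 : i.val = k - 1 := by omega
    have hv1 : (i + 1).val = 0 := by rw [hval1]; simp [show i.val + 1 = k by omega]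
    have hi10 : i + 1 = 0 := hvinj _ _ (by rw [hv1, ZMod.val_zero])
    have hizero : (0 : ZMod k).val = 0 := ZMod.val_zero
    have hine : (0 : ZMod k).val < i.val := by omega
    have hlt1 : (a 0).val < (a i).val := hord 0 i hine
    have hl0 : (a 0).val ≤ (a l).val := by
      by_cases hl00 : l = 0
      · rw [hl00]
      · have : (0 : ZMod k).val < l.val := by
          have : l.val ≠ 0 := fun h => hl00 (hvinj _ _ (by rw [h, ZMod.val_zero]))
          omega
        exact le_of_lt (hord 0 l this)
    have hlv : (a l).val < (a i).val := by
      apply hord l i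
      omega
    rw [hi10]
    rcases zmod_sub_val m (a 0) (a i) with ⟨h1, h2⟩ | ⟨h1, h2⟩
    · omega
    rcases zmod_sub_val m (a l) (a i) with ⟨h3, h4⟩ | ⟨h3, h4⟩ <;> omega

theorem statement9 [Fintype V] (G : SimpleGraph V) (k m : ℕ) (hk : 2 ≤ k) (hm : 3 ≤ m)
    (horder : 3 * k + 3 ≤ Fintype.card V)
    (hconn : vertexConnectivity G = k)
    (hindep : _root_.indepNum G = k + 1)
    (hno2f : ¬ HasTwoFactorAtMostTwo G)
    -- `C` is a longest cycle of `G`, given with a fixed orientation as an injective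
    -- cyclic enumeration `c` of its vertices, consecutive vertices being adjacent
    (c : ZMod m → V) (hcinj : Function.Injective c)
    (hcadj : ∀ i : ZMod m, G.Adj (c i) (c (i + 1)))
    (hlongest : ∀ (v : V) (w : G.Walk v v), w.IsCycle → w.length ≤ m)
    -- `H` is the unique connected component of `G - V(C)`: it is all of `V \\ V(C)`,
    -- is a complete graph, and has at most two vertices
    (H : Set V) (hH : H = (Set.range c)ᶜ)
    (hHne : H.Nonempty) (hHcard : H.ncard ≤ 2)
    (hHclique : ∀ x ∈ H, ∀ y ∈ H, x ≠ y → G.Adj x y)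
    -- `u i = c (a i)` are the `k` neighbours of `V(H)` on `C`, labelled in cyclic order
    (a : ZMod k → ZMod m) (hainj : Function.Injective a)
    (hU : Set.range (fun i : ZMod k => c (a i)) =
      {v : V | v ∈ Set.range c ∧ ∃ x ∈ H, G.Adj x v})
    (hord : ∀ i j : ZMod k, i.val < j.val → (a i).val < (a j).val)
    -- `t i` is the number of vertices of `C` strictly between `u i` and `u (i+1)`
    (t : ZMod k → ℕ) (ht : ∀ i : ZMod k, t i = (a (i + 1) - a i).val - 1)
    (ht1 : ∀ i : ZMod k, 1 ≤ t i) :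
    ∀ i j : ZMod k, 3 ≤ t i → j ≠ i → ¬ G.Adj (c (a i + 1)) (c (a j - 1)) := by
  classical
  intro i j h3 hji hadj
  haveI : NeZero m := ⟨by omega⟩
  haveI : NeZero k := ⟨by omega⟩
  set d : ℕ := (a j - a i).val with hd
  -- d ≥ 4
  have hne1 : (a (i + 1) - a i) ≠ 0 := by
    intro h
    have h2 : a (i + 1) = a i := sub_eq_zero.1 h
    have h3 : i + 1 = i := hainj h2
    haveI : Fact (1 < k) := ⟨by omega⟩
    exact one_ne_zero (add_left_cancel (h3.trans (add_zero i).symm))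
  have hv1pos : 1 ≤ (a (i + 1) - a i).val := by
    rcases Nat.eq_zero_or_pos ((a (i + 1) - a i).val) with h | h
    · exact absurd ((ZMod.val_eq_zero _).1 h) hne1
    · exact h
  have hd4 : 4 ≤ d := by
    have h1 := ht i
    have h2 := next_aux k m hk a hord i j hji
    omega
  have hdm : d + 1 ≤ m := by
    have h1 : d < m := ZMod.val_lt _
    rcases Nat.eq_or_lt_of_le h1 with h | h
    · omega
    · omega
  -- a j = a i + d
  have hqp : a j = a i + (d : ℕ) := by
    have : ((d : ℕ) : ZMod m) = a j - a i := by
      rw [hd]; simp [ZMod.natCast_val, ZMod.cast_id]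
    rw [this]; ring
  -- membership facts
  have hUmem : ∀ l : ZMod k, ∃ z ∈ H, G.Adj z (c (a l)) := by
    intro l
    have : c (a l) ∈ {v : V | v ∈ Set.range c ∧ ∃ x ∈ H, G.Adj x v} := by
      rw [← hU]; exact ⟨l, rfl⟩
    exact this.2
  have hNU : ∀ z ∈ H, ∀ w, G.Adj z w → w ∈ Set.range c → ∃ l : ZMod k, c (a l) = w := by
    intro z hz w hzw hw
    have : w ∈ Set.range (fun l : ZMod k => c (a l)) := by
      rw [hU]; exact ⟨hw, z, hz, hzw⟩
    exact this
  have hHr : ∀ z ∈ H, z ∉ Set.range c := by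
    intro z hz
    rw [hH] at hz
    exact hz
  -- H has at most two elements
  have hH2 : ∀ z z' : V, z ∈ H → z' ∈ H → z ≠ z' → ∀ w ∈ H, w = z ∨ w = z' := by
    intro z z' hz hz' hzz w hw
    by_contra hcon
    push_neg at hcon
    obtain ⟨hwz, hwz'⟩ := hcon
    have hsub3 : ({w, z, z'} : Set V) ⊆ H := by
      intro v hv
      simp only [Set.mem_insert_iff, Set.mem_singleton_iff] at hv
      rcases hv with rfl | rfl | rfl
      exacts [hw, hz, hz']
    have h3 : ({w, z, z'} : Set V).ncard = 3 := by
      rw [Set.ncard_insert_of_notMem (by simp [hwz, hwz']),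
        Set.ncard_insert_of_notMem (by simp [hzz]), Set.ncard_singleton]
    have := Set.ncard_le_ncard hsub3 (Set.toFinite H)
    omega
  -- degree contradiction for an H-vertex adjacent to neither u_i nor u_j
  have hdegH : ∀ z ∈ H, ∀ z' ∈ H, z ≠ z' → ¬ G.Adj z (c (a i)) → ¬ G.Adj z (c (a j)) → False := by
    intro z hz z' hz' hzz hnp hnq
    have hpq : c (a i) ≠ c (a j) := fun h => hji (hainj (hcinj h)).symm
    set X : Finset V := Finset.univ.image (fun l : ZMod k => c (a l)) with hX
    have hsub : G.neighborFinset z ⊆ insert z' ((X.erase (c (a i))).erase (c (a j))) := by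
      intro w hw
      rw [SimpleGraph.mem_neighborFinset] at hw
      by_cases hwr : w ∈ Set.range c
      · obtain ⟨l, hl⟩ := hNU z hz w hw hwr
        have hwp : w ≠ c (a i) := fun h => hnp (h ▸ hw)
        have hwq : w ≠ c (a j) := fun h => hnq (h ▸ hw)
        apply Finset.mem_insert_of_mem
        rw [Finset.mem_erase, Finset.mem_erase]
        exact ⟨hwq, hwp, Finset.mem_image.2 ⟨l, Finset.mem_univ l, hl⟩⟩
      · have hwH : w ∈ H := by rw [hH]; exact hwr
        rcases hH2 z z' hz hz' hzz w hwH with h | h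
        · exact absurd (h ▸ hw) (G.loopless.irrefl z)
        · rw [h]; exact Finset.mem_insert_self _ _
    have himg : X.card = k := by
      rw [hX, Finset.card_image_of_injective _
        (show Function.Injective (fun l : ZMod k => c (a l)) from fun u v h => hainj (hcinj h))]
      simp [ZMod.card]
    have hpmem' : c (a i) ∈ X := Finset.mem_image.2 ⟨i, Finset.mem_univ i, rfl⟩
    have hqmem' : c (a j) ∈ X.erase (c (a i)) :=
      Finset.mem_erase.2 ⟨hpq.symm, Finset.mem_image.2 ⟨j, Finset.mem_univ j, rfl⟩⟩
    have hcard1 : ((X.erase (c (a i))).erase (c (a j))).card = k - 2 := by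
      rw [Finset.card_erase_of_mem hqmem', Finset.card_erase_of_mem hpmem', himg]
      omega
    have hle := Finset.card_le_card hsub
    have hle2 := Finset.card_insert_le z' ((X.erase (c (a i))).erase (c (a j)))
    have hdegz := mindeg_aux G k hconn (by omega) z
    have : G.degree z = (G.neighborFinset z).card := rfl
    omega
  -- select the attachment vertices x, y of H
  obtain ⟨x0, hx0H, hx0⟩ := hUmem i
  obtain ⟨y0, hy0H, hy0⟩ := hUmem j
  have hsel : ∃ x y : V, x ∈ H ∧ y ∈ H ∧ G.Adj x (c (a i)) ∧ G.Adj y (c (a j)) ∧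
      (x = y ∨ G.Adj x y) ∧ ∀ z ∈ H, z = x ∨ z = y := by
    by_cases hxy : x0 = y0
    · by_cases hz : ∃ z ∈ H, z ≠ x0
      · obtain ⟨z, hzH, hzne⟩ := hz
        by_cases hzq : G.Adj z (c (a j))
        · exact ⟨x0, z, hx0H, hzH, hx0, hzq,
            Or.inr (hHclique x0 hx0H z hzH (Ne.symm hzne)),
            fun w hw => (hH2 x0 z hx0H hzH (Ne.symm hzne) w hw)⟩
        · by_cases hzp : G.Adj z (c (a i))
          · refine ⟨z, x0, hzH, hx0H, hzp, ?_, Or.inr (hHclique z hzH x0 hx0H hzne), ?_⟩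
            · rw [hxy]; exact hy0
            · intro w hw
              rcases hH2 x0 z hx0H hzH (Ne.symm hzne) w hw with h | h
              · exact Or.inr h
              · exact Or.inl h
          · exact absurd (hdegH z hzH x0 hx0H hzne hzp hzq) (fun h => h)
      · push_neg at hz
        refine ⟨x0, x0, hx0H, hx0H, hx0, ?_, Or.inl rfl, fun w hw => Or.inl (hz w hw)⟩
        rw [hxy]; exact hy0
    · exact ⟨x0, y0, hx0H, hy0H, hx0, hy0, Or.inr (hHclique x0 hx0H y0 hy0H hxy),
        fun w hw => hH2 x0 y0 hx0H hy0H hxy w hw⟩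
  obtain ⟨x, y, hxH, hyH, hxp, hyq, hxy, hHsub⟩ := hsel
  have hcover : ∀ v : V, v ∈ Set.range c ∨ v = x ∨ v = y := by
    intro v
    by_cases hv : v ∈ Set.range c
    · exact Or.inl hv
    · have : v ∈ H := by rw [hH]; exact hv
      exact Or.inr (hHsub v this)
  -- assemble the chord adjacency in offset form
  have hchord : G.Adj (c (a i + ((1:ℕ) : ZMod m))) (c (a i + ((d - 1 : ℕ) : ZMod m))) := by
    have h1 : (a i + ((1:ℕ) : ZMod m)) = a i + 1 := by norm_num
    have h2 : (a i + ((d - 1 : ℕ) : ZMod m)) = a j - 1 := by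
      rw [hqp, Nat.cast_sub (by omega : 1 ≤ d), Nat.cast_one]
      ring
    rw [h1, h2]
    exact hadj
  have hyq' : G.Adj y (c (a i + (d : ℕ))) := by rw [← hqp]; exact hyq
  exact hno2f (twofactor_aux G m d hd4 hdm c hcinj hcadj (a i) x y
    (hHr x hxH) (hHr y hyH) hxp hyq' hxy hcover hchord)
end

section
/- Under the Case-2 Setup, if t_i ≥ 3 for some index i, then both u_i^- u_i^+ and u_{i+1}^- u_{i+1}^+ are edges of G. -/
open SimpleGraph

variable {V : Type*}

set_option linter.unusedSectionVars false
set_option maxHeartbeats 1600000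

section ZModHelpers

lemma natCast_inj_lt {m s s' : ℕ} (hs : s < m) (hs' : s' < m) (h : (s : ZMod m) = s') :
    s = s' := by
  have h1 : (s : ZMod m).val = s := ZMod.val_cast_of_lt hs
  have h2 : (s' : ZMod m).val = s' := ZMod.val_cast_of_lt hs'
  rw [← h1, ← h2, h]

lemma cast_val_eq {m : ℕ} [NeZero m] (z : ZMod m) : ((z.val : ℕ) : ZMod m) = z :=
  ZMod.natCast_rightInverse z

lemma two_ne_zero_zmod {m : ℕ} (hm : 3 ≤ m) : (2 : ZMod m) ≠ 0 := by
  intro h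
  have : ((2 : ℕ) : ZMod m) = ((0 : ℕ) : ZMod m) := by push_cast; exact h
  have := natCast_inj_lt (by omega) (by omega) this
  omega

lemma one_ne_zero_zmod {m : ℕ} (hm : 2 ≤ m) : (1 : ZMod m) ≠ 0 := by
  intro h
  have : ((1 : ℕ) : ZMod m) = ((0 : ℕ) : ZMod m) := by push_cast; exact h
  have := natCast_inj_lt (by omega) (by omega) this
  omega

lemma val_sub_le_case {m : ℕ} [NeZero m] (u v : ZMod m) (h : v.val ≤ u.val) :
    (u - v).val = u.val - v.val := by
  have key : ((u - v).val + v.val) % m = u.val := by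
    have : (u - v) + v = u := sub_add_cancel u v
    rw [← ZMod.val_add, this]
  have h1 : (u - v).val < m := ZMod.val_lt _
  have h2 : v.val < m := ZMod.val_lt _
  have h3 : u.val < m := ZMod.val_lt _
  rcases lt_or_ge ((u - v).val + v.val) m with hc | hc
  · rw [Nat.mod_eq_of_lt hc] at key; omega
  · have : ((u - v).val + v.val) % m = (u - v).val + v.val - m := by
      rw [Nat.mod_eq_sub_mod hc, Nat.mod_eq_of_lt (by omega)]
    rw [this] at key; omega

lemma val_sub_gt_case {m : ℕ} [NeZero m] (u v : ZMod m) (h : u.val < v.val) :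
    (u - v).val = m + u.val - v.val := by
  have key : ((u - v).val + v.val) % m = u.val := by
    have : (u - v) + v = u := sub_add_cancel u v
    rw [← ZMod.val_add, this]
  have h1 : (u - v).val < m := ZMod.val_lt _
  have h2 : v.val < m := ZMod.val_lt _
  have h3 : u.val < m := ZMod.val_lt _
  rcases lt_or_ge ((u - v).val + v.val) m with hc | hc
  · rw [Nat.mod_eq_of_lt hc] at key; omega
  · have : ((u - v).val + v.val) % m = (u - v).val + v.val - m := by
      rw [Nat.mod_eq_sub_mod hc, Nat.mod_eq_of_lt (by omega)]
    rw [this] at key; omega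

end ZModHelpers

section CycleRel

variable [Fintype V] {G : SimpleGraph V}

/-- The adjacency relation of the cycle `f 0, f 1, ..., f (n-1), f 0`. -/
def cycRel (n : ℕ) (f : ℕ → V) : V → V → Prop :=
  fun x y => ∃ z : ZMod n, (x = f z.val ∧ y = f (z + 1).val) ∨ (y = f z.val ∧ x = f (z + 1).val)

lemma cycRel_symm {n : ℕ} {f : ℕ → V} {x y : V} (h : cycRel n f x y) : cycRel n f y x := by
  obtain ⟨z, hz | hz⟩ := h
  · exact ⟨z, Or.inr hz⟩
  · exact ⟨z, Or.inl hz⟩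

variable {n : ℕ} {f : ℕ → V}

lemma cyc_succ_val (hn : 3 ≤ n) (z : ZMod n) :
    (z + 1).val = if z.val = n - 1 then 0 else z.val + 1 := by
  haveI : NeZero n := ⟨by omega⟩
  have h1 : (1 : ZMod n).val = 1 := ZMod.val_one'' (by omega)
  rw [ZMod.val_add, h1]
  have hz : z.val < n := ZMod.val_lt z
  by_cases hc : z.val = n - 1
  · simp only [hc, if_true]
    have : n - 1 + 1 = n := by omega
    rw [this, Nat.mod_self]
  · simp only [hc, if_false]
    exact Nat.mod_eq_of_lt (by omega)

lemma cycRel_adj (hn : 3 ≤ n)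
    (hadj : ∀ s, s + 1 < n → G.Adj (f s) (f (s + 1)))
    (hcl : G.Adj (f (n - 1)) (f 0)) {x y : V} (h : cycRel n f x y) : G.Adj x y := by
  haveI : NeZero n := ⟨by omega⟩
  have key : ∀ z : ZMod n, G.Adj (f z.val) (f (z + 1).val) := by
    intro z
    rw [cyc_succ_val hn]
    by_cases hc : z.val = n - 1
    · simp only [hc, if_true]; exact hcl
    · simp only [hc, if_false]
      exact hadj z.val (by have := ZMod.val_lt z; omega)
  obtain ⟨z, ⟨hx, hy⟩ | ⟨hy, hx⟩⟩ := h
  · rw [hx, hy]; exact key z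
  · rw [hx, hy]; exact (key z).symm

lemma cycRel_mem_range {x y : V} (h : cycRel n f x y) :
    ∃ z : ZMod n, x = f z.val := by
  obtain ⟨z, ⟨hx, _⟩ | ⟨_, hx⟩⟩ := h
  · exact ⟨z, hx⟩
  · exact ⟨z + 1, hx⟩

lemma cycRel_nbrs (hn : 3 ≤ n)
    (hinj : ∀ s < n, ∀ s' < n, f s = f s' → s = s') (z : ZMod n) :
    {y | cycRel n f (f z.val) y} = {f (z - 1).val, f (z + 1).val} := by
  haveI : NeZero n := ⟨by omega⟩
  have ginj : ∀ z₁ z₂ : ZMod n, f z₁.val = f z₂.val → z₁ = z₂ := fun z₁ z₂ h =>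
    ZMod.val_injective n (hinj _ (ZMod.val_lt _) _ (ZMod.val_lt _) h)
  ext y
  simp only [Set.mem_setOf_eq, Set.mem_insert_iff, Set.mem_singleton_iff]
  constructor
  · rintro ⟨z', ⟨hx, hy⟩ | ⟨hy, hx⟩⟩
    · have : z = z' := ginj _ _ hx
      right; rw [hy, this]
    · have : z = z' + 1 := ginj _ _ hx
      left; rw [hy, this]; ring_nf
  · rintro (hy | hy)
    · exact ⟨z - 1, Or.inr ⟨by rw [hy], by ring_nf⟩⟩
    · exact ⟨z, Or.inl ⟨rfl, by rw [hy]⟩⟩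

end CycleRel

section TF
variable [Fintype V] {G : SimpleGraph V}

lemma cycRel_self (n : ℕ) [NeZero n] (f : ℕ → V) (z : ZMod n) :
    cycRel n f (f z.val) (f (z + 1).val) := ⟨z, Or.inl ⟨rfl, rfl⟩⟩

/-- all vertices on a `cycRel` cycle are reachable from `f 0` in any subgraph whose
adjacency includes the cycle relation. -/
lemma cyc_reachable {F : G.Subgraph} {n : ℕ} [NeZero n] {f : ℕ → V}
    (hrel : ∀ z : ZMod n, F.Adj (f z.val) (f (z + 1).val))
    (hv : ∀ x : V, x ∈ F.verts) (z : ZMod n) :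
    F.coe.Reachable ⟨f 0, hv _⟩ ⟨f z.val, hv _⟩ := by
  have aux : ∀ j : ℕ, F.coe.Reachable ⟨f 0, hv _⟩ ⟨f ((j : ZMod n)).val, hv _⟩ := by
    intro j
    induction j with
    | zero =>
      have : ((0 : ℕ) : ZMod n).val = 0 := by simp
      rw [show (⟨f ((0 : ℕ) : ZMod n).val, hv _⟩ : F.verts) = ⟨f 0, hv _⟩ from
        Subtype.ext (by rw [this])]
    | succ j ih =>
      refine ih.trans (Adj.reachable ?_)
      have hcast : ((j + 1 : ℕ) : ZMod n) = ((j : ZMod n) + 1) := by push_cast; ring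
      rw [Subgraph.coe_adj]
      simp only [hcast]
      exact hrel _
  have := aux z.val
  rwa [cast_val_eq] at this

/-- Two disjoint covering cycles give a 2-factor with at most two components. -/
lemma hasTwoFactor_of_two_cycles (G : SimpleGraph V) [Fintype V]
    (n₁ n₂ : ℕ) (h₁ : 3 ≤ n₁) (h₂ : 3 ≤ n₂) (f₁ f₂ : ℕ → V)
    (hadj₁ : ∀ s, s + 1 < n₁ → G.Adj (f₁ s) (f₁ (s + 1)))
    (hcl₁ : G.Adj (f₁ (n₁ - 1)) (f₁ 0))
    (hinj₁ : ∀ s < n₁, ∀ s' < n₁, f₁ s = f₁ s' → s = s')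
    (hadj₂ : ∀ s, s + 1 < n₂ → G.Adj (f₂ s) (f₂ (s + 1)))
    (hcl₂ : G.Adj (f₂ (n₂ - 1)) (f₂ 0))
    (hinj₂ : ∀ s < n₂, ∀ s' < n₂, f₂ s = f₂ s' → s = s')
    (hdisj : ∀ s < n₁, ∀ s' < n₂, f₁ s ≠ f₂ s')
    (hcov : ∀ x : V, (∃ s < n₁, f₁ s = x) ∨ (∃ s < n₂, f₂ s = x)) :
    HasTwoFactorAtMostTwo G := by
  haveI : NeZero n₁ := ⟨by omega⟩
  haveI : NeZero n₂ := ⟨by omega⟩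
  refine ⟨⟨Set.univ, fun x y => cycRel n₁ f₁ x y ∨ cycRel n₂ f₂ x y, ?_,
      fun _ => Set.mem_univ _, ?_⟩, fun v => Set.mem_univ v, ?_, ?_⟩
  · rintro x y (h | h)
    · exact cycRel_adj h₁ hadj₁ hcl₁ h
    · exact cycRel_adj h₂ hadj₂ hcl₂ h
  · constructor
    rintro x y (h | h)
    · exact Or.inl (cycRel_symm h)
    · exact Or.inr (cycRel_symm h)
  · -- degrees
    intro v
    show {y | cycRel n₁ f₁ v y ∨ cycRel n₂ f₂ v y}.ncard = 2
    rcases hcov v with ⟨s, hs, hfs⟩ | ⟨s, hs, hfs⟩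
    · have hzval : ((s : ZMod n₁)).val = s := ZMod.val_cast_of_lt hs
      have hveq : v = f₁ ((s : ZMod n₁)).val := by rw [hzval, hfs]
      have hset : {y | cycRel n₁ f₁ v y ∨ cycRel n₂ f₂ v y} = {y | cycRel n₁ f₁ v y} := by
        ext y
        simp only [Set.mem_setOf_eq, or_iff_left_iff_imp]
        intro h2
        obtain ⟨z, hz⟩ := cycRel_mem_range h2
        exact absurd (hfs.trans hz) (hdisj s hs _ (ZMod.val_lt z))
      rw [hset, hveq, cycRel_nbrs h₁ hinj₁]
      apply Set.ncard_pair
      intro heq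
      have := hinj₁ _ (ZMod.val_lt _) _ (ZMod.val_lt _) heq
      have h20 : ((s : ZMod n₁) - 1) = ((s : ZMod n₁) + 1) := ZMod.val_injective _ this
      exact two_ne_zero_zmod h₁ (by linear_combination -h20)
    · have hzval : ((s : ZMod n₂)).val = s := ZMod.val_cast_of_lt hs
      have hveq : v = f₂ ((s : ZMod n₂)).val := by rw [hzval, hfs]
      have hset : {y | cycRel n₁ f₁ v y ∨ cycRel n₂ f₂ v y} = {y | cycRel n₂ f₂ v y} := by
        ext y
        simp only [Set.mem_setOf_eq, or_iff_right_iff_imp]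
        intro h2
        obtain ⟨z, hz⟩ := cycRel_mem_range h2
        exact absurd (hz.symm.trans hfs.symm) (hdisj _ (ZMod.val_lt z) s hs)
      rw [hset, hveq, cycRel_nbrs h₂ hinj₂]
      apply Set.ncard_pair
      intro heq
      have := hinj₂ _ (ZMod.val_lt _) _ (ZMod.val_lt _) heq
      have h20 : ((s : ZMod n₂) - 1) = ((s : ZMod n₂) + 1) := ZMod.val_injective _ this
      exact two_ne_zero_zmod h₂ (by linear_combination -h20)
  · -- components
    set F : G.Subgraph := ⟨Set.univ, fun x y => cycRel n₁ f₁ x y ∨ cycRel n₂ f₂ x y, by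
        rintro x y (h | h)
        · exact cycRel_adj h₁ hadj₁ hcl₁ h
        · exact cycRel_adj h₂ hadj₂ hcl₂ h,
        fun _ => Set.mem_univ _, by
        constructor
        rintro x y (h | h)
        · exact Or.inl (cycRel_symm h)
        · exact Or.inr (cycRel_symm h)⟩ with hF
    show Nat.card F.coe.ConnectedComponent ≤ 2
    have hv : ∀ x : V, x ∈ F.verts := fun x => Set.mem_univ x
    have hrel₁ : ∀ z : ZMod n₁, F.Adj (f₁ z.val) (f₁ (z + 1).val) :=
      fun z => Or.inl (cycRel_self n₁ f₁ z)
    have hrel₂ : ∀ z : ZMod n₂, F.Adj (f₂ z.val) (f₂ (z + 1).val) :=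
      fun z => Or.inr (cycRel_self n₂ f₂ z)
    have hsurj : Function.Surjective (fun b : Bool =>
        if b then F.coe.connectedComponentMk ⟨f₁ 0, hv _⟩
        else F.coe.connectedComponentMk ⟨f₂ 0, hv _⟩) := by
      intro comp
      induction comp using ConnectedComponent.ind with
      | _ x =>
        obtain ⟨v, hvmem⟩ := x
        rcases hcov v with ⟨s, hs, hfs⟩ | ⟨s, hs, hfs⟩
        · refine ⟨true, ?_⟩
          simp only [if_true]
          have hveq : (⟨v, hvmem⟩ : F.verts) = ⟨f₁ ((s : ZMod n₁)).val, hv _⟩ :=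
            Subtype.ext (by rw [ZMod.val_cast_of_lt hs, hfs])
          rw [hveq]
          exact ConnectedComponent.sound (cyc_reachable hrel₁ hv _)
        · refine ⟨false, ?_⟩
          simp only [if_false]
          have hveq : (⟨v, hvmem⟩ : F.verts) = ⟨f₂ ((s : ZMod n₂)).val, hv _⟩ :=
            Subtype.ext (by rw [ZMod.val_cast_of_lt hs, hfs])
          rw [hveq]
          exact ConnectedComponent.sound (cyc_reachable hrel₂ hv _)
    calc Nat.card F.coe.ConnectedComponent ≤ Nat.card Bool :=
          Nat.card_le_card_of_surjective _ hsurj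
      _ = 2 := by simp [Nat.card_eq_fintype_card]

/-- A single covering cycle gives a 2-factor with at most two components. -/
lemma hasTwoFactor_of_one_cycle (G : SimpleGraph V) [Fintype V]
    (n : ℕ) (hn : 3 ≤ n) (f : ℕ → V)
    (hadj : ∀ s, s + 1 < n → G.Adj (f s) (f (s + 1)))
    (hcl : G.Adj (f (n - 1)) (f 0))
    (hinj : ∀ s < n, ∀ s' < n, f s = f s' → s = s')
    (hcov : ∀ x : V, ∃ s < n, f s = x) :
    HasTwoFactorAtMostTwo G := by
  haveI : NeZero n := ⟨by omega⟩
  refine ⟨⟨Set.univ, fun x y => cycRel n f x y, fun h => cycRel_adj hn hadj hcl h,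
      fun _ => Set.mem_univ _, ⟨fun x y h => cycRel_symm h⟩⟩, fun v => Set.mem_univ v, ?_, ?_⟩
  · intro v
    show {y | cycRel n f v y}.ncard = 2
    obtain ⟨s, hs, hfs⟩ := hcov v
    have hveq : v = f ((s : ZMod n)).val := by rw [ZMod.val_cast_of_lt hs, hfs]
    rw [hveq, cycRel_nbrs hn hinj]
    apply Set.ncard_pair
    intro heq
    have := hinj _ (ZMod.val_lt _) _ (ZMod.val_lt _) heq
    have h20 : ((s : ZMod n) - 1) = ((s : ZMod n) + 1) := ZMod.val_injective _ this
    exact two_ne_zero_zmod hn (by linear_combination -h20)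
  · set F : G.Subgraph := ⟨Set.univ, fun x y => cycRel n f x y,
        fun h => cycRel_adj hn hadj hcl h,
        fun _ => Set.mem_univ _, ⟨fun x y h => cycRel_symm h⟩⟩ with hF
    show Nat.card F.coe.ConnectedComponent ≤ 2
    have hv : ∀ x : V, x ∈ F.verts := fun x => Set.mem_univ x
    have hrel : ∀ z : ZMod n, F.Adj (f z.val) (f (z + 1).val) :=
      fun z => ⟨z, Or.inl ⟨rfl, rfl⟩⟩
    have hsurj : Function.Surjective (fun _ : Unit => F.coe.connectedComponentMk ⟨f 0, hv _⟩) := by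
      intro comp
      induction comp using ConnectedComponent.ind with
      | _ x =>
        obtain ⟨v, hvmem⟩ := x
        obtain ⟨s, hs, hfs⟩ := hcov v
        refine ⟨(), ?_⟩
        have hveq : (⟨v, hvmem⟩ : F.verts) = ⟨f ((s : ZMod n)).val, hv _⟩ :=
          Subtype.ext (by rw [ZMod.val_cast_of_lt hs, hfs])
        rw [hveq]
        exact ConnectedComponent.sound (cyc_reachable hrel hv _)
    calc Nat.card F.coe.ConnectedComponent ≤ Nat.card Unit :=
          Nat.card_le_card_of_surjective _ hsurj
      _ ≤ 2 := by simp [Nat.card_eq_fintype_card]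


end TF

section Bounds
variable [Fintype V]

/-- Any independent finset has size at most the independence number. -/
lemma indep_card_le (G : SimpleGraph V) {K : ℕ} (hindep : _root_.indepNum G = K)
    (s : Finset V) (hs : ∀ x ∈ s, ∀ y ∈ s, x ≠ y → ¬ G.Adj x y) : s.card ≤ K := by
  rw [← hindep]
  apply le_csSup
  · refine ⟨Fintype.card V, ?_⟩
    rintro nn ⟨s', _, rfl⟩
    exact Finset.card_le_univ s'
  · exact ⟨s, hs, rfl⟩

/-- `k`-connectedness forces minimum degree at least `k`. -/
lemma degree_lower_bound (G : SimpleGraph V) {k : ℕ} (hk : 2 ≤ k)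
    (hconn : vertexConnectivity G = k) (hbig : 3 * k + 3 ≤ Fintype.card V) (v : V) :
    k ≤ (G.neighborSet v).ncard := by
  classical
  by_contra hlt
  push_neg at hlt
  set S : Finset V := (G.neighborSet v).toFinset with hS
  have hcardS : S.card = (G.neighborSet v).ncard := (Set.ncard_eq_toFinset_card' _).symm
  have hvS : v ∉ S := by simp [hS]
  have hSc : 1 < (Finset.univ \ S).card := by
    have : (Finset.univ \ S).card = Fintype.card V - S.card := by
      rw [Finset.card_sdiff_of_subset (Finset.subset_univ S), Finset.card_univ]
    omega
  obtain ⟨w, hwmem, hwv⟩ := Finset.exists_mem_ne hSc v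
  have hwS : w ∉ S := (Finset.mem_sdiff.mp hwmem).2
  have hdisc : ¬ (G.induce ((S : Set V)ᶜ)).Connected := by
    intro hCon
    have hvc : v ∈ ((S : Set V)ᶜ) := by simpa using hvS
    have hwc : w ∈ ((S : Set V)ᶜ) := by simpa using hwS
    obtain ⟨p⟩ := hCon.preconnected ⟨v, hvc⟩ ⟨w, hwc⟩
    have hpn : ¬ p.Nil := Walk.not_nil_of_ne (by simpa [Subtype.ext_iff] using hwv.symm)
    have hadj' := p.adj_snd hpn
    have hadj : G.Adj v (p.getVert 1).1 := by simpa using hadj'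
    exact (p.getVert 1).2 (by simp [hS, hadj])
  have hmem : S.card ∈ {k' : ℕ | ∃ S' : Finset V, S'.card = k' ∧
      (¬ (G.induce ((S' : Set V)ᶜ)).Connected ∨ Fintype.card V ≤ S'.card + 1)} :=
    ⟨S, rfl, Or.inl hdisc⟩
  have := Nat.sInf_le hmem
  rw [← vertexConnectivity] at this
  omega

end Bounds

section Gap
variable {k m : ℕ} [NeZero k] [NeZero m] (hk : 2 ≤ k) (hm : 3 ≤ m)
  (a : ZMod k → ZMod m) (hainj : Function.Injective a)
  (hord : ∀ i j : ZMod k, i.val < j.val → (a i).val < (a j).val)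

include hk hainj hord

lemma amono : ∀ x y : ZMod k, x.val ≤ y.val → (a x).val ≤ (a y).val := by
  intro x y h
  rcases eq_or_lt_of_le h with he | hl
  · rw [ZMod.val_injective k he]
  · exact le_of_lt (hord x y hl)

lemma aval_ne : ∀ x y : ZMod k, x ≠ y → (a x).val ≠ (a y).val := by
  intro x y hxy h
  exact hxy (hainj (ZMod.val_injective m h))

/-- E : the cyclic gap from `a j` to the next `a` is minimal. -/
lemma gap_succ_min : ∀ j l : ZMod k, l ≠ j → (a (j + 1) - a j).val ≤ (a l - a j).val := by
  intro j l hne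
  have hvk : ∀ z : ZMod k, z.val < k := fun z => ZMod.val_lt z
  have hvm : ∀ z : ZMod m, z.val < m := fun z => ZMod.val_lt z
  have h1k : (1 : ZMod k).val = 1 := ZMod.val_one'' (by omega)
  have hlvne : l.val ≠ j.val := fun h => hne (ZMod.val_injective k h)
  have hA := hvm (a (j + 1))
  have hB := hvm (a l)
  have hC := hvm (a j)
  by_cases hc : j.val + 1 < k
  · have hj1 : (j + 1).val = j.val + 1 := by
      rw [ZMod.val_add, h1k, Nat.mod_eq_of_lt hc]
    have hbj1 : (a j).val < (a (j + 1)).val := hord _ _ (by omega)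
    rcases lt_trichotomy ((a l).val) ((a j).val) with hbl | hbl | hbl
    · rw [val_sub_le_case _ _ (le_of_lt hbj1), val_sub_gt_case _ _ hbl]
      omega
    · exact absurd (ZMod.val_injective m hbl) (fun h => hne (hainj h))
    · rw [val_sub_le_case _ _ (le_of_lt hbj1), val_sub_le_case _ _ (le_of_lt hbl)]
      have hlv : j.val < l.val := by
        by_contra hh
        push_neg at hh
        rcases lt_or_eq_of_le hh with h' | h'
        · exact absurd (hord l j h') (by omega)
        · exact hlvne h'
      have : (a (j + 1)).val ≤ (a l).val := amono hk a hainj hord _ _ (by omega)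
      omega
  · have hjv : j.val = k - 1 := by have := hvk j; omega
    have hj1 : (j + 1).val = 0 := by
      rw [ZMod.val_add, h1k, hjv]
      have : k - 1 + 1 = k := by omega
      rw [this, Nat.mod_self]
    have hlv : l.val < j.val := by have := hvk l; omega
    have hbl : (a l).val < (a j).val := hord _ _ hlv
    have hbj1 : (a (j + 1)).val ≤ (a l).val := amono hk a hainj hord _ _ (by omega)
    have hbj1' : (a (j + 1)).val < (a j).val := by omega
    rw [val_sub_gt_case _ _ hbj1', val_sub_gt_case _ _ hbl]
    omega

/-- E' : the cyclic gap from the previous `a` to `a l` is minimal. -/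
lemma gap_pred_min : ∀ l j : ZMod k, j ≠ l → (a l - a (l - 1)).val ≤ (a l - a j).val := by
  intro l j hne
  have hvk : ∀ z : ZMod k, z.val < k := fun z => ZMod.val_lt z
  have hvm : ∀ z : ZMod m, z.val < m := fun z => ZMod.val_lt z
  have h1k : (1 : ZMod k).val = 1 := ZMod.val_one'' (by omega)
  have hjvne : j.val ≠ l.val := fun h => hne (ZMod.val_injective k h)
  have hA := hvm (a (l - 1))
  have hB := hvm (a j)
  have hC := hvm (a l)
  by_cases hc : 1 ≤ l.val
  · have hl1 : (l - 1).val = l.val - 1 := by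
      rw [val_sub_le_case _ _ (by omega)]
      rw [h1k]
    have hbl1 : (a (l - 1)).val < (a l).val := hord _ _ (by omega)
    rcases lt_trichotomy ((a j).val) ((a l).val) with hbj | hbj | hbj
    · have hjl : j.val < l.val := by
        by_contra hh
        push_neg at hh
        rcases lt_or_eq_of_le hh with h' | h'
        · exact absurd (hord l j h') (by omega)
        · exact hjvne h'.symm
      have : (a j).val ≤ (a (l - 1)).val := amono hk a hainj hord _ _ (by omega)
      rw [val_sub_le_case _ _ (le_of_lt hbl1), val_sub_le_case _ _ (le_of_lt hbj)]
      omega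
    · exact absurd (ZMod.val_injective m hbj) (fun h => hne (hainj h))
    · rw [val_sub_le_case _ _ (le_of_lt hbl1), val_sub_gt_case _ _ hbj]
      omega
  · have hlv : l.val = 0 := by omega
    have hl1 : (l - 1).val = k - 1 := by
      rw [val_sub_gt_case _ _ (by rw [h1k]; omega), h1k, hlv]
      omega
    have hjv : 0 < j.val := by omega
    have hbj : (a l).val < (a j).val := hord _ _ (by omega)
    have hbl1 : (a j).val ≤ (a (l - 1)).val := amono hk a hainj hord _ _ (by have := hvk j; omega)
    have hbl1' : (a l).val < (a (l - 1)).val := by omega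
    rw [val_sub_gt_case _ _ hbl1', val_sub_gt_case _ _ hbj]
    omega

variable (t : ZMod k → ℕ) (ht : ∀ i : ZMod k, t i = (a (i + 1) - a i).val - 1)
  (ht1 : ∀ i : ZMod k, 1 ≤ t i)
include hm t ht ht1

lemma gap_val_ge_two : ∀ j : ZMod k, 2 ≤ (a (j + 1) - a j).val := by
  intro j
  have hne : a (j + 1) - a j ≠ 0 := by
    intro h
    have : a (j + 1) = a j := by linear_combination h
    have : j + 1 = j := hainj this
    have : (1 : ZMod k) = 0 := by linear_combination this
    exact one_ne_zero_zmod (by omega) this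
  have hpos : 1 ≤ (a (j + 1) - a j).val := by
    rcases Nat.eq_zero_or_pos ((a (j + 1) - a j).val) with h | h
    · exact absurd ((ZMod.val_eq_zero _).mp h) hne
    · omega
  by_contra hh
  push_neg at hh
  have hval1 : (a (j + 1) - a j).val = 1 := by omega
  have := ht j
  have := ht1 j
  omega

/-- A : no value `a l` is the cyclic successor of a value `a j`. -/
lemma no_succ_val : ∀ j l : ZMod k, a l ≠ a j + 1 := by
  intro j l h
  have hlj : l ≠ j := by
    rintro rfl
    have : (1 : ZMod m) = 0 := by linear_combination -h
    exact one_ne_zero_zmod (by omega) this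
  have hval : (a l - a j).val = 1 := by
    have : a l - a j = 1 := by linear_combination h
    rw [this, ZMod.val_one'' (by omega)]
  have hE := gap_succ_min hk a hainj hord j l hlj
  have := gap_val_ge_two hk hm a hainj hord t ht ht1 j
  omega

/-- D : if `a l` is two cyclic steps after `a j` then `l = j + 1` and `t j = 1`. -/
lemma two_step_val : ∀ j l : ZMod k, a l = a j + 2 → l = j + 1 ∧ t j = 1 := by
  intro j l h
  have hlj : l ≠ j := by
    rintro rfl
    have : (2 : ZMod m) = 0 := by linear_combination -h
    exact two_ne_zero_zmod hm this
  have hval : (a l - a j).val = 2 := by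
    have h2 : a l - a j = ((2 : ℕ) : ZMod m) := by push_cast; linear_combination h
    rw [h2, ZMod.val_cast_of_lt (by omega)]
  have hE := gap_succ_min hk a hainj hord j l hlj
  have h2 := gap_val_ge_two hk hm a hainj hord t ht ht1 j
  have hval2 : (a (j + 1) - a j).val = 2 := by omega
  have heq : a (j + 1) - a j = a l - a j := by
    have e1 := cast_val_eq (a (j + 1) - a j)
    have e2 := cast_val_eq (a l - a j)
    rw [hval2] at e1
    rw [hval] at e2
    rw [← e1, ← e2]
  have hal : a (j + 1) = a l := by linear_combination heq
  refine ⟨(hainj hal).symm, ?_⟩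
  have := ht j
  omega

end Gap

section HPath
variable [Fintype V] (G : SimpleGraph V) (k m : ℕ) (hk : 2 ≤ k) (hm : 3 ≤ m)
  (hconn : vertexConnectivity G = k) (hbig : 3 * k + 3 ≤ Fintype.card V)
  (c : ZMod m → V) (hcinj : Function.Injective c)
  (H : Set V) (hH : H = (Set.range c)ᶜ) (hHcard : H.ncard ≤ 2)
  (hHclique : ∀ x ∈ H, ∀ y ∈ H, x ≠ y → G.Adj x y)
  (a : ZMod k → ZMod m) (hainj : Function.Injective a)
  (hU : Set.range (fun i : ZMod k => c (a i)) =
    {v : V | v ∈ Set.range c ∧ ∃ x ∈ H, G.Adj x v})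

include hk hm hconn hbig hcinj hH hHcard hHclique hainj hU in
/-- An `H`-covering path whose ends attach to two prescribed distinct `u`'s. -/
lemma hpath_exists (j₁ j₂ : ZMod k) (hne : j₁ ≠ j₂) :
    ∃ (e : ℕ) (w : ℕ → V), 1 ≤ e ∧ e ≤ 2 ∧ (∀ s < e, w s ∈ H) ∧
      (∀ x ∈ H, ∃ s < e, w s = x) ∧ (∀ s < e, ∀ s' < e, w s = w s' → s = s') ∧
      (e = 2 → G.Adj (w 0) (w 1)) ∧ G.Adj (w 0) (c (a j₁)) ∧ G.Adj (w (e - 1)) (c (a j₂)) := by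
  classical
  haveI : NeZero k := ⟨by omega⟩
  haveI : NeZero m := ⟨by omega⟩
  have hmem : ∀ j : ZMod k, ∃ x ∈ H, G.Adj x (c (a j)) := by
    intro j
    have h1 : c (a j) ∈ Set.range (fun i : ZMod k => c (a i)) := ⟨j, rfl⟩
    rw [hU] at h1
    exact h1.2
  obtain ⟨x1, hx1H, hadj1⟩ := hmem j₁
  obtain ⟨x2, hx2H, hadj2⟩ := hmem j₂
  have hHfin : H.Finite := Set.toFinite H
  by_cases hx12 : x1 = x2
  · subst hx12
    by_cases hsing : H = {x1}
    · refine ⟨1, fun _ => x1, le_refl 1, by omega, ?_, ?_, ?_, ?_, hadj1, hadj2⟩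
      · intro s _; exact hx1H
      · intro x hx; exact ⟨0, by omega, by rw [hsing] at hx; exact hx.symm⟩
      · intro s hs s' hs' _; omega
      · omega
    · -- there is another vertex y in H
      have hy : ∃ y ∈ H, y ≠ x1 := by
        by_contra hcon
        push_neg at hcon
        apply hsing
        apply Set.eq_singleton_iff_unique_mem.mpr
        exact ⟨hx1H, fun y hy => hcon y hy⟩
      obtain ⟨y, hyH, hyx⟩ := hy
      have hHpair : H = {x1, y} := by
        refine (Set.eq_of_subset_of_ncard_le ?_ ?_ hHfin).symm
        · intro z hz
          rcases hz with hz | hz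
          · rw [hz]; exact hx1H
          · rw [hz]; exact hyH
        · rw [Set.ncard_pair (fun h => hyx h.symm)]
          exact hHcard
      by_cases hy1 : G.Adj y (c (a j₁))
      · refine ⟨2, fun s => if s = 0 then y else x1, by omega, le_refl 2, ?_, ?_, ?_, ?_, ?_, ?_⟩
        · intro s _
          by_cases h0 : s = 0 <;> simp [h0, hyH, hx1H]
        · intro x hx
          rw [hHpair] at hx
          simp only [Set.mem_insert_iff, Set.mem_singleton_iff] at hx
          rcases hx with hx | hx
          · exact ⟨1, by omega, by simp [hx]⟩
          · exact ⟨0, by omega, by simp [hx]⟩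
        · intro s hs s' hs' hss
          by_cases h0 : s = 0 <;> by_cases h0' : s' = 0
          · omega
          · exact absurd (by simpa [h0, h0'] using hss) hyx
          · exact absurd (by simpa [h0, h0'] using hss) (fun h : x1 = y => hyx h.symm)
          · omega
        · intro _
          simpa using hHclique y hyH x1 hx1H hyx
        · simpa using hy1
        · simpa using hadj2
      · by_cases hy2 : G.Adj y (c (a j₂))
        · refine ⟨2, fun s => if s = 0 then x1 else y, by omega, le_refl 2, ?_, ?_, ?_, ?_, ?_, ?_⟩
          · intro s _
            by_cases h0 : s = 0 <;> simp [h0, hyH, hx1H]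
          · intro x hx
            rw [hHpair] at hx
            simp only [Set.mem_insert_iff, Set.mem_singleton_iff] at hx
            rcases hx with hx | hx
            · exact ⟨0, by omega, by simp [hx]⟩
            · exact ⟨1, by omega, by simp [hx]⟩
          · intro s hs s' hs' hss
            by_cases h0 : s = 0 <;> by_cases h0' : s' = 0
            · omega
            · exact absurd (by simpa [h0, h0'] using hss) (fun h : x1 = y => hyx h.symm)
            · exact absurd (by simpa [h0, h0'] using hss) hyx
            · omega
          · intro _
            simpa using hHclique x1 hx1H y hyH (fun h => hyx h.symm)
          · simpa using hadj1
          · simpa using hy2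
        · -- y has too few neighbours : contradiction
          exfalso
          have hdeg := degree_lower_bound G hk hconn hbig y
          set U : Finset V := Finset.univ.image (fun l : ZMod k => c (a l)) with hUdef
          have hUcard : U.card = k := by
            rw [hUdef, Finset.card_image_of_injective _ (fun p q hpq => hainj (hcinj hpq)),
              Finset.card_univ, ZMod.card]
          have hj12 : c (a j₁) ≠ c (a j₂) := fun h => hne (hainj (hcinj h))
          set T : Finset V := insert x1 ((U.erase (c (a j₁))).erase (c (a j₂))) with hTdef
          have hsub : G.neighborSet y ⊆ ↑T := by
            intro z hz
            have hadjz : G.Adj y z := hz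
            by_cases hzH : z ∈ H
            · have hzy : z ≠ y := fun h => G.irrefl (h ▸ hadjz)
              have : z = x1 := by
                rw [hHpair] at hzH
                rcases hzH with h | h
                · exact h
                · exact absurd h hzy
              rw [hTdef, this]
              exact Finset.mem_insert_self _ _
            · have hzc : z ∈ Set.range c := by
                rw [hH] at hzH
                simpa using hzH
              have : z ∈ Set.range (fun i : ZMod k => c (a i)) := by
                rw [hU]
                exact ⟨hzc, y, hyH, hadjz⟩
              obtain ⟨l, hl⟩ := this
              have hz1 : z ≠ c (a j₁) := fun h => hy1 (h ▸ hadjz)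
              have hz2 : z ≠ c (a j₂) := fun h => hy2 (h ▸ hadjz)
              rw [hTdef]
              apply Finset.mem_insert_of_mem
              apply Finset.mem_erase_of_ne_of_mem hz2
              apply Finset.mem_erase_of_ne_of_mem hz1
              rw [hUdef]
              exact Finset.mem_image.mpr ⟨l, Finset.mem_univ _, hl⟩
          have hncard : (G.neighborSet y).ncard ≤ T.card := by
            have := Set.ncard_le_ncard hsub (Finset.finite_toSet T)
            rwa [Set.ncard_coe_finset] at this
          have hTcard : T.card ≤ k - 1 := by
            have h2 : c (a j₂) ∈ U.erase (c (a j₁)) := by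
              apply Finset.mem_erase_of_ne_of_mem (fun h => hne (hainj (hcinj h)).symm)
              rw [hUdef]
              exact Finset.mem_image.mpr ⟨j₂, Finset.mem_univ _, rfl⟩
            have h1 : c (a j₁) ∈ U := by
              rw [hUdef]
              exact Finset.mem_image.mpr ⟨j₁, Finset.mem_univ _, rfl⟩
            have e1 : (U.erase (c (a j₁))).card = k - 1 := by
              rw [Finset.card_erase_of_mem h1, hUcard]
            have e2 : ((U.erase (c (a j₁))).erase (c (a j₂))).card = k - 2 := by
              rw [Finset.card_erase_of_mem h2, e1]
              omega
            calc T.card ≤ ((U.erase (c (a j₁))).erase (c (a j₂))).card + 1 :=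
                  Finset.card_insert_le _ _
              _ ≤ k - 1 := by omega
          omega
  · -- x1 ≠ x2 : H = {x1, x2}
    have hHpair : H = {x1, x2} := by
      refine (Set.eq_of_subset_of_ncard_le ?_ ?_ hHfin).symm
      · intro z hz
        rcases hz with hz | hz
        · rw [hz]; exact hx1H
        · rw [hz]; exact hx2H
      · rw [Set.ncard_pair hx12]
        exact hHcard
    refine ⟨2, fun s => if s = 0 then x1 else x2, by omega, le_refl 2, ?_, ?_, ?_, ?_, ?_, ?_⟩
    · intro s _
      by_cases h0 : s = 0 <;> simp [h0, hx1H, hx2H]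
    · intro x hx
      rw [hHpair] at hx
      simp only [Set.mem_insert_iff, Set.mem_singleton_iff] at hx
      rcases hx with hx | hx
      · exact ⟨0, by omega, by simp [hx]⟩
      · exact ⟨1, by omega, by simp [hx]⟩
    · intro s hs s' hs' hss
      by_cases h0 : s = 0 <;> by_cases h0' : s' = 0
      · omega
      · exact absurd (by simpa [h0, h0'] using hss) hx12
      · exact absurd (by simpa [h0, h0'] using hss) (fun h : x2 = x1 => hx12 h.symm)
      · omega
    · intro _
      simpa using hHclique x1 hx1H x2 hx2H hx12
    · simpa using hadj1
    · simpa using hadj2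

end HPath

section Mixed
variable [Fintype V]

/-- chord from `β⁺` to `γ⁻` plus an `H`-path from `β` to `γ` : two disjoint covering
cycles, hence a 2-factor with two components. -/
lemma mixed_chord_2factor (G : SimpleGraph V) (m : ℕ) (hm : 3 ≤ m)
    (c : ZMod m → V) (hcinj : Function.Injective c)
    (hcadj : ∀ i : ZMod m, G.Adj (c i) (c (i + 1)))
    (β γ : ZMod m) (hd4 : 4 ≤ (γ - β).val)
    (chord : G.Adj (c (β + 1)) (c (γ - 1)))
    (e : ℕ) (w : ℕ → V) (he1 : 1 ≤ e) (he2 : e ≤ 2)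
    (hwH : ∀ s < e, w s ∉ Set.range c)
    (hwinj : ∀ s < e, ∀ s' < e, w s = w s' → s = s')
    (hwadj : e = 2 → G.Adj (w 0) (w 1))
    (hwβ : G.Adj (w 0) (c β)) (hwγ : G.Adj (w (e - 1)) (c γ))
    (hcov : ∀ x : V, x ∈ Set.range c ∨ ∃ s < e, w s = x) :
    HasTwoFactorAtMostTwo G := by
  haveI : NeZero m := ⟨by omega⟩
  set d : ℕ := (γ - β).val with hddef
  have hdm : d < m := ZMod.val_lt _
  have hcd : ((d : ℕ) : ZMod m) = γ - β := cast_val_eq _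
  have crut : ∀ X Y : ZMod m, Y = X + 1 → G.Adj (c X) (c Y) := fun X Y h => h ▸ hcadj X
  apply hasTwoFactor_of_two_cycles G (d - 1) (m - d + 1 + e) (by omega) (by omega)
    (fun s => c (β + 1 + (s : ℕ))) (fun s => if s ≤ m - d then c (γ + (s : ℕ))
      else w (s - (m - d + 1)))
  · -- adj₁
    intro s hs
    exact crut _ _ (by push_cast; ring)
  · -- close₁
    show G.Adj (c (β + 1 + ((d - 1 - 1 : ℕ) : ZMod m))) (c (β + 1 + ((0 : ℕ) : ZMod m)))
    have h1 : β + 1 + ((d - 1 - 1 : ℕ) : ZMod m) = γ - 1 := by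
      have : (d : ℕ) - 1 - 1 = d - 2 := by omega
      rw [this, Nat.cast_sub (by omega : 2 ≤ d), hcd]
      push_cast
      ring
    have h2 : β + 1 + ((0 : ℕ) : ZMod m) = β + 1 := by push_cast; ring
    rw [h1, h2]
    exact chord.symm
  · -- inj₁
    intro s hs s' hs' h
    have := add_left_cancel (hcinj h)
    exact natCast_inj_lt (by omega) (by omega) this
  · -- adj₂
    intro s hs
    by_cases h1 : s + 1 ≤ m - d
    · rw [if_pos (by omega), if_pos h1]
      exact crut _ _ (by push_cast; ring)
    · by_cases h2 : s ≤ m - d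
      · have hsd : s = m - d := by omega
        rw [if_pos h2, if_neg h1]
        have hidx : s + 1 - (m - d + 1) = 0 := by omega
        rw [hidx]
        have hval : γ + ((s : ℕ) : ZMod m) = β := by
          rw [hsd, Nat.cast_sub (by omega : d ≤ m), hcd, ZMod.natCast_self]
          ring
        rw [hval]
        exact hwβ.symm
      · rw [if_neg h2, if_neg (by omega)]
        have he2' : e = 2 := by omega
        have hi0 : s - (m - d + 1) = 0 := by omega
        have hi1 : s + 1 - (m - d + 1) = 1 := by omega
        rw [hi0, hi1]
        exact hwadj he2'
  · -- close₂
    have hc1 : ¬ (m - d + 1 + e - 1 ≤ m - d) := by omega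
    rw [if_neg hc1, if_pos (by omega)]
    have hi : m - d + 1 + e - 1 - (m - d + 1) = e - 1 := by omega
    rw [hi]
    have hval : γ + ((0 : ℕ) : ZMod m) = γ := by push_cast; ring
    rw [hval]
    exact hwγ
  · -- inj₂
    intro s hs s' hs' h
    by_cases c1 : s ≤ m - d <;> by_cases c2 : s' ≤ m - d
    · rw [if_pos c1, if_pos c2] at h
      have := add_left_cancel (hcinj h)
      exact natCast_inj_lt (by omega) (by omega) this
    · rw [if_pos c1, if_neg c2] at h
      exact absurd ⟨_, h⟩ (hwH (s' - (m - d + 1)) (by omega))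
    · rw [if_neg c1, if_pos c2] at h
      exact absurd ⟨_, h.symm⟩ (hwH (s - (m - d + 1)) (by omega))
    · rw [if_neg c1, if_neg c2] at h
      have := hwinj _ (by omega) _ (by omega) h
      omega
  · -- disjoint
    intro s hs s' hs' h
    by_cases c2 : s' ≤ m - d
    · rw [if_pos c2] at h
      have h' := hcinj h
      have key : ((1 + s : ℕ) : ZMod m) = ((d + s' : ℕ) : ZMod m) := by
        push_cast
        rw [hcd]
        linear_combination h'
      rcases lt_or_eq_of_le (by omega : d + s' ≤ m) with hlt | heq
      · have := natCast_inj_lt (m := m) (by omega) hlt key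
        omega
      · rw [heq, ZMod.natCast_self] at key
        have hval0 : ((1 + s : ℕ) : ZMod m).val = (0 : ZMod m).val := congrArg ZMod.val key
        rw [ZMod.val_cast_of_lt (by omega), ZMod.val_zero] at hval0
        omega
    · rw [if_neg c2] at h
      exact absurd ⟨_, h⟩ (hwH (s' - (m - d + 1)) (by omega))
  · -- cover
    intro x
    rcases hcov x with ⟨r, rfl⟩ | ⟨s, hse, rfl⟩
    · set o : ℕ := (r - β).val with hodef
      have hom : o < m := ZMod.val_lt _
      have hro : β + ((o : ℕ) : ZMod m) = r := by
        rw [cast_val_eq]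
        ring
      by_cases ho1 : 1 ≤ o ∧ o ≤ d - 1
      · left
        refine ⟨o - 1, by omega, ?_⟩
        congr 1
        rw [Nat.cast_sub (by omega : 1 ≤ o)]
        rw [← hro]
        push_cast
        ring
      · right
        by_cases ho0 : o = 0
        · refine ⟨m - d, by omega, ?_⟩
          rw [if_pos (le_refl _)]
          congr 1
          rw [Nat.cast_sub (by omega : d ≤ m), hcd, ZMod.natCast_self, ← hro, ho0]
          push_cast
          ring
        · have hod : d ≤ o := by omega
          refine ⟨o - d, by omega, ?_⟩
          rw [if_pos (by omega)]
          congr 1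
          rw [Nat.cast_sub hod, hcd, ← hro]
          push_cast
          ring
    · right
      refine ⟨m - d + 1 + s, by omega, ?_⟩
      rw [if_neg (by omega)]
      congr 1
      omega

end Mixed

section Chords
variable [Fintype V] (G : SimpleGraph V) (m : ℕ) (hm : 3 ≤ m)
  (c : ZMod m → V) (hcinj : Function.Injective c)
  (hcadj : ∀ i : ZMod m, G.Adj (c i) (c (i + 1)))
  (e : ℕ) (w : ℕ → V) (he1 : 1 ≤ e) (he2 : e ≤ 2)
  (hwH : ∀ s < e, w s ∉ Set.range c)
  (hwinj : ∀ s < e, ∀ s' < e, w s = w s' → s = s')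
  (hwadj : e = 2 → G.Adj (w 0) (w 1))
  (hcov : ∀ x : V, x ∈ Set.range c ∨ ∃ s < e, w s = x)

include hm hcinj hcadj he1 he2 hwH hwinj hwadj hcov in
/-- A chord `p⁻ q⁻` plus an `H`-path from `q` to `p` gives one long covering cycle. -/
lemma predpred_chord_2factor (p q : ZMod m) (hpq : p ≠ q)
    (chord : G.Adj (c (p - 1)) (c (q - 1)))
    (hwq : G.Adj (w 0) (c q)) (hwp : G.Adj (w (e - 1)) (c p)) :
    HasTwoFactorAtMostTwo G := by
  haveI : NeZero m := ⟨by omega⟩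
  set dq : ℕ := (q - p).val with hdqdef
  have hdm : dq < m := ZMod.val_lt _
  have hd1 : 1 ≤ dq := by
    rcases Nat.eq_zero_or_pos dq with h | h
    · exfalso
      have h0 : q - p = 0 := (ZMod.val_eq_zero _).mp h
      have : q = p := by linear_combination h0
      exact hpq this.symm
    · omega
  have hcd : ((dq : ℕ) : ZMod m) = q - p := cast_val_eq _
  have crut : ∀ X Y : ZMod m, Y = X + 1 → G.Adj (c X) (c Y) := fun X Y h => h ▸ hcadj X
  have crut' : ∀ X Y : ZMod m, X = Y + 1 → G.Adj (c X) (c Y) := fun X Y h => h ▸ (hcadj Y).symm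
  apply hasTwoFactor_of_one_cycle G (m + e) (by omega)
    (fun s => if s < dq then c (p + (s : ℕ)) else if s < m then c (p - 1 - ((s - dq : ℕ) : ZMod m))
      else w (s - m))
  · -- adjacency
    intro s hs
    by_cases h1 : s + 1 < dq
    · rw [if_pos (by omega), if_pos h1]
      exact crut _ _ (by push_cast; ring)
    · by_cases h2 : s + 1 = dq
      · rw [if_pos (by omega), if_neg (by omega), if_pos (by omega)]
        have e1 : p + ((s : ℕ) : ZMod m) = q - 1 := by
          have : s = dq - 1 := by omega
          rw [this, Nat.cast_sub (by omega : 1 ≤ dq), hcd]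
          ring
        have e2 : p - 1 - ((s + 1 - dq : ℕ) : ZMod m) = p - 1 := by
          have : s + 1 - dq = 0 := by omega
          rw [this]
          push_cast
          ring
        rw [e1, e2]
        exact chord.symm
      · by_cases h3 : s + 1 < m
        · rw [if_neg (by omega), if_pos (by omega), if_neg (by omega), if_pos h3]
          apply crut'
          have : s - dq + 1 = s + 1 - dq := by omega
          rw [← this]
          push_cast
          ring
        · by_cases h4 : s + 1 = m
          · rw [if_neg (by omega), if_pos (by omega), if_neg (by omega), if_neg (by omega)]
            have e1 : p - 1 - ((s - dq : ℕ) : ZMod m) = q := by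
              have : s - dq = m - 1 - dq := by omega
              rw [this, Nat.cast_sub (by omega : dq ≤ m - 1), Nat.cast_sub (by omega : 1 ≤ m),
                ZMod.natCast_self, hcd]
              ring
            have e2 : s + 1 - m = 0 := by omega
            rw [e1, e2]
            exact hwq.symm
          · rw [if_neg (by omega), if_neg (by omega), if_neg (by omega), if_neg (by omega)]
            have he2' : e = 2 := by omega
            have i0 : s - m = 0 := by omega
            have i1 : s + 1 - m = 1 := by omega
            rw [i0, i1]
            exact hwadj he2'
  · -- close
    rw [if_neg (by omega), if_neg (by omega), if_pos (by omega : (0:ℕ) < dq)]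
    have i0 : m + e - 1 - m = e - 1 := by omega
    have e1 : p + ((0 : ℕ) : ZMod m) = p := by push_cast; ring
    rw [i0, e1]
    exact hwp
  · -- injectivity
    intro s hs s' hs' h
    have hoff2 : ∀ x : ℕ, dq ≤ x → x < m →
        p - 1 - ((x - dq : ℕ) : ZMod m) = p + ((m - 1 - x + dq : ℕ) : ZMod m) := by
      intro x hx1 hx2
      rw [Nat.cast_sub hx1]
      have : (m - 1 - x + dq : ℕ) = (m - 1 - x) + dq := rfl
      rw [this, Nat.cast_add, Nat.cast_sub (by omega : x ≤ m - 1), Nat.cast_sub (by omega : 1 ≤ m),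
        ZMod.natCast_self]
      ring
    by_cases c1 : s < dq <;> by_cases c1' : s' < dq
    · rw [if_pos c1, if_pos c1'] at h
      exact natCast_inj_lt (by omega) (by omega) (add_left_cancel (hcinj h))
    · by_cases c2' : s' < m
      · rw [if_pos c1, if_neg (by omega), if_pos c2'] at h
        rw [hoff2 s' (by omega) c2'] at h
        have := natCast_inj_lt (m := m) (by omega) (by omega) (add_left_cancel (hcinj h))
        omega
      · rw [if_pos c1, if_neg (by omega), if_neg c2'] at h
        exact absurd ⟨_, h⟩ (hwH (s' - m) (by omega))
    · by_cases c2 : s < m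
      · rw [if_neg (by omega), if_pos c2, if_pos c1'] at h
        rw [hoff2 s (by omega) c2] at h
        have := natCast_inj_lt (m := m) (by omega) (by omega) (add_left_cancel (hcinj h))
        omega
      · rw [if_neg (by omega), if_neg c2, if_pos c1'] at h
        exact absurd ⟨_, h.symm⟩ (hwH (s - m) (by omega))
    · by_cases c2 : s < m <;> by_cases c2' : s' < m
      · rw [if_neg (by omega), if_pos c2, if_neg (by omega), if_pos c2'] at h
        rw [hoff2 s (by omega) c2, hoff2 s' (by omega) c2'] at h
        have := natCast_inj_lt (m := m) (by omega) (by omega) (add_left_cancel (hcinj h))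
        omega
      · rw [if_neg (by omega), if_pos c2, if_neg (by omega), if_neg c2'] at h
        exact absurd ⟨_, h⟩ (hwH (s' - m) (by omega))
      · rw [if_neg (by omega), if_neg c2, if_neg (by omega), if_pos c2'] at h
        exact absurd ⟨_, h.symm⟩ (hwH (s - m) (by omega))
      · rw [if_neg (by omega), if_neg c2, if_neg (by omega), if_neg c2'] at h
        have := hwinj _ (by omega) _ (by omega) h
        omega
  · -- cover
    intro x
    rcases hcov x with ⟨r, rfl⟩ | ⟨j, hj, rfl⟩
    · set o : ℕ := (r - p).val with hodef
      have hom : o < m := ZMod.val_lt _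
      have hro : p + ((o : ℕ) : ZMod m) = r := by rw [cast_val_eq]; ring
      by_cases ho : o < dq
      · refine ⟨o, by omega, ?_⟩
        rw [if_pos ho, hro]
      · refine ⟨m - 1 - o + dq, by omega, ?_⟩
        rw [if_neg (by omega), if_pos (by omega)]
        have : (m - 1 - o + dq) - dq = m - 1 - o := by omega
        rw [this, Nat.cast_sub (by omega : o ≤ m - 1), Nat.cast_sub (by omega : 1 ≤ m),
          ZMod.natCast_self, ← hro]
        congr 1
        ring
    · exact ⟨m + j, by omega, by rw [if_neg (by omega), if_neg (by omega)]; congr 1; omega⟩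

include hm hcinj hcadj he1 he2 hwH hwinj hwadj hcov in
/-- A chord `p⁺ q⁺` plus an `H`-path from `q` to `p` gives one long covering cycle. -/
lemma succsucc_chord_2factor (p q : ZMod m) (hpq : p ≠ q)
    (chord : G.Adj (c (p + 1)) (c (q + 1)))
    (hwq : G.Adj (w 0) (c q)) (hwp : G.Adj (w (e - 1)) (c p)) :
    HasTwoFactorAtMostTwo G := by
  haveI : NeZero m := ⟨by omega⟩
  set dp : ℕ := (p - q).val with hdpdef
  have hdm : dp < m := ZMod.val_lt _
  have hd1 : 1 ≤ dp := by
    rcases Nat.eq_zero_or_pos dp with h | h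
    · exfalso
      have h0 : p - q = 0 := (ZMod.val_eq_zero _).mp h
      have : p = q := by linear_combination h0
      exact hpq this
    · omega
  have hcd : ((dp : ℕ) : ZMod m) = p - q := cast_val_eq _
  have crut : ∀ X Y : ZMod m, Y = X + 1 → G.Adj (c X) (c Y) := fun X Y h => h ▸ hcadj X
  have crut' : ∀ X Y : ZMod m, X = Y + 1 → G.Adj (c X) (c Y) := fun X Y h => h ▸ (hcadj Y).symm
  apply hasTwoFactor_of_one_cycle G (m + e) (by omega)
    (fun s => if s < dp then c (p - (s : ℕ)) else if s < m then c (p + 1 + ((s - dp : ℕ) : ZMod m))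
      else w (s - m))
  · -- adjacency
    intro s hs
    by_cases h1 : s + 1 < dp
    · rw [if_pos (by omega), if_pos h1]
      exact crut' _ _ (by push_cast; ring)
    · by_cases h2 : s + 1 = dp
      · rw [if_pos (by omega), if_neg (by omega), if_pos (by omega)]
        have e1 : p - ((s : ℕ) : ZMod m) = q + 1 := by
          have : s = dp - 1 := by omega
          rw [this, Nat.cast_sub (by omega : 1 ≤ dp), hcd]
          ring
        have e2 : p + 1 + ((s + 1 - dp : ℕ) : ZMod m) = p + 1 := by
          have : s + 1 - dp = 0 := by omega
          rw [this]
          push_cast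
          ring
        rw [e1, e2]
        exact chord.symm
      · by_cases h3 : s + 1 < m
        · rw [if_neg (by omega), if_pos (by omega), if_neg (by omega), if_pos h3]
          apply crut
          have : s - dp + 1 = s + 1 - dp := by omega
          rw [← this]
          push_cast
          ring
        · by_cases h4 : s + 1 = m
          · rw [if_neg (by omega), if_pos (by omega), if_neg (by omega), if_neg (by omega)]
            have e1 : p + 1 + ((s - dp : ℕ) : ZMod m) = q := by
              have : s - dp = m - 1 - dp := by omega
              rw [this, Nat.cast_sub (by omega : dp ≤ m - 1), Nat.cast_sub (by omega : 1 ≤ m),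
                ZMod.natCast_self, hcd]
              ring
            have e2 : s + 1 - m = 0 := by omega
            rw [e1, e2]
            exact hwq.symm
          · rw [if_neg (by omega), if_neg (by omega), if_neg (by omega), if_neg (by omega)]
            have he2' : e = 2 := by omega
            have i0 : s - m = 0 := by omega
            have i1 : s + 1 - m = 1 := by omega
            rw [i0, i1]
            exact hwadj he2'
  · -- close
    rw [if_neg (by omega), if_neg (by omega), if_pos (by omega : (0:ℕ) < dp)]
    have i0 : m + e - 1 - m = e - 1 := by omega
    have e1 : p - ((0 : ℕ) : ZMod m) = p := by push_cast; ring
    rw [i0, e1]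
    exact hwp
  · -- injectivity
    intro s hs s' hs' h
    have hoff2 : ∀ x : ℕ, dp ≤ x → x < m →
        p + 1 + ((x - dp : ℕ) : ZMod m) = p - ((m - 1 - x + dp : ℕ) : ZMod m) := by
      intro x hx1 hx2
      rw [Nat.cast_sub hx1]
      have : (m - 1 - x + dp : ℕ) = (m - 1 - x) + dp := rfl
      rw [this, Nat.cast_add, Nat.cast_sub (by omega : x ≤ m - 1), Nat.cast_sub (by omega : 1 ≤ m),
        ZMod.natCast_self]
      ring
    have csub : ∀ A B : ℕ, A < m → B < m → c (p - (A : ZMod m)) = c (p - (B : ZMod m)) → A = B := by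
      intro A B hA hB hAB
      have := hcinj hAB
      have : (A : ZMod m) = (B : ZMod m) := by linear_combination -this
      exact natCast_inj_lt hA hB this
    by_cases c1 : s < dp <;> by_cases c1' : s' < dp
    · rw [if_pos c1, if_pos c1'] at h
      exact csub _ _ (by omega) (by omega) h
    · by_cases c2' : s' < m
      · rw [if_pos c1, if_neg (by omega), if_pos c2'] at h
        rw [hoff2 s' (by omega) c2'] at h
        have := csub _ _ (by omega) (by omega) h
        omega
      · rw [if_pos c1, if_neg (by omega), if_neg c2'] at h
        exact absurd ⟨_, h⟩ (hwH (s' - m) (by omega))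
    · by_cases c2 : s < m
      · rw [if_neg (by omega), if_pos c2, if_pos c1'] at h
        rw [hoff2 s (by omega) c2] at h
        have := csub _ _ (by omega) (by omega) h
        omega
      · rw [if_neg (by omega), if_neg c2, if_pos c1'] at h
        exact absurd ⟨_, h.symm⟩ (hwH (s - m) (by omega))
    · by_cases c2 : s < m <;> by_cases c2' : s' < m
      · rw [if_neg (by omega), if_pos c2, if_neg (by omega), if_pos c2'] at h
        rw [hoff2 s (by omega) c2, hoff2 s' (by omega) c2'] at h
        have := csub _ _ (by omega) (by omega) h
        omega
      · rw [if_neg (by omega), if_pos c2, if_neg (by omega), if_neg c2'] at h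
        exact absurd ⟨_, h⟩ (hwH (s' - m) (by omega))
      · rw [if_neg (by omega), if_neg c2, if_neg (by omega), if_pos c2'] at h
        exact absurd ⟨_, h.symm⟩ (hwH (s - m) (by omega))
      · rw [if_neg (by omega), if_neg c2, if_neg (by omega), if_neg c2'] at h
        have := hwinj _ (by omega) _ (by omega) h
        omega
  · -- cover
    intro x
    rcases hcov x with ⟨r, rfl⟩ | ⟨j, hj, rfl⟩
    · set o : ℕ := (p - r).val with hodef
      have hom : o < m := ZMod.val_lt _
      have hro : p - ((o : ℕ) : ZMod m) = r := by rw [cast_val_eq]; ring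
      by_cases ho : o < dp
      · refine ⟨o, by omega, ?_⟩
        rw [if_pos ho, hro]
      · refine ⟨m - 1 - o + dp, by omega, ?_⟩
        rw [if_neg (by omega), if_pos (by omega)]
        have : (m - 1 - o + dp) - dp = m - 1 - o := by omega
        rw [this, Nat.cast_sub (by omega : o ≤ m - 1), Nat.cast_sub (by omega : 1 ≤ m),
          ZMod.natCast_self, ← hro]
        congr 1
        ring
    · exact ⟨m + j, by omega, by rw [if_neg (by omega), if_neg (by omega)]; congr 1; omega⟩

end Chords


theorem statement10 [Fintype V] (G : SimpleGraph V) (k m : ℕ) (hk : 2 ≤ k) (hm : 3 ≤ m)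
    (horder : 3 * k + 3 ≤ Fintype.card V)
    (hconn : vertexConnectivity G = k)
    (hindep : _root_.indepNum G = k + 1)
    (hno2f : ¬ HasTwoFactorAtMostTwo G)
    -- `C` is a longest cycle of `G`, given with a fixed orientation as an injective
    -- cyclic enumeration `c` of its vertices, consecutive vertices being adjacent
    (c : ZMod m → V) (hcinj : Function.Injective c)
    (hcadj : ∀ i : ZMod m, G.Adj (c i) (c (i + 1)))
    (hlongest : ∀ (v : V) (w : G.Walk v v), w.IsCycle → w.length ≤ m)
    -- `H` is the unique connected component of `G - V(C)`: it is all of `V \\ V(C)`,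
    -- is a complete graph, and has at most two vertices
    (H : Set V) (hH : H = (Set.range c)ᶜ)
    (hHne : H.Nonempty) (hHcard : H.ncard ≤ 2)
    (hHclique : ∀ x ∈ H, ∀ y ∈ H, x ≠ y → G.Adj x y)
    -- `u i = c (a i)` are the `k` neighbours of `V(H)` on `C`, labelled in cyclic order
    (a : ZMod k → ZMod m) (hainj : Function.Injective a)
    (hU : Set.range (fun i : ZMod k => c (a i)) =
      {v : V | v ∈ Set.range c ∧ ∃ x ∈ H, G.Adj x v})
    (hord : ∀ i j : ZMod k, i.val < j.val → (a i).val < (a j).val)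
    -- `t i` is the number of vertices of `C` strictly between `u i` and `u (i+1)`
    (t : ZMod k → ℕ) (ht : ∀ i : ZMod k, t i = (a (i + 1) - a i).val - 1)
    (ht1 : ∀ i : ZMod k, 1 ≤ t i) :
    ∀ i : ZMod k, 3 ≤ t i →
      G.Adj (c (a i - 1)) (c (a i + 1)) ∧ G.Adj (c (a (i + 1) - 1)) (c (a (i + 1) + 1)) := by
  intro i hti
  classical
  haveI : NeZero m := ⟨by omega⟩
  haveI : NeZero k := ⟨by omega⟩
  obtain ⟨x₀, hx₀⟩ := hHne
  have hHc : ∀ x ∈ H, x ∉ Set.range c := by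
    intro x hx
    rw [hH] at hx
    exact hx
  have hnox : ∀ x ∈ H, ∀ r : ZMod m, (∀ l : ZMod k, a l ≠ r) → ¬ G.Adj x (c r) := by
    intro x hx r hr hadj
    have hcr : c r ∈ {v : V | v ∈ Set.range c ∧ ∃ x ∈ H, G.Adj x v} := ⟨⟨r, rfl⟩, x, hx, hadj⟩
    rw [← hU] at hcr
    obtain ⟨l, hl⟩ := hcr
    exact hr l (hcinj hl)
  have noA : ∀ j l : ZMod k, a l ≠ a j + 1 := no_succ_val hk hm a hainj hord t ht ht1
  have twoD : ∀ j l : ZMod k, a l = a j + 2 → l = j + 1 ∧ t j = 1 :=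
    two_step_val hk hm a hainj hord t ht ht1
  have gap2 := gap_val_ge_two hk hm a hainj hord t ht ht1
  have hE := gap_succ_min hk a hainj hord
  have hE' := gap_pred_min hk a hainj hord
  have hti4 : 4 ≤ (a (i + 1) - a i).val := by
    have h1 := ht i
    have h2 := gap2 i
    omega
  have hpath : ∀ j₁ j₂ : ZMod k, j₁ ≠ j₂ → ∃ (e : ℕ) (w : ℕ → V), 1 ≤ e ∧ e ≤ 2 ∧
      (∀ s < e, w s ∉ Set.range c) ∧
      (∀ s < e, ∀ s' < e, w s = w s' → s = s') ∧ (e = 2 → G.Adj (w 0) (w 1)) ∧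
      G.Adj (w 0) (c (a j₁)) ∧ G.Adj (w (e - 1)) (c (a j₂)) ∧
      (∀ x : V, x ∈ Set.range c ∨ ∃ s < e, w s = x) := by
    intro j₁ j₂ hne
    obtain ⟨e, w, he1, he2, hwmem, hwcov, hwinj, hwadj, hw1, hw2⟩ :=
      hpath_exists G k m hk hm hconn horder c hcinj H hH hHcard hHclique a hainj hU j₁ j₂ hne
    refine ⟨e, w, he1, he2, fun s hs => hHc _ (hwmem s hs), hwinj, hwadj, hw1, hw2, ?_⟩
    intro x
    by_cases hxc : x ∈ Set.range c
    · exact Or.inl hxc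
    · exact Or.inr (hwcov x (by rw [hH]; exact hxc))
  have refute_ss : ∀ j l : ZMod k, j ≠ l → ¬ G.Adj (c (a j + 1)) (c (a l + 1)) := by
    intro j l hne hadj
    obtain ⟨e, w, he1, he2, hwH, hwinj, hwadj, hw1, hw2, hcov⟩ := hpath l j (Ne.symm hne)
    exact hno2f (succsucc_chord_2factor G m hm c hcinj hcadj e w he1 he2 hwH hwinj hwadj hcov
      (a j) (a l) (fun h => hne (hainj h)) hadj hw1 hw2)
  have refute_pp : ∀ j l : ZMod k, j ≠ l → ¬ G.Adj (c (a j - 1)) (c (a l - 1)) := by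
    intro j l hne hadj
    obtain ⟨e, w, he1, he2, hwH, hwinj, hwadj, hw1, hw2, hcov⟩ := hpath l j (Ne.symm hne)
    exact hno2f (predpred_chord_2factor G m hm c hcinj hcadj e w he1 he2 hwH hwinj hwadj hcov
      (a j) (a l) (fun h => hne (hainj h)) hadj hw1 hw2)
  have refute_mx : ∀ i' j : ZMod k, j ≠ i' → 4 ≤ (a j - a i').val →
      ¬ G.Adj (c (a i' + 1)) (c (a j - 1)) := by
    intro i' j hne hd4 hadj
    obtain ⟨e, w, he1, he2, hwH, hwinj, hwadj, hw1, hw2, hcov⟩ := hpath i' j (Ne.symm hne)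
    exact hno2f (mixed_chord_2factor G m hm c hcinj hcadj (a i') (a j) hd4 hadj e w he1 he2
      hwH hwinj hwadj hw1 hw2 hcov)
  constructor
  · -- u_i⁻ u_i⁺ is an edge
    set X : Finset V := (Finset.univ.image (fun j : ZMod k => c (a j - 1))) ∪ {x₀, c (a i + 1)}
      with hX
    have himgcard : (Finset.univ.image (fun j : ZMod k => c (a j - 1))).card = k := by
      rw [Finset.card_image_of_injective _ (fun p q h => hainj (by
        have h2 := hcinj h
        linear_combination h2)), Finset.card_univ, ZMod.card]
    have hx₀img : x₀ ∉ Finset.univ.image (fun j : ZMod k => c (a j - 1)) := by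
      intro hmem
      obtain ⟨j, _, hj⟩ := Finset.mem_image.mp hmem
      exact hHc x₀ hx₀ ⟨_, hj⟩
    have hzimg : c (a i + 1) ∉ Finset.univ.image (fun j : ZMod k => c (a j - 1)) := by
      intro hmem
      obtain ⟨j, _, hj⟩ := Finset.mem_image.mp hmem
      have h1 : a i + 1 = a j - 1 := (hcinj hj).symm
      have h2 : a j = a i + 2 := by linear_combination -h1
      obtain ⟨_, htj⟩ := twoD i j h2
      omega
    have hzx : c (a i + 1) ≠ x₀ := fun h => hHc x₀ hx₀ ⟨_, h⟩
    have hcard : X.card = k + 2 := by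
      rw [hX, Finset.card_union_of_disjoint, himgcard]
      · rw [Finset.card_insert_of_notMem (by
          simp only [Finset.mem_singleton]
          exact fun h => hzx h.symm), Finset.card_singleton]
      · rw [Finset.disjoint_right]
        intro z hz
        simp only [Finset.mem_insert, Finset.mem_singleton] at hz
        rcases hz with rfl | rfl
        · exact hx₀img
        · exact hzimg
    have hedge : ¬ (∀ x ∈ X, ∀ y ∈ X, x ≠ y → ¬ G.Adj x y) := by
      intro hind
      have := indep_card_le G hindep X hind
      omega
    push_neg at hedge
    obtain ⟨x, hxX, y, hyX, hxy, hadj⟩ := hedge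
    have hmem : ∀ z ∈ X, (∃ j : ZMod k, z = c (a j - 1)) ∨ z = x₀ ∨ z = c (a i + 1) := by
      intro z hz
      rw [hX] at hz
      rcases Finset.mem_union.mp hz with h | h
      · obtain ⟨j, _, hj⟩ := Finset.mem_image.mp h
        exact Or.inl ⟨j, hj.symm⟩
      · rcases Finset.mem_insert.mp h with h' | h'
        · exact Or.inr (Or.inl h')
        · exact Or.inr (Or.inr (Finset.mem_singleton.mp h'))
    rcases hmem x hxX with ⟨j, hxj⟩ | hx0 | hxz <;>
      rcases hmem y hyX with ⟨l, hyl⟩ | hy0 | hyz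
    · rw [hxj, hyl] at hadj
      exact absurd hadj (refute_pp j l (fun h => hxy (by rw [hxj, hyl, h])))
    · rw [hxj, hy0] at hadj
      exact absurd hadj.symm (hnox x₀ hx₀ (a j - 1)
        (fun l heq => noA l j (by linear_combination -heq)))
    · rw [hxj, hyz] at hadj
      by_cases hji : j = i
      · rw [hji] at hadj
        exact hadj
      · have hd4 : 4 ≤ (a j - a i).val := by
          have := hE i j hji
          omega
        exact absurd hadj.symm (refute_mx i j hji hd4)
    · rw [hx0, hyl] at hadj
      exact absurd hadj (hnox x₀ hx₀ (a l - 1)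
        (fun l' heq => noA l' l (by linear_combination -heq)))
    · exact absurd (hx0.trans hy0.symm) hxy
    · rw [hx0, hyz] at hadj
      exact absurd hadj (hnox x₀ hx₀ (a i + 1) (fun l heq => noA i l heq))
    · rw [hxz, hyl] at hadj
      by_cases hli : l = i
      · rw [hli] at hadj
        exact hadj.symm
      · have hd4 : 4 ≤ (a l - a i).val := by
          have := hE i l hli
          omega
        exact absurd hadj (refute_mx i l hli hd4)
    · rw [hxz, hy0] at hadj
      exact absurd hadj.symm (hnox x₀ hx₀ (a i + 1) (fun l heq => noA i l heq))
    · exact absurd (hxz.trans hyz.symm) hxy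
  · -- u_{i+1}⁻ u_{i+1}⁺ is an edge
    set X : Finset V :=
      (Finset.univ.image (fun j : ZMod k => c (a j + 1))) ∪ {x₀, c (a (i + 1) - 1)} with hX
    have himgcard : (Finset.univ.image (fun j : ZMod k => c (a j + 1))).card = k := by
      rw [Finset.card_image_of_injective _ (fun p q h => hainj (by
        have h2 := hcinj h
        linear_combination h2)), Finset.card_univ, ZMod.card]
    have hx₀img : x₀ ∉ Finset.univ.image (fun j : ZMod k => c (a j + 1)) := by
      intro hmem
      obtain ⟨j, _, hj⟩ := Finset.mem_image.mp hmem
      exact hHc x₀ hx₀ ⟨_, hj⟩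
    have hzimg : c (a (i + 1) - 1) ∉ Finset.univ.image (fun j : ZMod k => c (a j + 1)) := by
      intro hmem
      obtain ⟨j, _, hj⟩ := Finset.mem_image.mp hmem
      have h1 : a (i + 1) - 1 = a j + 1 := (hcinj hj).symm
      have h2 : a (i + 1) = a j + 2 := by linear_combination h1
      obtain ⟨hij, htj⟩ := twoD j (i + 1) h2
      have hji : j = i := by
        have : j + 1 = i + 1 := hij.symm
        exact add_right_cancel this
      rw [hji] at htj
      omega
    have hzx : c (a (i + 1) - 1) ≠ x₀ := fun h => hHc x₀ hx₀ ⟨_, h⟩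
    have hcard : X.card = k + 2 := by
      rw [hX, Finset.card_union_of_disjoint, himgcard]
      · rw [Finset.card_insert_of_notMem (by
          simp only [Finset.mem_singleton]
          exact fun h => hzx h.symm), Finset.card_singleton]
      · rw [Finset.disjoint_right]
        intro z hz
        simp only [Finset.mem_insert, Finset.mem_singleton] at hz
        rcases hz with rfl | rfl
        · exact hx₀img
        · exact hzimg
    have hedge : ¬ (∀ x ∈ X, ∀ y ∈ X, x ≠ y → ¬ G.Adj x y) := by
      intro hind
      have := indep_card_le G hindep X hind
      omega
    push_neg at hedge
    obtain ⟨x, hxX, y, hyX, hxy, hadj⟩ := hedge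
    have hmem : ∀ z ∈ X, (∃ j : ZMod k, z = c (a j + 1)) ∨ z = x₀ ∨ z = c (a (i + 1) - 1) := by
      intro z hz
      rw [hX] at hz
      rcases Finset.mem_union.mp hz with h | h
      · obtain ⟨j, _, hj⟩ := Finset.mem_image.mp h
        exact Or.inl ⟨j, hj.symm⟩
      · rcases Finset.mem_insert.mp h with h' | h'
        · exact Or.inr (Or.inl h')
        · exact Or.inr (Or.inr (Finset.mem_singleton.mp h'))
    have hmx : ∀ j : ZMod k, j ≠ i + 1 → ¬ G.Adj (c (a j + 1)) (c (a (i + 1) - 1)) := by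
      intro j hji
      have hd4 : 4 ≤ (a (i + 1) - a j).val := by
        have h1 := hE' (i + 1) j hji
        have h2 : (i + 1) - 1 = i := by ring
        rw [h2] at h1
        omega
      exact refute_mx j (i + 1) (fun h => hji h.symm) hd4
    rcases hmem x hxX with ⟨j, hxj⟩ | hx0 | hxz <;>
      rcases hmem y hyX with ⟨l, hyl⟩ | hy0 | hyz
    · rw [hxj, hyl] at hadj
      exact absurd hadj (refute_ss j l (fun h => hxy (by rw [hxj, hyl, h])))
    · rw [hxj, hy0] at hadj
      exact absurd hadj.symm (hnox x₀ hx₀ (a j + 1) (fun l heq => noA j l heq))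
    · rw [hxj, hyz] at hadj
      by_cases hji : j = i + 1
      · rw [hji] at hadj
        exact hadj.symm
      · exact absurd hadj (hmx j hji)
    · rw [hx0, hyl] at hadj
      exact absurd hadj (hnox x₀ hx₀ (a l + 1) (fun l' heq => noA l l' heq))
    · exact absurd (hx0.trans hy0.symm) hxy
    · rw [hx0, hyz] at hadj
      exact absurd hadj (hnox x₀ hx₀ (a (i + 1) - 1)
        (fun l heq => noA l (i + 1) (by linear_combination -heq)))
    · rw [hxz, hyl] at hadj
      by_cases hli : l = i + 1
      · rw [hli] at hadj
        exact hadj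
      · exact absurd hadj.symm (hmx l hli)
    · rw [hxz, hy0] at hadj
      exact absurd hadj.symm (hnox x₀ hx₀ (a (i + 1) - 1)
        (fun l heq => noA l (i + 1) (by linear_combination -heq)))
    · exact absurd (hxz.trans hyz.symm) hxy
end
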